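/- arXiv:2403.10811 — 6 statements merged into one kernel-verified Lean document; each statement's English description precedes it below -/
import Mathlib

section
/- The Taylor expansion at 0 of the function z ↦ -J(-z) has the form -J(-z) = ∑_{n≥1} M_n z^n where every coefficient M_n is a strictly positive real number (in particular M_1 = 16). -/
open Metric

/-- The modular function `J(z) = 16 z ∏_{n≥1} ((1+z^{2n})/(1+z^{2n-1}))^8`. -/
noncomputable def modularJ (z : ℂ) : ℂ :=
  16 * z * ∏' n : ℕ, ((1 + z ^ (2 * (n + 1))) / (1 + z ^ (2 * (n + 1) - 1))) ^ 8

open Finset PowerSeries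

/-- Formal geometric series `∑_{d ∣ k} X^k`, the inverse of `1 - X^d`. -/
noncomputable def Sgeo (d : ℕ) : PowerSeries ℝ :=
  PowerSeries.mk fun k => if d ∣ k then 1 else 0

/-- The `n`-th factor `((1+X^(2n+2)) / (1-X^(2n+1)))^8` as a formal power series. -/
noncomputable def Gfac (n : ℕ) : PowerSeries ℝ :=
  ((1 + PowerSeries.X ^ (2 * n + 2)) * Sgeo (2 * n + 1)) ^ 8

/-- Partial products. -/
noncomputable def Qprod (N : ℕ) : PowerSeries ℝ := ∏ n ∈ Finset.range N, Gfac n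

/-- The stable coefficients. -/
noncomputable def cseq (k : ℕ) : ℝ := PowerSeries.coeff (R := ℝ) k (Qprod (k + 1))

/-- Nonnegative coefficients predicate. -/
def NNPS (F : PowerSeries ℝ) : Prop := ∀ k, 0 ≤ PowerSeries.coeff (R := ℝ) k F

lemma NNPS.mul {F G : PowerSeries ℝ} (hF : NNPS F) (hG : NNPS G) : NNPS (F * G) := by
  intro k
  rw [PowerSeries.coeff_mul]
  exact Finset.sum_nonneg fun p _ => mul_nonneg (hF p.1) (hG p.2)

lemma NNPS.pow {F : PowerSeries ℝ} (hF : NNPS F) (m : ℕ) (hm : m ≠ 0) : NNPS (F ^ m) := by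
  induction m with
  | zero => simp at hm
  | succ m ih =>
    rcases Nat.eq_zero_or_pos m with h | h
    · subst h; simpa using hF
    · rw [pow_succ]; exact (ih h.ne').mul hF

lemma NNPS_one_add_X_pow (m : ℕ) : NNPS (1 + PowerSeries.X ^ m) := by
  intro k
  rw [map_add, PowerSeries.coeff_one, PowerSeries.coeff_X_pow]
  split_ifs <;> norm_num

lemma NNPS_Sgeo (d : ℕ) : NNPS (Sgeo d) := by
  intro k
  rw [Sgeo, PowerSeries.coeff_mk]
  split_ifs <;> norm_num

lemma NNPS_Gfac (n : ℕ) : NNPS (Gfac n) :=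
  (((NNPS_one_add_X_pow _).mul (NNPS_Sgeo _)).pow 8 (by norm_num))

lemma NNPS_Qprod (N : ℕ) : NNPS (Qprod N) := by
  induction N with
  | zero =>
    intro k
    simp only [Qprod, Finset.range_zero, Finset.prod_empty, PowerSeries.coeff_one]
    split_ifs <;> norm_num
  | succ N ih =>
    have : Qprod (N + 1) = Qprod N * Gfac N := by
      rw [Qprod, Qprod, Finset.prod_range_succ]
    rw [this]
    exact ih.mul (NNPS_Gfac N)

lemma constantCoeff_Sgeo (d : ℕ) : PowerSeries.constantCoeff (R := ℝ) (Sgeo d) = 1 := by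
  rw [← PowerSeries.coeff_zero_eq_constantCoeff, Sgeo, PowerSeries.coeff_mk]
  simp

lemma constantCoeff_Gfac (n : ℕ) : PowerSeries.constantCoeff (R := ℝ) (Gfac n) = 1 := by
  rw [Gfac, map_pow, map_mul, map_add, map_one, map_pow, constantCoeff_Sgeo,
    PowerSeries.constantCoeff_X]
  norm_num

lemma constantCoeff_Qprod (N : ℕ) : PowerSeries.constantCoeff (R := ℝ) (Qprod N) = 1 := by
  rw [Qprod, map_prod]
  simp [constantCoeff_Gfac]

/-- `F` agrees with `1` in coefficients `≤ m`. -/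
def LowOne (m : ℕ) (F : PowerSeries ℝ) : Prop :=
  PowerSeries.constantCoeff (R := ℝ) F = 1 ∧ ∀ j, 0 < j → j ≤ m → PowerSeries.coeff (R := ℝ) j F = 0

lemma LowOne.mul {m : ℕ} {F G : PowerSeries ℝ} (hF : LowOne m F) (hG : LowOne m G) :
    LowOne m (F * G) := by
  refine ⟨by rw [map_mul, hF.1, hG.1, one_mul], fun j hj hjm => ?_⟩
  rw [PowerSeries.coeff_mul]
  refine Finset.sum_eq_zero fun p hp => ?_
  rw [Finset.HasAntidiagonal.mem_antidiagonal] at hp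
  rcases Nat.eq_zero_or_pos p.1 with h1 | h1
  · have h2 : 0 < p.2 := by omega
    rw [hG.2 p.2 h2 (by omega), mul_zero]
  · rw [hF.2 p.1 h1 (by omega), zero_mul]

lemma LowOne.pow {m : ℕ} {F : PowerSeries ℝ} (hF : LowOne m F) (p : ℕ) :
    LowOne m (F ^ p) := by
  induction p with
  | zero =>
    refine ⟨by simp, fun j hj hjm => ?_⟩
    rw [pow_zero, PowerSeries.coeff_one, if_neg hj.ne']
  | succ p ih => rw [pow_succ]; exact ih.mul hF

lemma lowOne_Gfac (n : ℕ) : LowOne (2 * n) (Gfac n) := by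
  refine LowOne.pow ?_ 8
  constructor
  · rw [map_mul, map_add, map_one, map_pow, constantCoeff_Sgeo, PowerSeries.constantCoeff_X]
    norm_num
  · intro j hj hjm
    rw [add_mul, one_mul, map_add, PowerSeries.coeff_mul]
    have h1 : PowerSeries.coeff (R := ℝ) j (Sgeo (2 * n + 1)) = 0 := by
      rw [Sgeo, PowerSeries.coeff_mk,
        if_neg (fun hdvd => by have := Nat.le_of_dvd hj hdvd; omega)]
    rw [h1, zero_add]
    refine Finset.sum_eq_zero fun p hp => ?_
    rw [Finset.HasAntidiagonal.mem_antidiagonal] at hp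
    rw [PowerSeries.coeff_X_pow, if_neg (by omega), zero_mul]

lemma coeff_Qprod_succ (k N : ℕ) (h : k ≤ 2 * N) :
    PowerSeries.coeff (R := ℝ) k (Qprod (N + 1)) = PowerSeries.coeff (R := ℝ) k (Qprod N) := by
  have hq : Qprod (N + 1) = Qprod N * Gfac N := by rw [Qprod, Qprod, Finset.prod_range_succ]
  rw [hq, PowerSeries.coeff_mul]
  rw [Finset.sum_eq_single (k, 0)]
  · rw [PowerSeries.coeff_zero_eq_constantCoeff, constantCoeff_Gfac, mul_one]
  · intro p hp hne
    rw [Finset.HasAntidiagonal.mem_antidiagonal] at hp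
    have h2 : 0 < p.2 := by
      rcases Nat.eq_zero_or_pos p.2 with h0 | h0
      · exfalso; apply hne; have : p.1 = k := by omega
        rw [← this, ← h0]
      · exact h0
    rw [(lowOne_Gfac N).2 p.2 h2 (by omega), mul_zero]
  · intro hk; exfalso; exact hk (by simp)

lemma coeff_Qprod_stable (k N : ℕ) (h : k + 1 ≤ N) :
    PowerSeries.coeff (R := ℝ) k (Qprod N) = cseq k := by
  induction N with
  | zero => omega
  | succ N ih =>
    rcases Nat.lt_or_ge (k + 1) (N + 1) with h' | h'
    · rw [coeff_Qprod_succ k N (by omega), ih (by omega)]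
    · have : N = k := by omega
      rw [this]; rfl

lemma coeff_Qprod_mono (k N M : ℕ) (h : N ≤ M) :
    PowerSeries.coeff (R := ℝ) k (Qprod N) ≤ PowerSeries.coeff (R := ℝ) k (Qprod M) := by
  induction M with
  | zero => have : N = 0 := by omega
            rw [this]
  | succ M ih =>
    rcases Nat.lt_or_ge N (M + 1) with h' | h'
    · refine le_trans (ih (by omega)) ?_
      have hq : Qprod (M + 1) = Qprod M * Gfac M := by rw [Qprod, Qprod, Finset.prod_range_succ]
      rw [hq, PowerSeries.coeff_mul]
      have hmem : (k, 0) ∈ Finset.HasAntidiagonal.antidiagonal k := by simp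
      have := Finset.single_le_sum
        (f := fun p : ℕ × ℕ => PowerSeries.coeff (R := ℝ) p.1 (Qprod M) * PowerSeries.coeff (R := ℝ) p.2 (Gfac M))
        (fun p _ => mul_nonneg (NNPS_Qprod M p.1) (NNPS_Gfac M p.2)) hmem
      simpa [PowerSeries.coeff_zero_eq_constantCoeff, constantCoeff_Gfac] using this
    · have : N = M + 1 := by omega
      rw [this]

lemma coeff_Qprod_le_cseq (k N : ℕ) : PowerSeries.coeff (R := ℝ) k (Qprod N) ≤ cseq k := by
  rcases Nat.lt_or_ge N (k + 1) with h | h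
  · calc PowerSeries.coeff (R := ℝ) k (Qprod N) ≤ PowerSeries.coeff (R := ℝ) k (Qprod (k + 1)) :=
        coeff_Qprod_mono k N (k + 1) (by omega)
      _ = cseq k := rfl
  · rw [coeff_Qprod_stable k N h]

lemma cseq_nonneg (k : ℕ) : 0 ≤ cseq k := NNPS_Qprod (k + 1) k

-- positivity
lemma NNPS_X_pow (m : ℕ) : NNPS ((PowerSeries.X : PowerSeries ℝ) ^ m) := by
  intro k
  rw [PowerSeries.coeff_X_pow]
  split_ifs <;> norm_num

lemma coeff_base_pos (k : ℕ) :
    0 < PowerSeries.coeff (R := ℝ) k ((1 + PowerSeries.X ^ (2 * 0 + 2)) * Sgeo (2 * 0 + 1)) := by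
  rw [add_mul, one_mul, map_add]
  have h1 : PowerSeries.coeff (R := ℝ) k (Sgeo (2 * 0 + 1)) = 1 := by
    rw [Sgeo, PowerSeries.coeff_mk, if_pos (by norm_num)]
  have h2 : 0 ≤ PowerSeries.coeff (R := ℝ) k (PowerSeries.X ^ (2 * 0 + 2) * Sgeo (2 * 0 + 1)) :=
    ((NNPS_X_pow _).mul (NNPS_Sgeo _)) k
  rw [h1]; linarith

lemma pos_mul_NN {A B : PowerSeries ℝ} (hA : ∀ k, 0 < PowerSeries.coeff (R := ℝ) k A) (hB : NNPS B)
    (hB0 : 0 < PowerSeries.constantCoeff (R := ℝ) B) (k : ℕ) : 0 < PowerSeries.coeff (R := ℝ) k (A * B) := by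
  rw [PowerSeries.coeff_mul]
  have hmem : (k, 0) ∈ Finset.HasAntidiagonal.antidiagonal k := by simp
  have hpos : 0 < PowerSeries.coeff (R := ℝ) k A * PowerSeries.coeff (R := ℝ) 0 B := by
    rw [PowerSeries.coeff_zero_eq_constantCoeff]
    exact mul_pos (hA k) hB0
  refine lt_of_lt_of_le hpos ?_
  exact Finset.single_le_sum (fun p _ => mul_nonneg (hA p.1).le (hB p.2)) hmem

lemma coeff_Gfac0_pos (k : ℕ) : 0 < PowerSeries.coeff (R := ℝ) k (Gfac 0) := by
  rw [Gfac]
  set A := (1 + PowerSeries.X ^ (2 * 0 + 2)) * Sgeo (2 * 0 + 1) with hA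
  have hNN : NNPS A := (NNPS_one_add_X_pow _).mul (NNPS_Sgeo _)
  have h0 : 0 < PowerSeries.constantCoeff (R := ℝ) A := by
    rw [← PowerSeries.coeff_zero_eq_constantCoeff]; exact coeff_base_pos 0
  have : ∀ m, 0 < m → ∀ k, 0 < PowerSeries.coeff (R := ℝ) k (A ^ m) := by
    intro m hm
    induction m with
    | zero => omega
    | succ m ih =>
      rcases Nat.eq_zero_or_pos m with h | h
      · subst h; intro k; simpa using coeff_base_pos k
      · intro k
        rw [pow_succ]
        exact pos_mul_NN (ih h) hNN h0 k
  exact this 8 (by norm_num) k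

lemma NNPS_prod_Gfac (s : Finset ℕ) (f : ℕ → ℕ) : NNPS (∏ i ∈ s, Gfac (f i)) := by
  classical
  induction s using Finset.induction_on with
  | empty =>
    intro k; rw [Finset.prod_empty, PowerSeries.coeff_one]; split_ifs <;> norm_num
  | insert _ _ h ih =>
    rw [Finset.prod_insert h]
    exact (NNPS_Gfac _).mul ih

lemma cseq_pos (k : ℕ) : 0 < cseq k := by
  rw [cseq, Qprod, Finset.prod_range_succ']
  rw [mul_comm]
  refine pos_mul_NN coeff_Gfac0_pos (NNPS_prod_Gfac _ _) ?_ k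
  rw [map_prod]
  refine Finset.prod_pos fun i _ => ?_
  rw [constantCoeff_Gfac]; norm_num

lemma cseq_zero : cseq 0 = 1 := by
  rw [cseq, PowerSeries.coeff_zero_eq_constantCoeff, constantCoeff_Qprod]

/-! ### Analytic side -/

/-- The analytic factor functions. -/
noncomputable def gfun (n : ℕ) (z : ℂ) : ℂ :=
  ((1 + z ^ (2 * n + 2)) * ((1 : ℂ) - z ^ (2 * n + 1))⁻¹) ^ 8

/-- `F` represents `f` on the unit ball, with absolute convergence. -/
def RepPS (F : PowerSeries ℝ) (f : ℂ → ℂ) : Prop :=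
  ∀ z : ℂ, ‖z‖ < 1 →
    Summable (fun k => ‖((PowerSeries.coeff (R := ℝ) k F : ℝ) : ℂ) * z ^ k‖) ∧
    HasSum (fun k => ((PowerSeries.coeff (R := ℝ) k F : ℝ) : ℂ) * z ^ k) (f z)

lemma RepPS.mul {F G : PowerSeries ℝ} {f g : ℂ → ℂ} (hF : RepPS F f) (hG : RepPS G g) :
    RepPS (F * G) (fun z => f z * g z) := by
  intro z hz
  obtain ⟨hFn, hFs⟩ := hF z hz
  obtain ⟨hGn, hGs⟩ := hG z hz
  have keyp : ∀ n : ℕ, ((PowerSeries.coeff (R := ℝ) n (F * G) : ℝ) : ℂ) * z ^ n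
      = ∑ kl ∈ Finset.HasAntidiagonal.antidiagonal n,
        (((PowerSeries.coeff (R := ℝ) kl.1 F : ℝ) : ℂ) * z ^ kl.1) *
          (((PowerSeries.coeff (R := ℝ) kl.2 G : ℝ) : ℂ) * z ^ kl.2) := by
    intro n
    rw [PowerSeries.coeff_mul]
    push_cast
    rw [Finset.sum_mul]
    refine Finset.sum_congr rfl fun p hp => ?_
    rw [Finset.HasAntidiagonal.mem_antidiagonal] at hp
    rw [← hp, pow_add]; ring
  have hn := summable_norm_sum_mul_antidiagonal_of_summable_norm hFn hGn
  constructor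
  · simp only [keyp]; exact hn
  · have h2 : Summable (fun n => ∑ kl ∈ Finset.HasAntidiagonal.antidiagonal n,
        (((PowerSeries.coeff (R := ℝ) kl.1 F : ℝ) : ℂ) * z ^ kl.1) *
          (((PowerSeries.coeff (R := ℝ) kl.2 G : ℝ) : ℂ) * z ^ kl.2)) := hn.of_norm
    have h3 := tsum_mul_tsum_eq_tsum_sum_antidiagonal_of_summable_norm hFn hGn
    rw [hFs.tsum_eq, hGs.tsum_eq] at h3
    have h4 := h2.hasSum
    rw [← h3] at h4
    simpa only [keyp] using h4

lemma RepPS.one : RepPS 1 (fun _ => 1) := by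
  intro z hz
  have keyp : ∀ k : ℕ, ((PowerSeries.coeff (R := ℝ) k (1 : PowerSeries ℝ) : ℝ) : ℂ) * z ^ k
      = if k = 0 then 1 else 0 := by
    intro k
    rw [PowerSeries.coeff_one]
    split_ifs with h <;> simp [h]
  constructor
  · simp only [keyp]
    have : ∀ k : ℕ, ‖if k = 0 then (1 : ℂ) else 0‖ = if k = 0 then (1 : ℝ) else 0 := by
      intro k; split_ifs <;> simp
    simp only [this]
    exact (hasSum_ite_eq 0 (1 : ℝ)).summable
  · simp only [keyp]
    exact hasSum_ite_eq 0 1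

lemma RepPS.pow {F : PowerSeries ℝ} {f : ℂ → ℂ} (hF : RepPS F f) (m : ℕ) :
    RepPS (F ^ m) (fun z => f z ^ m) := by
  induction m with
  | zero => simpa using RepPS.one
  | succ m ih =>
    have := ih.mul hF
    simpa [pow_succ] using this

lemma hasSum_geo_aux {K : Type*} [NormedField K] [CompleteSpace K] (w : K) (hw : ‖w‖ < 1)
    (d : ℕ) (hd : 1 ≤ d) :
    HasSum (fun k : ℕ => if d ∣ k then w ^ k else 0) ((1 - w ^ d)⁻¹) := by
  have hwd : ‖w ^ d‖ < 1 := by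
    rw [norm_pow]
    calc ‖w‖ ^ d ≤ ‖w‖ ^ 1 := pow_le_pow_of_le_one (norm_nonneg w) hw.le hd
      _ = ‖w‖ := pow_one _
      _ < 1 := hw
  have hg : HasSum (fun m : ℕ => (w ^ d) ^ m) ((1 - w ^ d)⁻¹) :=
    hasSum_geometric_of_norm_lt_one hwd
  have hinj : Function.Injective (fun m : ℕ => d * m) :=
    fun a b h => by simpa using mul_left_cancel₀ (by omega : d ≠ 0) h
  have hvan : ∀ k ∉ Set.range (fun m : ℕ => d * m),
      (if d ∣ k then w ^ k else 0) = 0 := by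
    intro k hk
    rw [if_neg]
    intro ⟨m, hm⟩
    exact hk ⟨m, hm.symm⟩
  rw [← Function.Injective.hasSum_iff hinj hvan]
  have : ((fun k : ℕ => if d ∣ k then w ^ k else 0) ∘ fun m : ℕ => d * m)
      = fun m : ℕ => (w ^ d) ^ m := by
    funext m
    simp only [Function.comp_apply]
    rw [if_pos ⟨m, rfl⟩, pow_mul]
  rw [this]
  exact hg

lemma RepPS_Sgeo (d : ℕ) (hd : 1 ≤ d) :
    RepPS (Sgeo d) (fun z => ((1 : ℂ) - z ^ d)⁻¹) := by
  intro z hz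
  have keyp : ∀ k : ℕ, ((PowerSeries.coeff (R := ℝ) k (Sgeo d) : ℝ) : ℂ) * z ^ k
      = if d ∣ k then z ^ k else 0 := by
    intro k
    rw [Sgeo, PowerSeries.coeff_mk]
    split_ifs <;> simp
  constructor
  · simp only [keyp]
    have keyn : ∀ k : ℕ, ‖if d ∣ k then z ^ k else 0‖
        = if d ∣ k then ‖z‖ ^ k else 0 := by
      intro k; split_ifs <;> simp
    simp only [keyn]
    exact (hasSum_geo_aux ‖z‖ (by rwa [Real.norm_of_nonneg (norm_nonneg z)]) d hd).summable
  · simp only [keyp]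
    exact hasSum_geo_aux z hz d hd

lemma RepPS_one_add_X_pow (m : ℕ) (hm : 1 ≤ m) :
    RepPS (1 + PowerSeries.X ^ m) (fun z => 1 + z ^ m) := by
  intro z hz
  have keyp : ∀ k : ℕ, ((PowerSeries.coeff (R := ℝ) k (1 + PowerSeries.X ^ m) : ℝ) : ℂ) * z ^ k
      = (if k = 0 then 1 else 0) + (if k = m then z ^ m else 0) := by
    intro k
    rw [map_add, PowerSeries.coeff_one, PowerSeries.coeff_X_pow]
    push_cast
    split_ifs with h1 h2 h2
    · omega
    · subst h1; simp
    · subst h2; simp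
    · simp
  constructor
  · simp only [keyp]
    have keyn : ∀ k : ℕ, ‖(if k = 0 then (1:ℂ) else 0) + (if k = m then z ^ m else 0)‖
        = (if k = 0 then (1:ℝ) else 0) + (if k = m then ‖z ^ m‖ else 0) := by
      intro k
      rcases eq_or_ne k 0 with h0 | h0
      · subst h0; rw [if_pos rfl, if_pos rfl, if_neg (by omega), if_neg (by omega)]; simp
      · rw [if_neg h0, if_neg h0, zero_add, zero_add]
        split_ifs <;> simp
    simp only [keyn]
    exact ((hasSum_ite_eq 0 (1:ℝ)).add (hasSum_ite_eq m ‖z ^ m‖)).summable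
  · simp only [keyp]
    exact (hasSum_ite_eq 0 (1:ℂ)).add (hasSum_ite_eq m (z ^ m))

lemma RepPS_Gfac (n : ℕ) : RepPS (Gfac n) (gfun n) := by
  have h := ((RepPS_one_add_X_pow (2 * n + 2) (by omega)).mul
    (RepPS_Sgeo (2 * n + 1) (by omega))).pow 8
  rw [Gfac]
  exact h

lemma RepPS_Qprod (N : ℕ) : RepPS (Qprod N) (fun z => ∏ n ∈ Finset.range N, gfun n z) := by
  induction N with
  | zero =>
    simp only [Qprod, Finset.range_zero, Finset.prod_empty]
    exact RepPS.one
  | succ N ih =>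
    have h := ih.mul (RepPS_Gfac N)
    have hq : Qprod (N + 1) = Qprod N * Gfac N := by rw [Qprod, Qprod, Finset.prod_range_succ]
    rw [hq]
    convert h using 2 with z
    rw [Finset.prod_range_succ]

/-! ### Real evaluation and summability of the coefficients -/

lemma hasSum_Qprod_real (N : ℕ) {x : ℝ} (h0 : 0 ≤ x) (h1 : x < 1) :
    HasSum (fun k => PowerSeries.coeff (R := ℝ) k (Qprod N) * x ^ k)
      (∏ n ∈ Finset.range N, ((1 + x ^ (2 * n + 2)) * ((1 : ℝ) - x ^ (2 * n + 1))⁻¹) ^ 8) := by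
  have hz : ‖(x : ℂ)‖ < 1 := by
    rw [Complex.norm_real, Real.norm_of_nonneg h0]; exact h1
  have h := (RepPS_Qprod N (x : ℂ) hz).2
  have e1 : ∀ k : ℕ, ((PowerSeries.coeff (R := ℝ) k (Qprod N) : ℝ) : ℂ) * (x : ℂ) ^ k
      = ((PowerSeries.coeff (R := ℝ) k (Qprod N) * x ^ k : ℝ) : ℂ) := by
    intro k; push_cast; ring
  have e2 : (∏ n ∈ Finset.range N, gfun n (x : ℂ))
      = ((∏ n ∈ Finset.range N, ((1 + x ^ (2 * n + 2)) * ((1 : ℝ) - x ^ (2 * n + 1))⁻¹) ^ 8 : ℝ)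
        : ℂ) := by
    push_cast [gfun]
    rfl
  rw [← Complex.hasSum_ofReal]
  simp only [← e1]
  rw [← e2]
  exact h

lemma factor_pos {x : ℝ} (h0 : 0 ≤ x) (h1 : x < 1) (n : ℕ) :
    0 < (1 + x ^ (2 * n + 2)) * ((1 : ℝ) - x ^ (2 * n + 1))⁻¹ := by
  have hv : x ^ (2 * n + 1) ≤ x := by
    calc x ^ (2 * n + 1) ≤ x ^ 1 := pow_le_pow_of_le_one h0 h1.le (by omega)
      _ = x := pow_one x
  have : 0 < 1 - x ^ (2 * n + 1) := by nlinarith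
  positivity

lemma prod_le_bound {x : ℝ} (h0 : 0 ≤ x) (h1 : x < 1) (N : ℕ) :
    (∏ n ∈ Finset.range N, ((1 + x ^ (2 * n + 2)) * ((1 : ℝ) - x ^ (2 * n + 1))⁻¹) ^ 8)
      ≤ Real.exp (8 * (1 + (1 - x)⁻¹) * (1 - x)⁻¹) := by
  set y : ℝ := (1 - x)⁻¹ with hy
  have hx1 : 0 < 1 - x := by linarith
  have hy0 : 0 ≤ y := by positivity
  have hyx : y * (1 - x) = 1 := inv_mul_cancel₀ hx1.ne'
  have factor_le : ∀ n : ℕ, ((1 + x ^ (2 * n + 2)) * ((1 : ℝ) - x ^ (2 * n + 1))⁻¹) ^ 8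
      ≤ Real.exp (8 * ((1 + y) * x ^ n)) := by
    intro n
    set u := x ^ (2 * n + 2) with hu
    set v := x ^ (2 * n + 1) with hv
    have hu0 : 0 ≤ u := by positivity
    have hv0 : 0 ≤ v := by positivity
    have hun : u ≤ x ^ n := pow_le_pow_of_le_one h0 h1.le (by omega)
    have hvn : v ≤ x ^ n := pow_le_pow_of_le_one h0 h1.le (by omega)
    have hvx : v ≤ x := by
      calc v = x ^ (2 * n + 1) := hv
        _ ≤ x ^ 1 := pow_le_pow_of_le_one h0 h1.le (by omega)
        _ = x := pow_one x
    have h1v : 0 < 1 - v := by linarith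
    have hbase1 : 1 + u ≤ Real.exp u := by
      have := Real.add_one_le_exp u; linarith
    have hbase2 : ((1 : ℝ) - v)⁻¹ ≤ Real.exp (v * y) := by
      have hy1v : 1 ≤ y * (1 - v) := by
        nlinarith [mul_le_mul_of_nonneg_left (show (1:ℝ) - x ≤ 1 - v by linarith) hy0]
      have hvy1v : v ≤ v * (y * (1 - v)) := by
        nlinarith [mul_le_mul_of_nonneg_left hy1v hv0]
      have key : 1 ≤ (1 + v * y) * (1 - v) := by nlinarith
      have : ((1 : ℝ) - v)⁻¹ ≤ 1 + v * y := by
        rw [inv_eq_one_div, div_le_iff₀ h1v]; linarith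
      refine this.trans ?_
      have := Real.add_one_le_exp (v * y); linarith
    have hA : (1 + u) * ((1 : ℝ) - v)⁻¹ ≤ Real.exp (u + v * y) := by
      rw [Real.exp_add]
      exact mul_le_mul hbase1 hbase2 (by positivity) (Real.exp_pos u).le
    have hA0 : 0 ≤ (1 + u) * ((1 : ℝ) - v)⁻¹ := by positivity
    calc ((1 + u) * ((1 : ℝ) - v)⁻¹) ^ 8 ≤ (Real.exp (u + v * y)) ^ 8 :=
          pow_le_pow_left₀ hA0 hA 8
      _ = Real.exp (8 * (u + v * y)) := by
          rw [← Real.exp_nat_mul]; norm_num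
      _ ≤ Real.exp (8 * ((1 + y) * x ^ n)) := by
          apply Real.exp_le_exp.mpr
          have : v * y ≤ x ^ n * y := mul_le_mul_of_nonneg_right hvn hy0
          nlinarith
  calc (∏ n ∈ Finset.range N, ((1 + x ^ (2 * n + 2)) * ((1 : ℝ) - x ^ (2 * n + 1))⁻¹) ^ 8)
      ≤ ∏ n ∈ Finset.range N, Real.exp (8 * ((1 + y) * x ^ n)) := by
        refine Finset.prod_le_prod (fun n _ => by positivity) fun n _ => factor_le n
    _ = Real.exp (∑ n ∈ Finset.range N, 8 * ((1 + y) * x ^ n)) := by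
        rw [Real.exp_sum]
    _ ≤ Real.exp (8 * (1 + y) * y) := by
        apply Real.exp_le_exp.mpr
        have hgeo : ∑ n ∈ Finset.range N, x ^ n ≤ y := by
          refine (Summable.sum_le_tsum (Finset.range N) (fun n _ => by positivity)
            (summable_geometric_of_lt_one h0 h1)).trans ?_
          rw [tsum_geometric_of_lt_one h0 h1]
        calc ∑ n ∈ Finset.range N, 8 * ((1 + y) * x ^ n)
            = 8 * (1 + y) * ∑ n ∈ Finset.range N, x ^ n := by
              rw [Finset.mul_sum]
              exact Finset.sum_congr rfl fun n _ => by ring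
          _ ≤ 8 * (1 + y) * y := by nlinarith

lemma summable_cseq_mul {x : ℝ} (h0 : 0 ≤ x) (h1 : x < 1) :
    Summable (fun k => cseq k * x ^ k) := by
  refine summable_of_sum_range_le (c := Real.exp (8 * (1 + (1 - x)⁻¹) * (1 - x)⁻¹))
    (fun k => mul_nonneg (cseq_nonneg k) (by positivity)) fun K => ?_
  have e : ∑ k ∈ Finset.range K, cseq k * x ^ k
      = ∑ k ∈ Finset.range K, PowerSeries.coeff (R := ℝ) k (Qprod K) * x ^ k := by
    refine Finset.sum_congr rfl fun k hk => ?_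
    rw [Finset.mem_range] at hk
    rw [coeff_Qprod_stable k K (by omega)]
  rw [e]
  have hs := hasSum_Qprod_real K h0 h1
  calc ∑ k ∈ Finset.range K, PowerSeries.coeff (R := ℝ) k (Qprod K) * x ^ k
      ≤ ∑' k, PowerSeries.coeff (R := ℝ) k (Qprod K) * x ^ k :=
        Summable.sum_le_tsum (Finset.range K)
          (fun k _ => mul_nonneg (NNPS_Qprod K k) (by positivity)) hs.summable
    _ = _ := hs.tsum_eq
    _ ≤ _ := prod_le_bound h0 h1 K

/-! ### Convergence of partial products to the power series sum -/

lemma summable_cseq_mul_C {z : ℂ} (hz : ‖z‖ < 1) :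
    Summable (fun k => ‖((cseq k : ℝ) : ℂ) * z ^ k‖) := by
  have : ∀ k : ℕ, ‖((cseq k : ℝ) : ℂ) * z ^ k‖ = cseq k * ‖z‖ ^ k := by
    intro k
    rw [norm_mul, norm_pow, Complex.norm_real, Real.norm_of_nonneg (cseq_nonneg k)]
  simp only [this]
  exact summable_cseq_mul (norm_nonneg z) hz

lemma tendsto_partial_prods {z : ℂ} (hz : ‖z‖ < 1) :
    Filter.Tendsto (fun N => ∏ n ∈ Finset.range N, gfun n z) Filter.atTop
      (nhds (∑' k, ((cseq k : ℝ) : ℂ) * z ^ k)) := by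
  set x := ‖z‖ with hx
  have hx0 : 0 ≤ x := norm_nonneg z
  have hsc : Summable (fun k => cseq k * x ^ k) := summable_cseq_mul hx0 hz
  have hsum_c : Summable (fun k => ((cseq k : ℝ) : ℂ) * z ^ k) :=
    (summable_cseq_mul_C hz).of_norm
  set L := ∑' k, ((cseq k : ℝ) : ℂ) * z ^ k with hL
  rw [Metric.tendsto_atTop]
  -- the tail bound
  have key : ∀ N : ℕ, dist (∏ n ∈ Finset.range N, gfun n z) L
      ≤ ∑' k, cseq (k + N) * x ^ (k + N) := by
    intro N
    have hQn := (RepPS_Qprod N z hz).1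
    have hQ : Summable (fun k => ((PowerSeries.coeff (R := ℝ) k (Qprod N) : ℝ) : ℂ) * z ^ k) :=
      hQn.of_norm
    have hprod : (∏ n ∈ Finset.range N, gfun n z)
        = ∑' k, ((PowerSeries.coeff (R := ℝ) k (Qprod N) : ℝ) : ℂ) * z ^ k :=
      ((RepPS_Qprod N z hz).2.tsum_eq).symm
    set d : ℕ → ℝ := fun k => (cseq k - PowerSeries.coeff (R := ℝ) k (Qprod N)) * x ^ k with hd
    have hd0 : ∀ k, 0 ≤ d k := fun k =>
      mul_nonneg (by linarith [coeff_Qprod_le_cseq k N]) (by positivity)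
    have hdle : ∀ k, d k ≤ cseq k * x ^ k := fun k => by
      have := NNPS_Qprod N k
      have : cseq k - PowerSeries.coeff (R := ℝ) k (Qprod N) ≤ cseq k := by linarith
      exact mul_le_mul_of_nonneg_right this (by positivity)
    have hds : Summable d := hsc.of_nonneg_of_le hd0 hdle
    have hdz : ∀ k < N, d k = 0 := by
      intro k hk
      rw [hd]
      simp only
      rw [coeff_Qprod_stable k N (by omega), sub_self, zero_mul]
    have hnorm : ∀ k : ℕ, ‖((PowerSeries.coeff (R := ℝ) k (Qprod N) : ℝ) : ℂ) * z ^ k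
        - ((cseq k : ℝ) : ℂ) * z ^ k‖ = d k := by
      intro k
      rw [← sub_mul, ← Complex.ofReal_sub, norm_mul, norm_pow, Complex.norm_real,
        Real.norm_eq_abs, abs_sub_comm,
        abs_of_nonneg (by linarith [coeff_Qprod_le_cseq k N])]
    calc dist (∏ n ∈ Finset.range N, gfun n z) L
        = ‖∑' k, (((PowerSeries.coeff (R := ℝ) k (Qprod N) : ℝ) : ℂ) * z ^ k
            - ((cseq k : ℝ) : ℂ) * z ^ k)‖ := by
          rw [dist_eq_norm, hprod, hL, ← hQ.tsum_sub hsum_c]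
      _ ≤ ∑' k, ‖((PowerSeries.coeff (R := ℝ) k (Qprod N) : ℝ) : ℂ) * z ^ k
            - ((cseq k : ℝ) : ℂ) * z ^ k‖ := by
          refine norm_tsum_le_tsum_norm ?_
          simp only [hnorm]; exact hds
      _ = ∑' k, d k := by simp only [hnorm]
      _ = ∑' k, d (k + N) := by
          rw [← hds.sum_add_tsum_nat_add N]
          rw [Finset.sum_eq_zero fun k hk => hdz k (Finset.mem_range.mp hk), zero_add]
      _ ≤ ∑' k, cseq (k + N) * x ^ (k + N) := by
          refine Summable.tsum_le_tsum (fun k => hdle (k + N)) ((summable_nat_add_iff N).mpr hds)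
            ((summable_nat_add_iff N).mpr hsc)
  have htail : Filter.Tendsto (fun N => ∑' k, cseq (k + N) * x ^ (k + N)) Filter.atTop
      (nhds 0) := tendsto_sum_nat_add (fun k => cseq k * x ^ k)
  intro ε hε
  obtain ⟨N0, hN0⟩ := (Metric.tendsto_atTop.mp htail) ε hε
  refine ⟨N0, fun N hN => ?_⟩
  have h1 := key N
  have h2 := hN0 N hN
  rw [Real.dist_eq, sub_zero] at h2
  have h3 : ∑' k, cseq (k + N) * x ^ (k + N) ≤ |∑' k, cseq (k + N) * x ^ (k + N)| :=
    le_abs_self _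
  linarith

/-! ### Multipliability of the infinite product -/

lemma gfun_ne_zero {z : ℂ} (hz : ‖z‖ < 1) (n : ℕ) : gfun n z ≠ 0 := by
  rw [gfun]
  have h1 : (1 : ℂ) + z ^ (2 * n + 2) ≠ 0 := by
    intro h
    have : z ^ (2 * n + 2) = -1 := by linear_combination h
    have h2 : ‖z ^ (2 * n + 2)‖ < 1 := by
      rw [norm_pow]; exact pow_lt_one₀ (norm_nonneg z) hz (by omega)
    rw [this] at h2; simp at h2
  have h2 : (1 : ℂ) - z ^ (2 * n + 1) ≠ 0 := by
    intro h
    have : z ^ (2 * n + 1) = 1 := by linear_combination -h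
    have h2 : ‖z ^ (2 * n + 1)‖ < 1 := by
      rw [norm_pow]; exact pow_lt_one₀ (norm_nonneg z) hz (by omega)
    rw [this] at h2; simp at h2
  exact pow_ne_zero 8 (mul_ne_zero h1 (inv_ne_zero h2))

lemma gfun_sub_one_bound {z : ℂ} (hz : ‖z‖ < 1) (n : ℕ) :
    ‖gfun n z - 1‖ ≤ (8 * (1 + 2 * (1 - ‖z‖)⁻¹) ^ 7 * (2 * (1 - ‖z‖)⁻¹)) * ‖z‖ ^ n := by
  set x := ‖z‖ with hx
  have hx0 : 0 ≤ x := norm_nonneg z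
  set K : ℝ := 2 * (1 - x)⁻¹ with hK
  have hx1 : 0 < 1 - x := by linarith
  have hK0 : 0 ≤ K := by positivity
  set a := z ^ (2 * n + 2) with ha
  set b := z ^ (2 * n + 1) with hb
  set A := (1 + a) * ((1 : ℂ) - b)⁻¹ with hA
  have hbn : ‖b‖ ≤ x ^ n := by
    rw [hb, norm_pow]; exact pow_le_pow_of_le_one hx0 hz.le (by omega)
  have han : ‖a‖ ≤ x ^ n := by
    rw [ha, norm_pow]; exact pow_le_pow_of_le_one hx0 hz.le (by omega)
  have hbx : ‖b‖ ≤ x := by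
    rw [hb, norm_pow]
    calc x ^ (2 * n + 1) ≤ x ^ 1 := pow_le_pow_of_le_one hx0 hz.le (by omega)
      _ = x := pow_one x
  have h1b : 1 - x ≤ ‖(1 : ℂ) - b‖ := by
    have := norm_sub_norm_le (1 : ℂ) b
    rw [norm_one] at this
    linarith
  have h1bne : (1 : ℂ) - b ≠ 0 := by
    intro h; rw [h] at h1b; simp at h1b; linarith
  have hA1 : ‖A - 1‖ ≤ K * x ^ n := by
    have e : A - 1 = (a + b) * ((1 : ℂ) - b)⁻¹ := by
      rw [hA]; field_simp; ring
    rw [e, norm_mul, norm_inv]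
    have h1 : ‖a + b‖ ≤ 2 * x ^ n := by
      calc ‖a + b‖ ≤ ‖a‖ + ‖b‖ := norm_add_le a b
        _ ≤ 2 * x ^ n := by linarith
    have h2 : ‖(1 : ℂ) - b‖⁻¹ ≤ (1 - x)⁻¹ := by
      exact inv_anti₀ hx1 h1b
    calc ‖a + b‖ * ‖(1 : ℂ) - b‖⁻¹ ≤ (2 * x ^ n) * (1 - x)⁻¹ := by
          refine mul_le_mul h1 h2 (by positivity) (by positivity)
      _ = K * x ^ n := by rw [hK]; ring
  have hAnorm : ‖A‖ ≤ 1 + K := by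
    have : ‖A‖ - 1 ≤ ‖A - 1‖ := by
      have := norm_sub_norm_le A (1 : ℂ)
      rw [norm_one] at this; linarith
    have hxn1 : x ^ n ≤ 1 := pow_le_one₀ hx0 hz.le
    nlinarith
  have hgeom : gfun n z - 1 = (∑ i ∈ Finset.range 8, A ^ i * 1 ^ (8 - 1 - i)) * (A - 1) := by
    rw [geom_sum₂_mul A 1 8]
    rw [gfun, hA, one_pow]
  rw [hgeom, norm_mul]
  have hsum : ‖∑ i ∈ Finset.range 8, A ^ i * 1 ^ (8 - 1 - i)‖ ≤ 8 * (1 + K) ^ 7 := by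
    calc ‖∑ i ∈ Finset.range 8, A ^ i * 1 ^ (8 - 1 - i)‖
        ≤ ∑ i ∈ Finset.range 8, ‖A ^ i * 1 ^ (8 - 1 - i)‖ := norm_sum_le _ _
      _ ≤ ∑ _i ∈ Finset.range 8, (1 + K) ^ 7 := by
          refine Finset.sum_le_sum fun i hi => ?_
          rw [Finset.mem_range] at hi
          rw [one_pow, mul_one, norm_pow]
          calc ‖A‖ ^ i ≤ (1 + K) ^ i := by
                refine pow_le_pow_left₀ (norm_nonneg A) hAnorm i
            _ ≤ (1 + K) ^ 7 := pow_le_pow_right₀ (by linarith) (by omega)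
      _ = 8 * (1 + K) ^ 7 := by simp
  calc ‖∑ i ∈ Finset.range 8, A ^ i * 1 ^ (8 - 1 - i)‖ * ‖A - 1‖
      ≤ (8 * (1 + K) ^ 7) * (K * x ^ n) := by
        refine mul_le_mul hsum hA1 (norm_nonneg _) (by positivity)
    _ = 8 * (1 + K) ^ 7 * K * x ^ n := by ring

lemma summable_log_gfun {z : ℂ} (hz : ‖z‖ < 1) :
    Summable (fun n => Complex.log (gfun n z)) := by
  set x := ‖z‖ with hx
  have hx0 : 0 ≤ x := norm_nonneg z
  set C : ℝ := 8 * (1 + 2 * (1 - x)⁻¹) ^ 7 * (2 * (1 - x)⁻¹) with hC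
  have hC0 : 0 ≤ C := by
    have : (0:ℝ) < 1 - x := by linarith
    positivity
  have htend : Filter.Tendsto (fun n : ℕ => C * x ^ n) Filter.atTop (nhds 0) := by
    have := tendsto_pow_atTop_nhds_zero_of_lt_one hx0 hz
    simpa using this.const_mul C
  have hev : ∀ᶠ n in Filter.atTop, C * x ^ n ≤ 1 / 2 := by
    refine htend.eventually_le_const (by norm_num)
  obtain ⟨N, hN⟩ := Filter.eventually_atTop.mp hev
  rw [← summable_nat_add_iff N]
  have hgs : Summable (fun n : ℕ => (3 / 2) * (C * x ^ (n + N))) := by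
    have h1 : Summable (fun n : ℕ => x ^ n) := summable_geometric_of_lt_one hx0 hz
    have h2 : Summable (fun n : ℕ => x ^ (n + N)) := (summable_nat_add_iff N).mpr h1
    exact (h2.mul_left C).mul_left (3 / 2)
  refine Summable.of_norm_bounded hgs fun n => ?_
  have hb := gfun_sub_one_bound hz (n + N)
  have hsmall : ‖gfun (n + N) z - 1‖ ≤ 1 / 2 := hb.trans (hN (n + N) (by omega))
  have := Complex.norm_log_one_add_half_le_self hsmall
  rw [add_sub_cancel] at this
  refine this.trans ?_
  have : ‖gfun (n + N) z - 1‖ ≤ C * x ^ (n + N) := hb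
  linarith [Complex.norm_log_one_add_half_le_self hsmall]

lemma multipliable_gfun {z : ℂ} (hz : ‖z‖ < 1) : Multipliable (fun n => gfun n z) := by
  have := Complex.multipliable_of_summable_log (summable_log_gfun hz)
  exact this

lemma hasSum_cseq_tprod {z : ℂ} (hz : ‖z‖ < 1) :
    HasSum (fun k => ((cseq k : ℝ) : ℂ) * z ^ k) (∏' n, gfun n z) := by
  have hsum : Summable (fun k => ((cseq k : ℝ) : ℂ) * z ^ k) := (summable_cseq_mul_C hz).of_norm
  have h1 := (multipliable_gfun hz).hasProd.tendsto_prod_nat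
  have h2 := tendsto_partial_prods hz
  have : (∏' n, gfun n z) = ∑' k, ((cseq k : ℝ) : ℂ) * z ^ k := tendsto_nhds_unique h1 h2
  rw [this] at *
  exact hsum.hasSum

/-- `-J(-z) = ∑_{n≥1} M_n z^n` with all coefficients `M_n` strictly positive reals,
and `M_1 = 16`. -/
theorem neg_modularJ_neg_coeffs_pos :
    ∃ M : ℕ → ℝ, (∀ n : ℕ, 1 ≤ n → 0 < M n) ∧ M 1 = 16 ∧
      ∀ z ∈ ball (0 : ℂ) 1,
        HasSum (fun n : ℕ => (M (n + 1) : ℂ) * z ^ (n + 1)) (-modularJ (-z)) := by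
  refine ⟨fun n => if n = 0 then 0 else 16 * cseq (n - 1), ?_, ?_, ?_⟩
  · intro n hn
    have hne : n ≠ 0 := by omega
    simp only [hne, if_false]
    linarith [cseq_pos (n - 1)]
  · simp [cseq_zero]
  · intro z hzball
    have hz : ‖z‖ < 1 := by
      rwa [mem_ball, dist_zero_right] at hzball
    have hS := hasSum_cseq_tprod hz
    have hS2 := hS.mul_left (16 * z)
    have hval : -modularJ (-z) = 16 * z * ∏' n, gfun n z := by
      rw [modularJ]
      have hpc : (∏' n : ℕ, ((1 + (-z) ^ (2 * (n + 1))) / (1 + (-z) ^ (2 * (n + 1) - 1))) ^ 8)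
          = ∏' n, gfun n z := by
        refine tprod_congr fun n => ?_
        have he : (-z) ^ (2 * (n + 1)) = z ^ (2 * n + 2) := by
          rw [Even.neg_pow ⟨n + 1, by ring⟩]
          ring_nf
        have ho : (-z) ^ (2 * (n + 1) - 1) = -(z ^ (2 * n + 1)) := by
          have : 2 * (n + 1) - 1 = 2 * n + 1 := by omega
          rw [this, Odd.neg_pow ⟨n, by ring⟩]
        rw [he, ho, gfun]
        ring
      rw [hpc]
      ring
    rw [hval]
    refine hS2.congr_fun fun k => ?_
    have hco : (fun n => if n = 0 then (0:ℝ) else 16 * cseq (n - 1)) (k + 1) = 16 * cseq k := by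
      simp
    rw [hco]
    push_cast
    ring
end

section
/- For every r with 0 < r < 1, the maximum of |J(z)| over the circle |z| = r is attained at z = -r; that is, max_{|z| = r} |J(z)| = |J(-r)|. -/
open Metric

namespace ModularJAux

/-- The basic factor of the product. -/
noncomputable def g (z : ℂ) (n : ℕ) : ℂ :=
  (1 + z ^ (2 * (n + 1))) / (1 + z ^ (2 * (n + 1) - 1))

variable {r : ℝ} {z : ℂ}

lemma pow_norm_le (hr1 : r < 1) (hz : ‖z‖ ≤ r) (k : ℕ) (hk : 1 ≤ k) :
    ‖z ^ k‖ ≤ r ^ k := by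
  rw [norm_pow]
  exact pow_le_pow_left₀ (norm_nonneg z) hz k

lemma rpow_le (hr0 : 0 ≤ r) (hr1 : r < 1) {k : ℕ} (hk : 1 ≤ k) : r ^ k ≤ r := by
  calc r ^ k ≤ r ^ 1 := pow_le_pow_of_le_one hr0 hr1.le hk
  _ = r := pow_one r

lemma denom_norm_ge (hr1 : r < 1) (hz : ‖z‖ ≤ r) (n : ℕ) :
    1 - r ^ (2 * (n + 1) - 1) ≤ ‖1 + z ^ (2 * (n + 1) - 1)‖ := by
  have h1 : ‖z ^ (2 * (n + 1) - 1)‖ ≤ r ^ (2 * (n + 1) - 1) :=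
    pow_norm_le hr1 hz _ (by omega)
  calc 1 - r ^ (2 * (n + 1) - 1) ≤ ‖(1 : ℂ)‖ - ‖-(z ^ (2 * (n + 1) - 1))‖ := by
        rw [norm_one, norm_neg]; linarith
  _ ≤ ‖1 - -(z ^ (2 * (n + 1) - 1))‖ := norm_sub_norm_le _ _
  _ = ‖1 + z ^ (2 * (n + 1) - 1)‖ := by rw [sub_neg_eq_add]

lemma denom_pos (hr0 : 0 < r) (hr1 : r < 1) (hz : ‖z‖ ≤ r) (n : ℕ) :
    0 < 1 - r ^ (2 * (n + 1) - 1) := by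
  have := rpow_le hr0.le hr1 (k := 2 * (n + 1) - 1) (by omega)
  linarith

lemma denom_ne (hr0 : 0 < r) (hr1 : r < 1) (hz : ‖z‖ ≤ r) (n : ℕ) :
    1 + z ^ (2 * (n + 1) - 1) ≠ 0 := by
  intro h
  have h1 := denom_norm_ge hr1 hz n
  have h2 := denom_pos hr0 hr1 hz n
  rw [h, norm_zero] at h1
  linarith

lemma g_ne (hr0 : 0 < r) (hr1 : r < 1) (hz : ‖z‖ ≤ r) (n : ℕ) : g z n ≠ 0 := by
  apply div_ne_zero _ (denom_ne hr0 hr1 hz n)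
  intro h
  have h1 : ‖z ^ (2 * (n + 1))‖ ≤ r ^ (2 * (n + 1)) := pow_norm_le hr1 hz _ (by omega)
  have h2 := rpow_le hr0.le hr1 (k := 2 * (n + 1)) (by omega)
  have h3 : (1 : ℂ) = -(z ^ (2 * (n + 1))) := by linear_combination h
  have h4 : ‖(1 : ℂ)‖ = ‖z ^ (2 * (n + 1))‖ := by rw [h3, norm_neg]
  rw [norm_one] at h4
  linarith

/-- Bound on `‖g z n - 1‖`. -/
lemma g_sub_one_norm (hr0 : 0 < r) (hr1 : r < 1) (hz : ‖z‖ ≤ r) (n : ℕ) :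
    ‖g z n - 1‖ ≤ 2 * r / (1 - r) * r ^ n := by
  have hden := denom_ne hr0 hr1 hz n
  have hdge := denom_norm_ge hr1 hz n
  have hdpos := denom_pos hr0 hr1 hz n
  have key : g z n - 1 =
      (z ^ (2 * (n + 1)) - z ^ (2 * (n + 1) - 1)) / (1 + z ^ (2 * (n + 1) - 1)) := by
    rw [g, div_sub_one hden]; ring_nf
  rw [key, norm_div]
  have hnum : ‖z ^ (2 * (n + 1)) - z ^ (2 * (n + 1) - 1)‖ ≤ 2 * r * r ^ n := by
    have h1 : ‖z ^ (2 * (n + 1))‖ ≤ r ^ (2 * (n + 1)) := pow_norm_le hr1 hz _ (by omega)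
    have h2 : ‖z ^ (2 * (n + 1) - 1)‖ ≤ r ^ (2 * (n + 1) - 1) := pow_norm_le hr1 hz _ (by omega)
    have e1 : 2 * (n + 1) = (n + 1) + (n + 1) := by omega
    have e2 : 2 * (n + 1) - 1 = (n + 1) + n := by omega
    have ha : r ^ (n + 1) ≤ r := rpow_le hr0.le hr1 (Nat.le_add_left 1 n)
    have hb : r ^ (n + 1) ≤ r ^ n := pow_le_pow_of_le_one hr0.le hr1.le (Nat.le_succ n)
    have h3 : r ^ (2 * (n + 1)) ≤ r * r ^ n := by
      rw [e1, pow_add]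
      calc r ^ (n + 1) * r ^ (n + 1) ≤ r * r ^ (n + 1) :=
            mul_le_mul_of_nonneg_right ha (by positivity)
      _ ≤ r * r ^ n := mul_le_mul_of_nonneg_left hb hr0.le
    have h5 : r ^ (2 * (n + 1) - 1) ≤ r * r ^ n := by
      rw [e2, pow_add]
      exact mul_le_mul_of_nonneg_right ha (by positivity)
    calc ‖z ^ (2 * (n + 1)) - z ^ (2 * (n + 1) - 1)‖
        ≤ ‖z ^ (2 * (n + 1))‖ + ‖z ^ (2 * (n + 1) - 1)‖ := norm_sub_le _ _
    _ ≤ 2 * r * r ^ n := by linarith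
  have hd2 : 1 - r ≤ ‖1 + z ^ (2 * (n + 1) - 1)‖ := by
    have := rpow_le hr0.le hr1 (k := 2 * (n + 1) - 1) (by omega)
    linarith
  rw [div_le_iff₀ (by linarith)]
  have hCn : 0 ≤ 2 * r / (1 - r) * r ^ n := by
    apply mul_nonneg (div_nonneg (by linarith) (by linarith)) (by positivity)
  calc ‖z ^ (2 * (n + 1)) - z ^ (2 * (n + 1) - 1)‖ ≤ 2 * r * r ^ n := hnum
  _ = (2 * r / (1 - r) * r ^ n) * (1 - r) := by
        have h1r : (1 : ℝ) - r ≠ 0 := by linarith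
        field_simp
  _ ≤ (2 * r / (1 - r) * r ^ n) * ‖1 + z ^ (2 * (n + 1) - 1)‖ :=
        mul_le_mul_of_nonneg_left hd2 hCn

lemma summable_log (hr0 : 0 < r) (hr1 : r < 1) (hz : ‖z‖ ≤ r) :
    Summable (fun n => Complex.log (g z n)) := by
  set C : ℝ := 2 * r / (1 - r) with hC
  have hCpos : 0 ≤ C := div_nonneg (by linarith) (by linarith)
  apply Summable.of_norm_bounded_eventually_nat (g := fun n => 3 / 2 * (C * r ^ n))
  · exact ((summable_geometric_of_lt_one hr0.le hr1).mul_left C).mul_left _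
  · have htend : Filter.Tendsto (fun n => C * r ^ n) Filter.atTop (nhds 0) := by
      simpa using (tendsto_pow_atTop_nhds_zero_of_lt_one hr0.le hr1).const_mul C
    have hev : ∀ᶠ n in Filter.atTop, C * r ^ n ≤ 1 / 2 := by
      have := htend.eventually (gt_mem_nhds (by norm_num : (0 : ℝ) < 1 / 2))
      filter_upwards [this] with n hn using hn.le
    filter_upwards [hev] with n hn
    have hb : ‖g z n - 1‖ ≤ C * r ^ n := g_sub_one_norm hr0 hr1 hz n
    have hb2 : ‖g z n - 1‖ ≤ 1 / 2 := hb.trans hn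
    have := Complex.norm_log_one_add_half_le_self (z := g z n - 1) (by exact_mod_cast hb2)
    rw [add_sub_cancel] at this
    calc ‖Complex.log (g z n)‖ ≤ 3 / 2 * ‖g z n - 1‖ := this
    _ ≤ 3 / 2 * (C * r ^ n) := by linarith

lemma multipliable_g (hr0 : 0 < r) (hr1 : r < 1) (hz : ‖z‖ ≤ r) :
    Multipliable (fun n => g z n) :=
  Complex.multipliable_of_summable_log (summable_log hr0 hr1 hz)

lemma tprod_g_eq (hr0 : 0 < r) (hr1 : r < 1) (hz : ‖z‖ ≤ r) :
    ∏' n, g z n = Complex.exp (∑' n, Complex.log (g z n)) := by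
  have := Complex.cexp_tsum_eq_tprod (f := fun n => g z n)
    (fun n => g_ne hr0 hr1 hz n) (summable_log hr0 hr1 hz)
  exact this.symm

lemma summable_real_log (hr0 : 0 < r) (hr1 : r < 1) (hz : ‖z‖ ≤ r) :
    Summable (fun n => Real.log ‖g z n‖) := by
  have h := (summable_log hr0 hr1 hz).hasSum
  have := Complex.hasSum_re h
  refine this.summable.congr fun n => ?_
  rw [Complex.log_re]

lemma norm_modularJ (hr0 : 0 < r) (hr1 : r < 1) (hz : ‖z‖ ≤ r) :
    ‖modularJ z‖ = 16 * ‖z‖ * Real.exp (∑' n, Real.log ‖g z n‖) ^ 8 := by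
  have hmul := multipliable_g hr0 hr1 hz
  have hpow : HasProd (fun n => (g z n) ^ 8) ((∏' n, g z n) ^ 8) := by
    have := hmul.hasProd.map (powMonoidHom 8 : ℂ →* ℂ) (continuous_pow 8)
    simpa [powMonoidHom, Function.comp_def] using this
  have h1 : modularJ z = 16 * z * (∏' n, g z n) ^ 8 := by
    rw [modularJ, hpow.tprod_eq.symm]; rfl
  rw [h1, norm_mul, norm_mul, norm_pow]
  have h2 : ‖(16 : ℂ)‖ = 16 := by norm_num
  rw [h2, tprod_g_eq hr0 hr1 hz, Complex.norm_exp]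
  have h3 : (∑' n, Complex.log (g z n)).re = ∑' n, Real.log ‖g z n‖ := by
    rw [Complex.re_tsum (summable_log hr0 hr1 hz)]
    exact tsum_congr fun n => by rw [Complex.log_re]
  rw [h3]

lemma g_norm_le (hr0 : 0 < r) (hr1 : r < 1) (hz : ‖z‖ ≤ r) (n : ℕ) :
    ‖g z n‖ ≤ (1 + r ^ (2 * (n + 1))) / (1 - r ^ (2 * (n + 1) - 1)) := by
  rw [g, norm_div]
  apply div_le_div₀ (by positivity)
  · calc ‖1 + z ^ (2 * (n + 1))‖ ≤ ‖(1 : ℂ)‖ + ‖z ^ (2 * (n + 1))‖ := norm_add_le _ _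
    _ ≤ 1 + r ^ (2 * (n + 1)) := by
        rw [norm_one]
        have := pow_norm_le hr1 hz (2 * (n + 1)) (by omega)
        linarith
  · exact denom_pos hr0 hr1 hz n
  · exact denom_norm_ge hr1 hz n

lemma g_neg_r_norm (hr0 : 0 < r) (hr1 : r < 1) (n : ℕ) :
    ‖g (-(r : ℂ)) n‖ = (1 + r ^ (2 * (n + 1))) / (1 - r ^ (2 * (n + 1) - 1)) := by
  have hzr : ‖(-(r : ℂ))‖ ≤ r := by
    rw [norm_neg, Complex.norm_real, Real.norm_eq_abs, abs_of_pos hr0]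
  have he : (-(r : ℂ)) ^ (2 * (n + 1)) = ((r : ℂ)) ^ (2 * (n + 1)) :=
    Even.neg_pow (by exact ⟨n + 1, by ring⟩) _
  have ho : (-(r : ℂ)) ^ (2 * (n + 1) - 1) = -((r : ℂ) ^ (2 * (n + 1) - 1)) :=
    Odd.neg_pow (by exact ⟨n, by omega⟩) _
  have : g (-(r : ℂ)) n = (((1 + r ^ (2 * (n + 1))) / (1 - r ^ (2 * (n + 1) - 1)) : ℝ) : ℂ) := by
    rw [g, he, ho]
    push_cast
    ring_nf
  rw [this, Complex.norm_real, Real.norm_eq_abs, abs_of_pos]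
  apply div_pos (by positivity) (denom_pos hr0 hr1 hzr n)

theorem norm_le (hr0 : 0 < r) (hr1 : r < 1) (hz : ‖z‖ = r) :
    ‖modularJ z‖ ≤ ‖modularJ (-(r : ℂ))‖ := by
  have hzr : ‖(-(r : ℂ))‖ = r := by
    rw [norm_neg, Complex.norm_real, Real.norm_eq_abs, abs_of_pos hr0]
  rw [norm_modularJ hr0 hr1 hz.le, norm_modularJ hr0 hr1 hzr.le, hz, hzr]
  have hsum : ∑' n, Real.log ‖g z n‖ ≤ ∑' n, Real.log ‖g (-(r : ℂ)) n‖ := by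
    apply Summable.tsum_le_tsum _ (summable_real_log hr0 hr1 hz.le)
      (summable_real_log hr0 hr1 hzr.le)
    intro n
    apply Real.log_le_log
    · rw [norm_pos_iff]
      exact g_ne hr0 hr1 hz.le n
    · rw [g_neg_r_norm hr0 hr1 n]
      exact g_norm_le hr0 hr1 hz.le n
  have hex := Real.exp_le_exp.mpr hsum
  have h8 : Real.exp (∑' n, Real.log ‖g z n‖) ^ 8 ≤
      Real.exp (∑' n, Real.log ‖g (-(r : ℂ)) n‖) ^ 8 :=
    pow_le_pow_left₀ (Real.exp_pos _).le hex 8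
  have h16 : (0 : ℝ) ≤ 16 * r := by linarith
  calc 16 * r * Real.exp (∑' n, Real.log ‖g z n‖) ^ 8
      ≤ 16 * r * Real.exp (∑' n, Real.log ‖g (-(r : ℂ)) n‖) ^ 8 :=
        mul_le_mul_of_nonneg_left h8 h16

end ModularJAux

/-- For `0 < r < 1`, the maximum of `|J|` on the circle `|z| = r` is attained at `z = -r`. -/
theorem modularJ_max_on_circle (r : ℝ) (hr0 : 0 < r) (hr1 : r < 1) :
    IsGreatest ((fun z : ℂ => ‖modularJ z‖) '' sphere (0 : ℂ) r)
      ‖modularJ (-(r : ℂ))‖ := by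
  constructor
  · refine ⟨-(r : ℂ), ?_, rfl⟩
    rw [mem_sphere_zero_iff_norm, norm_neg, Complex.norm_real, Real.norm_eq_abs,
      abs_of_pos hr0]
  · rintro y ⟨z, hz, rfl⟩
    rw [mem_sphere_zero_iff_norm] at hz
    exact ModularJAux.norm_le hr0 hr1 hz
end

section
/- Let h be analytic on the open unit disk U with |h(z)| < 1 for all z ∈ U, h(0) = 0, h(z) ≠ 0 for all 0 < |z| < 1, and suppose h'(0) = e^{-α} for some real α > 0. Then h is univalent (injective) on the disk |z| < ρ, where ρ = 1 + α − √((1+α)² − 1). -/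
open Metric Set Complex MeasureTheory



lemma aux_primitive {f : ℂ → ℂ} (hf : DifferentiableOn ℂ f (ball 0 1)) :
    ∃ F : ℂ → ℂ, F 0 = 0 ∧ ∀ z ∈ ball (0 : ℂ) 1, HasDerivAt F (f z) z := by
  refine ⟨fun z => ∫ t in (0:ℝ)..1, z * f ((t : ℂ) * z), by simp, ?_⟩
  intro z₀ hz₀
  rw [mem_ball_zero_iff] at hz₀
  set r : ℝ := (1 + ‖z₀‖) / 2 with hr_def
  have hr1 : r < 1 := by rw [hr_def]; linarith
  have hr0 : 0 < r := by rw [hr_def]; positivity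
  set ε : ℝ := (1 - ‖z₀‖) / 2 with hε_def
  have hε : 0 < ε := by rw [hε_def]; linarith
  have hball_sub : ∀ x ∈ ball z₀ ε, ‖x‖ ≤ r := by
    intro x hx
    rw [mem_ball, dist_eq_norm] at hx
    calc ‖x‖ = ‖z₀ + (x - z₀)‖ := by ring_nf
    _ ≤ ‖z₀‖ + ‖x - z₀‖ := norm_add_le _ _
    _ ≤ ‖z₀‖ + ε := by linarith [hx.le]
    _ = r := by rw [hε_def, hr_def]; ring
  have hcb_sub : closedBall (0:ℂ) r ⊆ ball 0 1 := by
    intro x hx; rw [mem_closedBall_zero_iff] at hx; rw [mem_ball_zero_iff]; linarith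
  have htx_mem : ∀ (t : ℝ), t ∈ Icc (0:ℝ) 1 → ∀ x : ℂ, ‖x‖ ≤ r → (t : ℂ) * x ∈ closedBall (0:ℂ) r := by
    intro t ht x hx
    rw [mem_closedBall_zero_iff, norm_mul, Complex.norm_real, Real.norm_eq_abs,
      _root_.abs_of_nonneg ht.1]
    nlinarith [norm_nonneg x, ht.2]
  have hfc : ContinuousOn f (ball 0 1) := hf.continuousOn
  have hfd' : DifferentiableOn ℂ (deriv f) (ball 0 1) :=
    ((hf.analyticOnNhd isOpen_ball).deriv).differentiableOn
  have hfc' : ContinuousOn (deriv f) (ball 0 1) := hfd'.continuousOn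
  obtain ⟨M1, hM1⟩ := (isCompact_closedBall (0:ℂ) r).exists_bound_of_continuousOn
    (hfc.mono hcb_sub)
  obtain ⟨M2, hM2⟩ := (isCompact_closedBall (0:ℂ) r).exists_bound_of_continuousOn
    (hfc'.mono hcb_sub)
  have hM1_0 : 0 ≤ M1 := le_trans (norm_nonneg _) (hM1 0 (mem_closedBall_self hr0.le))
  have hM2_0 : 0 ≤ M2 := le_trans (norm_nonneg _) (hM2 0 (mem_closedBall_self hr0.le))
  -- continuity in t of the integrand, for any fixed x with ‖x‖ ≤ r
  have hcont_t : ∀ x : ℂ, ‖x‖ ≤ r → ContinuousOn (fun t : ℝ => x * f ((t:ℂ) * x)) (Icc 0 1) := by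
    intro x hx
    apply ContinuousOn.mul continuousOn_const
    apply hfc.comp
    · exact (Complex.continuous_ofReal.mul continuous_const).continuousOn
    · intro t ht
      exact hcb_sub (htx_mem t ht x hx)
  have hcont_t' : ∀ x : ℂ, ‖x‖ ≤ r →
      ContinuousOn (fun t : ℝ => f ((t:ℂ) * x) + x * ((t:ℂ) * deriv f ((t:ℂ) * x))) (Icc 0 1) := by
    intro x hx
    have hmap : ∀ t ∈ Icc (0:ℝ) 1, (t:ℂ) * x ∈ ball (0:ℂ) 1 := fun t ht =>
      hcb_sub (htx_mem t ht x hx)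
    have hc1 : ContinuousOn (fun t : ℝ => (t:ℂ) * x) (Icc 0 1) :=
      (Complex.continuous_ofReal.mul continuous_const).continuousOn
    exact (hfc.comp hc1 hmap).add (continuousOn_const.mul
      ((Complex.continuous_ofReal.continuousOn).mul (hfc'.comp hc1 hmap)))
  have key := intervalIntegral.hasDerivAt_integral_of_dominated_loc_of_deriv_le
    (F := fun x t => x * f ((t:ℂ) * x))
    (F' := fun x t => f ((t:ℂ) * x) + x * ((t:ℂ) * deriv f ((t:ℂ) * x)))
    (bound := fun _ => M1 + M2) (μ := volume) (a := 0) (b := 1) (x₀ := z₀) (ball_mem_nhds z₀ hε)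
    ?_ ?_ ?_ ?_ ?_ ?_
  · obtain ⟨hint, hF⟩ := key
    -- now compute the integral via FTC
    have hz₀r : ‖z₀‖ ≤ r := by rw [hr_def]; linarith
    have hu : ∀ t ∈ uIcc (0:ℝ) 1,
        HasDerivAt (fun t : ℝ => (t:ℂ) * f ((t:ℂ) * z₀))
          (f ((t:ℂ) * z₀) + z₀ * ((t:ℂ) * deriv f ((t:ℂ) * z₀))) t := by
      intro t ht
      rw [uIcc_of_le (zero_le_one)] at ht
      have hmem : (t:ℂ) * z₀ ∈ ball (0:ℂ) 1 := hcb_sub (htx_mem t ht z₀ hz₀r)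
      have hdf : HasDerivAt f (deriv f ((t:ℂ) * z₀)) ((t:ℂ) * z₀) :=
        (hf.differentiableAt (isOpen_ball.mem_nhds hmem)).hasDerivAt
      have hofReal : HasDerivAt (fun t : ℝ => (t:ℂ)) 1 t := by
        exact ((hasDerivAt_id t).ofReal_comp).congr_deriv (by simp)
      have hmul : HasDerivAt (fun t : ℝ => (t:ℂ) * z₀) z₀ t := by
        simpa using hofReal.mul_const z₀
      have hcomp : HasDerivAt (fun t : ℝ => f ((t:ℂ) * z₀))
          (deriv f ((t:ℂ) * z₀) * z₀) t := HasDerivAt.comp t hdf hmul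
      have := hofReal.mul hcomp
      exact this.congr_deriv (by ring)
    have hint' : IntervalIntegrable
        (fun t : ℝ => f ((t:ℂ) * z₀) + z₀ * ((t:ℂ) * deriv f ((t:ℂ) * z₀))) volume 0 1 := by
      apply ContinuousOn.intervalIntegrable
      rw [uIcc_of_le (zero_le_one)]
      exact hcont_t' z₀ hz₀r
    have hFTC := intervalIntegral.integral_eq_sub_of_hasDerivAt hu hint'
    simp only [Complex.ofReal_one, Complex.ofReal_zero, one_mul, zero_mul] at hFTC
    rw [hFTC] at hF
    simpa using hF
  · filter_upwards [ball_mem_nhds z₀ hε] with x hx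
    have hxr : ‖x‖ ≤ r := hball_sub x hx
    apply ContinuousOn.aestronglyMeasurable _ measurableSet_uIoc
    rw [uIoc_of_le (zero_le_one)]
    exact (hcont_t x hxr).mono Ioc_subset_Icc_self
  · apply ContinuousOn.intervalIntegrable
    rw [uIcc_of_le (zero_le_one)]
    exact hcont_t z₀ (by rw [hr_def]; linarith)
  · apply ContinuousOn.aestronglyMeasurable _ measurableSet_uIoc
    rw [uIoc_of_le (zero_le_one)]
    exact (hcont_t' z₀ (by rw [hr_def]; linarith)).mono Ioc_subset_Icc_self
  · apply Filter.Eventually.of_forall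
    intro t ht x hx
    rw [uIoc_of_le (zero_le_one)] at ht
    have ht' : t ∈ Icc (0:ℝ) 1 := ⟨ht.1.le, ht.2⟩
    have hxr : ‖x‖ ≤ r := hball_sub x hx
    have hmem : (t:ℂ) * x ∈ closedBall (0:ℂ) r := htx_mem t ht' x hxr
    calc ‖f ((t:ℂ) * x) + x * ((t:ℂ) * deriv f ((t:ℂ) * x))‖
        ≤ ‖f ((t:ℂ) * x)‖ + ‖x * ((t:ℂ) * deriv f ((t:ℂ) * x))‖ := norm_add_le _ _
      _ ≤ M1 + M2 := by
          gcongr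
          · exact hM1 _ hmem
          · rw [norm_mul, norm_mul, Complex.norm_real, Real.norm_eq_abs, _root_.abs_of_nonneg ht.1.le]
            have h1 : ‖x‖ ≤ 1 := hxr.trans hr1.le
            have h2 : ‖deriv f ((t:ℂ) * x)‖ ≤ M2 := hM2 _ hmem
            calc ‖x‖ * (t * ‖deriv f ((t:ℂ) * x)‖) ≤ 1 * (1 * M2) := by
                  gcongr
                  · exact mul_nonneg ht.1.le (norm_nonneg _)
                  · exact ht.2
              _ = M2 := by ring
  · exact intervalIntegrable_const
  · apply Filter.Eventually.of_forall
    intro t ht x hx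
    rw [uIoc_of_le (zero_le_one)] at ht
    have ht' : t ∈ Icc (0:ℝ) 1 := ⟨ht.1.le, ht.2⟩
    have hxr : ‖x‖ ≤ r := hball_sub x hx
    have hmem : (t:ℂ) * x ∈ ball (0:ℂ) 1 := hcb_sub (htx_mem t ht' x hxr)
    have hdf : HasDerivAt f (deriv f ((t:ℂ) * x)) ((t:ℂ) * x) :=
      (hf.differentiableAt (isOpen_ball.mem_nhds hmem)).hasDerivAt
    have hmul : HasDerivAt (fun y : ℂ => (t:ℂ) * y) (t:ℂ) x := by
      simpa using (hasDerivAt_id x).const_mul (t:ℂ)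
    have hcomp : HasDerivAt (fun y : ℂ => f ((t:ℂ) * y)) (deriv f ((t:ℂ) * x) * (t:ℂ)) x :=
      HasDerivAt.comp x hdf hmul
    have := (hasDerivAt_id x).mul hcomp
    exact this.congr_deriv (by simp only [id_eq, one_mul]; ring)

private lemma normSq_mobius_identity (a z : ℂ) :
    Complex.normSq (1 + (starRingEnd ℂ) a * z) - Complex.normSq (z + a)
      = (1 - Complex.normSq a) * (1 - Complex.normSq z) := by
  simp only [Complex.normSq_apply, Complex.add_re, Complex.add_im, Complex.mul_re,
    Complex.mul_im, Complex.one_re, Complex.one_im, Complex.conj_re, Complex.conj_im]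
  ring

private lemma norm_lt_of_normSq_lt {w v : ℂ} (h : Complex.normSq w < Complex.normSq v) :
    ‖w‖ < ‖v‖ := by
  have := Real.sqrt_lt_sqrt (Complex.normSq_nonneg w) h
  simpa [Complex.norm_def] using this

private lemma mobius_den_ne {a z : ℂ} (ha : ‖a‖ < 1) (hz : ‖z‖ < 1) :
    1 + (starRingEnd ℂ) a * z ≠ 0 := by
  intro hc
  have h1 : (starRingEnd ℂ) a * z = -1 := by linear_combination hc
  have := congrArg norm h1
  rw [norm_mul, norm_neg, norm_one] at this
  have hca : ‖(starRingEnd ℂ) a‖ = ‖a‖ := RCLike.norm_conj a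
  nlinarith [norm_nonneg z, norm_nonneg a]

private lemma mobius_mapsTo {a : ℂ} (ha : ‖a‖ < 1) :
    MapsTo (fun z => (z + a) / (1 + (starRingEnd ℂ) a * z)) (ball (0:ℂ) 1) (ball (0:ℂ) 1) := by
  intro z hz
  rw [mem_ball_zero_iff] at hz ⊢
  have hden := mobius_den_ne ha hz
  have hkey := normSq_mobius_identity a z
  have hna : Complex.normSq a < 1 := by
    rw [← Complex.sq_norm]; nlinarith [norm_nonneg a]
  have hnz : Complex.normSq z < 1 := by
    rw [← Complex.sq_norm]; nlinarith [norm_nonneg z]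
  have hlt : Complex.normSq (z + a) < Complex.normSq (1 + (starRingEnd ℂ) a * z) := by
    nlinarith
  have := norm_lt_of_normSq_lt hlt
  rw [norm_div]
  rw [div_lt_one (lt_of_le_of_lt (norm_nonneg _) this)]
  exact this

/-- Schwarz–Pick lemma. -/
private lemma aux_pick {ψ : ℂ → ℂ} (hψ : DifferentiableOn ℂ ψ (ball 0 1))
    (hm : MapsTo ψ (ball (0:ℂ) 1) (ball (0:ℂ) 1)) {a dψ : ℂ} (ha : a ∈ ball (0:ℂ) 1)
    (hd : HasDerivAt ψ dψ a) :
    ‖dψ‖ * (1 - ‖a‖ ^ 2) ≤ 1 - ‖ψ a‖ ^ 2 := by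
  rw [mem_ball_zero_iff] at ha
  set b : ℂ := ψ a with hb_def
  have hb : ‖b‖ < 1 := by
    have := hm (mem_ball_zero_iff.mpr ha); rwa [mem_ball_zero_iff] at this
  set T : ℂ → ℂ := fun z => (z + a) / (1 + (starRingEnd ℂ) a * z) with hT_def
  set S : ℂ → ℂ := fun z => (z - b) / (1 - (starRingEnd ℂ) b * z) with hS_def
  have hnb : ‖(-b : ℂ)‖ < 1 := by rwa [norm_neg]
  have hSeq : S = fun z => (z + (-b)) / (1 + (starRingEnd ℂ) (-b) * z) := by
    funext z; rw [hS_def]; simp [sub_eq_add_neg, neg_mul]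
  -- differentiability on the ball
  have hTdiff : DifferentiableOn ℂ T (ball 0 1) := by
    apply DifferentiableOn.div
    · exact (differentiable_id.add_const a).differentiableOn
    · exact ((differentiable_id.const_mul _).const_add 1).differentiableOn
    · intro z hz; exact mobius_den_ne ha (mem_ball_zero_iff.mp hz)
  have hSdiff : DifferentiableOn ℂ S (ball 0 1) := by
    rw [hSeq]
    apply DifferentiableOn.div
    · exact (differentiable_id.add_const (-b)).differentiableOn
    · exact ((differentiable_id.const_mul _).const_add 1).differentiableOn
    · intro z hz; exact mobius_den_ne hnb (mem_ball_zero_iff.mp hz)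
  have hTm : MapsTo T (ball (0:ℂ) 1) (ball (0:ℂ) 1) := mobius_mapsTo ha
  have hSm : MapsTo S (ball (0:ℂ) 1) (ball (0:ℂ) 1) := by
    rw [hSeq]; exact mobius_mapsTo hnb
  set F : ℂ → ℂ := S ∘ ψ ∘ T with hF_def
  have hT0 : T 0 = a := by simp [hT_def]
  have hSb : S b = 0 := by simp [hS_def]
  have hF0 : F 0 = 0 := by simp [hF_def, hT0, ← hb_def, hSb]
  have hFdiff : DifferentiableOn ℂ F (ball 0 1) :=
    (hSdiff.comp (hψ.comp hTdiff hTm) (hm.comp hTm))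
  have hFm : MapsTo F (ball (0:ℂ) 1) (ball (0:ℂ) 1) := (hSm.comp hm).comp hTm
  -- derivative of T at 0
  have hden0 : (1 + (starRingEnd ℂ) a * (0:ℂ)) ≠ 0 := by simp
  have hTd : HasDerivAt T (1 - a * (starRingEnd ℂ) a) 0 := by
    have h1 : HasDerivAt (fun z : ℂ => z + a) 1 (0:ℂ) := (hasDerivAt_id 0).add_const a
    have h2 : HasDerivAt (fun z : ℂ => 1 + (starRingEnd ℂ) a * z) ((starRingEnd ℂ) a) (0:ℂ) := by
      simpa using ((hasDerivAt_id (0:ℂ)).const_mul ((starRingEnd ℂ) a)).const_add 1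
    have := h1.div h2 hden0
    exact this.congr_deriv (by simp)
  -- derivative of S at b
  have hdenb : (1 - (starRingEnd ℂ) b * b) ≠ 0 := by
    intro hc
    have hcc : (starRingEnd ℂ) b * b = 1 := by linear_combination -hc
    have h2 := congrArg norm hcc
    rw [norm_mul, norm_one, RCLike.norm_conj] at h2
    nlinarith [norm_nonneg b]
  have hSd : HasDerivAt S ((1 - (starRingEnd ℂ) b * b)⁻¹) b := by
    have h1 : HasDerivAt (fun z : ℂ => z - b) 1 b := (hasDerivAt_id b).sub_const b
    have h2 : HasDerivAt (fun z : ℂ => 1 - (starRingEnd ℂ) b * z) (-((starRingEnd ℂ) b)) b := by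
      simpa using ((hasDerivAt_id b).const_mul ((starRingEnd ℂ) b)).const_sub 1
    have := h1.div h2 hdenb
    exact this.congr_deriv (by rw [eq_comm]; field_simp; ring)
  -- chain rule
  have hin : HasDerivAt (ψ ∘ T) (dψ * (1 - a * (starRingEnd ℂ) a)) 0 := by
    apply HasDerivAt.comp
    · rw [hT0]; exact hd
    · exact hTd
  have hFd : HasDerivAt F ((1 - (starRingEnd ℂ) b * b)⁻¹ * (dψ * (1 - a * (starRingEnd ℂ) a))) 0 := by
    apply HasDerivAt.comp
    · show HasDerivAt S _ ((ψ ∘ T) 0); rw [Function.comp_apply, hT0, ← hb_def]; exact hSd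
    · exact hin
  -- Schwarz
  have hmaps' : MapsTo F (ball (0:ℂ) 1) (ball (F 0) 1) := by rw [hF0]; exact hFm
  have hSch := Complex.norm_deriv_le_div_of_mapsTo_ball hFdiff (hmaps'.mono_right ball_subset_closedBall) one_pos
  rw [hFd.deriv] at hSch
  -- translate norms
  have hnsb : Complex.normSq b = ‖b‖^2 := by rw [Complex.normSq_eq_norm_sq]
  have hnsa : Complex.normSq a = ‖a‖^2 := by rw [Complex.normSq_eq_norm_sq]
  have hb2 : (1 - (starRingEnd ℂ) b * b) = ((1 - ‖b‖^2 : ℝ) : ℂ) := by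
    rw [mul_comm, Complex.mul_conj, hnsb]; push_cast; ring
  have ha2 : (1 - a * (starRingEnd ℂ) a) = ((1 - ‖a‖^2 : ℝ) : ℂ) := by
    rw [Complex.mul_conj, hnsa]; push_cast; ring
  rw [hb2, ha2] at hSch
  have hbpos : (0:ℝ) < 1 - ‖b‖^2 := by nlinarith [norm_nonneg b]
  have hapos : (0:ℝ) < 1 - ‖a‖^2 := by nlinarith [norm_nonneg a]
  rw [norm_mul, norm_mul, norm_inv] at hSch
  rw [Complex.norm_real, Complex.norm_real, Real.norm_eq_abs, Real.norm_eq_abs,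
    abs_of_pos hbpos, abs_of_pos hapos] at hSch
  rw [inv_mul_le_iff₀ hbpos] at hSch
  calc ‖dψ‖ * (1 - ‖a‖^2) ≤ (1 - ‖b‖^2) * (1 / 1) := hSch
    _ = 1 - ‖ψ a‖^2 := by rw [hb_def]; ring

private lemma aux_quadratic {α r : ℝ} (hα : 0 < α) (hr0 : 0 ≤ r)
    (hr : r < 1 + α - Real.sqrt ((1 + α) ^ 2 - 1)) : 2 * α * r < (1 - r) ^ 2 := by
  set s : ℝ := Real.sqrt ((1 + α) ^ 2 - 1) with hs_def
  have hs0 : 0 ≤ s := Real.sqrt_nonneg _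
  have hs2 : s ^ 2 = (1 + α) ^ 2 - 1 := Real.sq_sqrt (by nlinarith)
  have hsα : α < s := by nlinarith
  have h1 : 0 < 1 + α - s - r := by linarith
  have h2 : 0 < 1 + α + s - r := by nlinarith
  nlinarith [mul_pos h1 h2]

private lemma aux_inj {c : ℝ} {L L' : ℂ → ℂ}
    (hder : ∀ w ∈ {w : ℂ | w.re < c}, HasDerivAt L (L' w) w)
    (hcont : ContinuousOn L' {w : ℂ | w.re < c})
    (hre : ∀ w ∈ {w : ℂ | w.re < c}, 0 < (L' w).re) :
    Set.InjOn L {w : ℂ | w.re < c} := by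
  set s : Set ℂ := {w : ℂ | w.re < c} with hs_def
  have hconv : Convex ℝ s := convex_halfSpace_re_lt c
  intro x hx y hy hxy
  by_contra hne
  set d : ℂ := y - x with hd_def
  have hd0 : d ≠ 0 := sub_ne_zero.mpr (Ne.symm hne)
  set γ : ℝ → ℂ := fun t => x + (t : ℂ) * d with hγ_def
  have hγc : Continuous γ := by
    apply continuous_const.add (Complex.continuous_ofReal.mul continuous_const)
  have hmem : ∀ t ∈ Icc (0:ℝ) 1, γ t ∈ s := by
    intro t ht
    have := hconv.add_smul_sub_mem hx hy ht
    simpa [hγ_def, Complex.real_smul] using this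
  have hγd : ∀ t : ℝ, HasDerivAt γ d t := by
    intro t
    have := (Complex.ofRealCLM.hasDerivAt (x := t)).mul_const d
    simpa [hγ_def] using this.const_add x
  have hu : ∀ t ∈ uIcc (0:ℝ) 1, HasDerivAt (fun t : ℝ => L (γ t)) (L' (γ t) * d) t := by
    intro t ht
    rw [uIcc_of_le zero_le_one] at ht
    exact HasDerivAt.comp t (hder (γ t) (hmem t ht)) (hγd t)
  have hcγ : ContinuousOn (fun t : ℝ => L' (γ t)) (Icc 0 1) :=
    hcont.comp hγc.continuousOn hmem
  have hint : IntervalIntegrable (fun t : ℝ => L' (γ t) * d) volume 0 1 := by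
    apply ContinuousOn.intervalIntegrable
    rw [uIcc_of_le zero_le_one]
    exact hcγ.mul continuousOn_const
  have hFTC := intervalIntegral.integral_eq_sub_of_hasDerivAt hu hint
  have hγ1 : γ 1 = y := by rw [hγ_def]; push_cast; rw [hd_def]; ring
  have hγ0 : γ 0 = x := by rw [hγ_def]; push_cast; ring
  rw [hγ1, hγ0, ← hxy, sub_self] at hFTC
  -- multiply by conj d and take real parts
  have h2 : (∫ t in (0:ℝ)..1, (starRingEnd ℂ) d * (L' (γ t) * d)) = 0 := by
    rw [intervalIntegral.integral_const_mul, hFTC, mul_zero]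
  have hint2 : IntervalIntegrable (fun t : ℝ => (starRingEnd ℂ) d * (L' (γ t) * d)) volume 0 1 :=
    (hint.const_mul _)
  have h3 : (∫ t in (0:ℝ)..1, (Complex.reCLM) ((starRingEnd ℂ) d * (L' (γ t) * d))) = 0 := by
    rw [ContinuousLinearMap.intervalIntegral_comp_comm _ hint2, h2, map_zero]
  have hrw : ∀ w : ℂ, ((starRingEnd ℂ) d * (L' w * d)).re = Complex.normSq d * (L' w).re := by
    intro w
    have : (starRingEnd ℂ) d * (L' w * d) = ((Complex.normSq d : ℝ) : ℂ) * L' w := by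
      rw [← Complex.mul_conj]; ring
    rw [this]
    simp [Complex.mul_re]
  simp only [Complex.reCLM_apply] at h3
  rw [show (fun t : ℝ => ((starRingEnd ℂ) d * (L' (γ t) * d)).re)
      = fun t : ℝ => Complex.normSq d * (L' (γ t)).re from funext fun t => hrw (γ t)] at h3
  have hpos : 0 < ∫ t in (0:ℝ)..1, Complex.normSq d * (L' (γ t)).re := by
    apply intervalIntegral.intervalIntegral_pos_of_pos_on
    · apply ContinuousOn.intervalIntegrable
      rw [uIcc_of_le zero_le_one]
      exact continuousOn_const.mul (Complex.continuous_re.comp_continuousOn hcγ)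
    · intro t ht
      have htm : t ∈ Icc (0:ℝ) 1 := ⟨ht.1.le, ht.2.le⟩
      exact mul_pos (Complex.normSq_pos.mpr hd0) (hre (γ t) (hmem t htm))
    · exact one_pos
  rw [h3] at hpos
  exact lt_irrefl 0 hpos
private lemma aux_numeric {a r t A B : ℝ} (ha : 0 < a) (hr0 : 0 ≤ r) (hr1 : r < 1)
    (ht0 : 0 ≤ t) (htr : t ≤ r) (hquad : 2 * a * r < (1 - r) ^ 2) (hA0 : 0 ≤ A)
    (hpick : A * (1 - r ^ 2) ≤ 1 - t ^ 2) (hB : 1 - t ≤ B) : 2 * a * r * A < B ^ 2 := by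
  have ht1 : t < 1 := lt_of_le_of_lt htr hr1
  have h1r2 : 0 < 1 - r ^ 2 := by nlinarith
  have c1 : 2 * a * r * A * (1 - r ^ 2) ≤ 2 * a * r * (1 - t ^ 2) := by
    have h2ar : 0 ≤ 2 * a * r := by positivity
    nlinarith [mul_le_mul_of_nonneg_left hpick h2ar]
  have s1 : 2 * a * r * (1 - t ^ 2) ≤ 2 * a * r * ((1 - t) * (1 + r)) := by
    nlinarith [mul_nonneg (mul_nonneg (mul_nonneg ha.le hr0)
      (by linarith : (0:ℝ) ≤ 1 - t)) (by linarith : (0:ℝ) ≤ r - t)]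
  have s2 : 2 * a * r * ((1 - t) * (1 + r)) < (1 - r) ^ 2 * ((1 - t) * (1 + r)) := by
    apply mul_lt_mul_of_pos_right hquad
    have h1 : 0 < 1 - t := by linarith
    have h2 : 0 < 1 + r := by linarith
    positivity
  have s3 : (1 - r) ^ 2 * ((1 - t) * (1 + r)) ≤ (1 - t) ^ 2 * (1 - r ^ 2) := by
    nlinarith [mul_nonneg (mul_nonneg (by linarith : (0:ℝ) ≤ 1 - r)
      (by linarith : (0:ℝ) ≤ 1 + r)) (by linarith : (0:ℝ) ≤ 1 - t)]
  have s4 : (1 - t) ^ 2 * (1 - r ^ 2) ≤ B ^ 2 * (1 - r ^ 2) := by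
    have hs : (1 - t) ^ 2 ≤ B ^ 2 := by nlinarith
    nlinarith [hs]
  have hfin : 2 * a * r * A * (1 - r ^ 2) < B ^ 2 * (1 - r ^ 2) := by linarith
  exact lt_of_mul_lt_mul_right hfin h1r2.le

/-- If `h` is analytic on the unit disk, bounded by `1`, vanishes only at `0`, and
`h'(0) = e^{-α}` with `α > 0`, then `h` is univalent on the disk of radius
`ρ = 1 + α - √((1+α)² - 1)`. -/
theorem univalence_radius_of_nonvanishing
    (h : ℂ → ℂ)
    (hh : DifferentiableOn ℂ h (ball (0 : ℂ) 1))
    (hbd : ∀ z ∈ ball (0 : ℂ) 1, ‖h z‖ < 1)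
    (hh0 : h 0 = 0)
    (hne : ∀ z ∈ ball (0 : ℂ) 1, z ≠ 0 → h z ≠ 0)
    (α : ℝ) (hα : 0 < α)
    (hderiv : deriv h 0 = (Real.exp (-α) : ℂ)) :
    Set.InjOn h (ball (0 : ℂ) (1 + α - Real.sqrt ((1 + α) ^ 2 - 1))) := by
  set ρ : ℝ := 1 + α - Real.sqrt ((1 + α) ^ 2 - 1) with hρ_def
  have hs0 : 0 ≤ Real.sqrt ((1 + α) ^ 2 - 1) := Real.sqrt_nonneg _
  have hs2 : (Real.sqrt ((1 + α) ^ 2 - 1)) ^ 2 = (1 + α) ^ 2 - 1 :=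
    Real.sq_sqrt (by nlinarith)
  have hρpos : 0 < ρ := by rw [hρ_def]; nlinarith
  have hρlt1 : ρ < 1 := by rw [hρ_def]; nlinarith
  have hρsub : ball (0:ℂ) ρ ⊆ ball 0 1 := ball_subset_ball hρlt1.le
  -- the function g = h z / z extended analytically
  set g : ℂ → ℂ := dslope h 0 with hg_def
  have hg0 : g 0 = ((Real.exp (-α) : ℝ) : ℂ) := by rw [hg_def, dslope_same]; exact hderiv
  have hgd : DifferentiableOn ℂ g (ball 0 1) :=
    (differentiableOn_dslope (ball_mem_nhds _ one_pos)).mpr hh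
  have hhzg : ∀ z ∈ ball (0:ℂ) 1, h z = z * g z := by
    intro z hz
    rcases eq_or_ne z 0 with rfl | hz0
    · simp [hh0]
    · rw [hg_def, dslope_of_ne _ hz0, slope_def_field, hh0]
      field_simp
      ring
  have hmapsh : MapsTo h (ball (0:ℂ) 1) (ball (h 0) 1) := by
    intro z hz; rw [hh0, mem_ball_zero_iff]; exact hbd z hz
  have hgle : ∀ z ∈ ball (0:ℂ) 1, ‖g z‖ ≤ 1 := by
    intro z hz
    have := Complex.norm_dslope_le_div_of_mapsTo_ball hh (hmapsh.mono_right ball_subset_closedBall) hz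
    rw [div_one] at this
    exact this
  have hexpα : ‖g 0‖ < 1 := by
    rw [hg0, Complex.norm_real, Real.norm_eq_abs, abs_of_pos (Real.exp_pos _)]
    have : Real.exp (-α) < Real.exp 0 := Real.exp_lt_exp.mpr (by linarith)
    rwa [Real.exp_zero] at this
  have hglt : ∀ z ∈ ball (0:ℂ) 1, ‖g z‖ < 1 := by
    intro z hz
    rcases lt_or_eq_of_le (hgle z hz) with hlt | heq1
    · exact hlt
    · exfalso
      have hmax : IsMaxOn (norm ∘ g) (ball 0 1) z := by
        intro w hw
        simp only [Function.comp_apply]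
        rw [heq1]
        exact hgle w hw
      have heqon := Complex.eqOn_of_isPreconnected_of_isMaxOn_norm
        (convex_ball (0:ℂ) 1).isPreconnected isOpen_ball hgd hz hmax
      have h00 := heqon (mem_ball_self one_pos)
      simp only [Function.const_apply] at h00
      rw [← h00] at heq1
      rw [heq1] at hexpα
      exact lt_irrefl 1 hexpα
  have hgne : ∀ z ∈ ball (0:ℂ) 1, g z ≠ 0 := by
    intro z hz
    rcases eq_or_ne z 0 with rfl | hz0
    · rw [hg0]
      exact_mod_cast Real.exp_ne_zero _
    · intro hc
      exact hne z hz hz0 (by rw [hhzg z hz, hc, mul_zero])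
  -- a primitive of g'/g
  obtain ⟨P, hP0, hPd⟩ := aux_primitive (f := fun z => deriv g z / g z)
    ((((hgd.analyticOnNhd isOpen_ball).deriv).differentiableOn).div hgd hgne)
  set φ : ℂ → ℂ := fun z => (α : ℂ) - P z with hφ_def
  set dφ : ℂ → ℂ := fun z => -(deriv g z / g z) with hdφ_def
  have hφd : ∀ z ∈ ball (0:ℂ) 1, HasDerivAt φ (dφ z) z := fun z hz => (hPd z hz).const_sub _
  have hφ0 : φ 0 = (α : ℂ) := by rw [hφ_def]; simp [hP0]
  -- g = exp (-φ)
  have hgexp : ∀ z ∈ ball (0:ℂ) 1, g z = Complex.exp (-φ z) := by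
    set q : ℂ → ℂ := fun z => g z * Complex.exp (-(P z)) with hq_def
    have hqd : ∀ z ∈ ball (0:ℂ) 1, HasDerivAt q 0 z := by
      intro z hz
      have hgz : HasDerivAt g (deriv g z) z :=
        (hgd.differentiableAt (isOpen_ball.mem_nhds hz)).hasDerivAt
      have hPz : HasDerivAt (fun z => -(P z)) (-(deriv g z / g z)) z := (hPd z hz).neg
      have hez : HasDerivAt (fun z => Complex.exp (-(P z)))
          (Complex.exp (-(P z)) * -(deriv g z / g z)) z :=
        HasDerivAt.comp z (Complex.hasDerivAt_exp _) hPz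
      have := hgz.mul hez
      have hgz0 := hgne z hz
      exact this.congr_deriv (by field_simp; ring)
    have hzero : (ContinuousLinearMap.smulRight (1 : ℂ →L[ℂ] ℂ) (0:ℂ)) = 0 := by
      ext x; simp
    have hconst : ∀ z ∈ ball (0:ℂ) 1, q z = q 0 := by
      intro z hz
      have hle := Convex.norm_image_sub_le_of_norm_hasFDerivWithin_le
        (f := q) (f' := fun _ => (0 : ℂ →L[ℂ] ℂ)) (C := 0) (s := ball (0:ℂ) 1)
        (fun w hw => by
          have := (hqd w hw).hasFDerivAt
          simpa using this.hasFDerivWithinAt)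
        (fun w _ => by simp) (convex_ball _ _) (mem_ball_self one_pos) hz
      rw [zero_mul] at hle
      have := norm_le_zero_iff.mp hle
      exact sub_eq_zero.mp this
    intro z hz
    have hq0 : q 0 = Complex.exp (-(α:ℂ)) := by
      rw [hq_def]
      simp only [hP0, neg_zero, Complex.exp_zero, mul_one, hg0]
      rw [Complex.ofReal_exp]
      congr 1
      push_cast
      ring
    have hexpP : Complex.exp (-(P z)) * Complex.exp (P z) = 1 := by
      rw [← Complex.exp_add]; simp
    have : g z = Complex.exp (-(α:ℂ)) * Complex.exp (P z) := by
      calc g z = g z * (Complex.exp (-(P z)) * Complex.exp (P z)) := by rw [hexpP, mul_one]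
        _ = q z * Complex.exp (P z) := by rw [hq_def, mul_assoc]
        _ = Complex.exp (-(α:ℂ)) * Complex.exp (P z) := by rw [hconst z hz, hq0]
    rw [this, ← Complex.exp_add]
    congr 1
    rw [hφ_def]
    ring
  have hφre : ∀ z ∈ ball (0:ℂ) 1, 0 < (φ z).re := by
    intro z hz
    have h1 : ‖g z‖ < 1 := hglt z hz
    rw [hgexp z hz, Complex.norm_exp] at h1
    by_contra hc
    push_neg at hc
    have : (1:ℝ) ≤ Real.exp ((-φ z).re) :=
      Real.one_le_exp (by simp only [Complex.neg_re]; linarith)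
    linarith
  -- the auxiliary map ψ
  set ψ : ℂ → ℂ := fun z => (φ z - (α:ℂ)) / (φ z + (α:ℂ)) with hψ_def
  have hden : ∀ z ∈ ball (0:ℂ) 1, φ z + (α:ℂ) ≠ 0 := by
    intro z hz hc
    have h1 := congrArg Complex.re hc
    simp only [Complex.add_re, Complex.ofReal_re, Complex.zero_re] at h1
    have := hφre z hz
    linarith
  have hψlt : ∀ z ∈ ball (0:ℂ) 1, ‖ψ z‖ < 1 := by
    intro z hz
    have hdpos : 0 < ‖φ z + (α:ℂ)‖ := norm_pos_iff.mpr (hden z hz)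
    rw [hψ_def]
    simp only
    rw [norm_div, div_lt_one hdpos]
    apply norm_lt_of_normSq_lt
    simp only [Complex.normSq_apply, Complex.sub_re, Complex.add_re, Complex.sub_im,
      Complex.add_im, Complex.ofReal_re, Complex.ofReal_im]
    nlinarith [hφre z hz]
  have hφdiff : DifferentiableOn ℂ φ (ball (0:ℂ) 1) :=
    fun z hz => ((hφd z hz).differentiableAt).differentiableWithinAt
  have hψd : DifferentiableOn ℂ ψ (ball 0 1) :=
    (hφdiff.sub_const _).div (hφdiff.add_const _) hden
  have hψ0 : ψ 0 = 0 := by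
    rw [hψ_def]
    simp [hφ0]
  have hψmaps : MapsTo ψ (ball (0:ℂ) 1) (ball (0:ℂ) 1) :=
    fun z hz => mem_ball_zero_iff.mpr (hψlt z hz)
  have hSchψ : ∀ z ∈ ball (0:ℂ) 1, ‖ψ z‖ ≤ ‖z‖ := by
    intro z hz
    have := Complex.norm_le_norm_of_mapsTo_ball hψd (hψmaps.mono_right ball_subset_closedBall) hψ0
      (mem_ball_zero_iff.mp hz)
    simpa using this
  -- the key estimate
  have hkey : ∀ z ∈ ball (0:ℂ) ρ, ‖z * dφ z‖ < 1 := by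
    intro z hzρ
    have hz : z ∈ ball (0:ℂ) 1 := hρsub hzρ
    have hr0 : 0 ≤ ‖z‖ := norm_nonneg z
    have hrρ : ‖z‖ < ρ := mem_ball_zero_iff.mp hzρ
    have hr1 : ‖z‖ < 1 := lt_trans hrρ hρlt1
    have hquad : 2 * α * ‖z‖ < (1 - ‖z‖) ^ 2 := by
      apply aux_quadratic hα hr0
      rw [hρ_def] at hrρ
      exact hrρ
    have ht0 : 0 ≤ ‖ψ z‖ := norm_nonneg _
    have htr : ‖ψ z‖ ≤ ‖z‖ := hSchψ z hz
    have ht1 : ‖ψ z‖ < 1 := lt_of_le_of_lt htr hr1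
    set dψz : ℂ := (dφ z * (φ z + (α:ℂ)) - (φ z - (α:ℂ)) * dφ z) / (φ z + (α:ℂ)) ^ 2
      with hdψ_def
    have hdψ : HasDerivAt ψ dψz z :=
      ((hφd z hz).sub_const _).div ((hφd z hz).add_const _) (hden z hz)
    have hpick := aux_pick hψd hψmaps hz hdψ
    have h1ψ : (1:ℂ) - ψ z ≠ 0 := by
      intro hc
      have he : ψ z = 1 := by linear_combination -hc
      have h2 := hψlt z hz
      rw [he, norm_one] at h2
      exact lt_irrefl 1 h2
    have hid : dφ z * ((1:ℂ) - ψ z) ^ 2 = 2 * (α:ℂ) * dψz := by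
      rw [hψ_def, hdψ_def]
      simp only
      field_simp [hden z hz]
      ring
    have hnorm_eq : ‖z * dφ z‖ * ‖(1:ℂ) - ψ z‖ ^ 2 = 2 * α * ‖z‖ * ‖dψz‖ := by
      calc ‖z * dφ z‖ * ‖(1:ℂ) - ψ z‖ ^ 2 = ‖z * (dφ z * ((1:ℂ) - ψ z) ^ 2)‖ := by
            simp only [norm_mul, norm_pow]; ring
        _ = ‖z * (2 * (α:ℂ) * dψz)‖ := by rw [hid]
        _ = 2 * α * ‖z‖ * ‖dψz‖ := by
            simp only [norm_mul, Complex.norm_real, Real.norm_eq_abs, abs_of_pos hα]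
            rw [show ‖(2:ℂ)‖ = 2 from by norm_num]
            ring
    have hB : 1 - ‖ψ z‖ ≤ ‖(1:ℂ) - ψ z‖ := by
      have := norm_sub_norm_le (1:ℂ) (ψ z)
      rw [norm_one] at this
      exact this
    have hA0 : 0 ≤ ‖dψz‖ := norm_nonneg _
    have hmain : 2 * α * ‖z‖ * ‖dψz‖ < ‖(1:ℂ) - ψ z‖ ^ 2 :=
      aux_numeric hα hr0 hr1 ht0 htr hquad hA0 hpick hB
    have hBpos : 0 < ‖(1:ℂ) - ψ z‖ := by linarith
    have hXB : ‖z * dφ z‖ * ‖(1:ℂ) - ψ z‖ ^ 2 < 1 * ‖(1:ℂ) - ψ z‖ ^ 2 := by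
      rw [one_mul, hnorm_eq]
      exact hmain
    exact lt_of_mul_lt_mul_right hXB (sq_nonneg _)
  -- the half-plane and the function L
  set sdom : Set ℂ := {w : ℂ | w.re < Real.log ρ} with hsdom_def
  have hexp_mem : ∀ w ∈ sdom, Complex.exp w ∈ ball (0:ℂ) ρ := by
    intro w hw
    rw [mem_ball_zero_iff, Complex.norm_exp]
    calc Real.exp w.re < Real.exp (Real.log ρ) := Real.exp_lt_exp.mpr hw
      _ = ρ := Real.exp_log hρpos
  set L : ℂ → ℂ := fun w => w - φ (Complex.exp w) with hL_def
  set L' : ℂ → ℂ := fun w => 1 - dφ (Complex.exp w) * Complex.exp w with hL'_def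
  have hLd : ∀ w ∈ sdom, HasDerivAt L (L' w) w := by
    intro w hw
    have hmem1 : Complex.exp w ∈ ball (0:ℂ) 1 := hρsub (hexp_mem w hw)
    have hc : HasDerivAt (φ ∘ Complex.exp) (dφ (Complex.exp w) * Complex.exp w) w :=
      HasDerivAt.comp (𝕜 := ℂ) (h := Complex.exp) (h₂ := φ) w (hφd _ hmem1)
        (Complex.hasDerivAt_exp w)
    have := (hasDerivAt_id w).sub hc
    exact this
  have hL're : ∀ w ∈ sdom, 0 < (L' w).re := by
    intro w hw
    have hk := hkey (Complex.exp w) (hexp_mem w hw)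
    rw [hL'_def]
    simp only [Complex.sub_re, Complex.one_re]
    have h1 : (dφ (Complex.exp w) * Complex.exp w).re ≤ ‖dφ (Complex.exp w) * Complex.exp w‖ := by
      exact Complex.re_le_norm _
    have h2 : ‖dφ (Complex.exp w) * Complex.exp w‖ = ‖Complex.exp w * dφ (Complex.exp w)‖ := by
      rw [mul_comm]
    linarith
  have hdφcont : ContinuousOn dφ (ball (0:ℂ) 1) := by
    have h1 : ContinuousOn (deriv g) (ball (0:ℂ) 1) :=
      ((hgd.analyticOnNhd isOpen_ball).deriv).continuousOn
    exact (h1.div hgd.continuousOn hgne).neg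
  have hL'cont : ContinuousOn L' sdom := by
    rw [hL'_def]
    apply ContinuousOn.sub continuousOn_const
    apply ContinuousOn.mul
    · exact hdφcont.comp Complex.continuous_exp.continuousOn
        (fun w hw => hρsub (hexp_mem w hw))
    · exact Complex.continuous_exp.continuousOn
  have hinj : Set.InjOn L sdom := aux_inj hLd hL'cont hL're
  -- conclusion
  intro z1 hz1 z2 hz2 heq
  have hz1' : z1 ∈ ball (0:ℂ) 1 := hρsub hz1
  have hz2' : z2 ∈ ball (0:ℂ) 1 := hρsub hz2
  rcases eq_or_ne z1 0 with rfl | h10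
  · by_contra h20
    apply hne z2 hz2' (Ne.symm h20)
    rw [← heq, hh0]
  rcases eq_or_ne z2 0 with rfl | h20
  · exfalso
    apply hne z1 hz1' h10
    rw [heq, hh0]
  have hlog : ∀ z : ℂ, z ∈ ball (0:ℂ) ρ → z ≠ 0 → Complex.log z ∈ sdom := by
    intro z hz hz0
    rw [hsdom_def]
    show (Complex.log z).re < Real.log ρ
    rw [Complex.log_re]
    apply Real.log_lt_log (norm_pos_iff.mpr hz0)
    exact mem_ball_zero_iff.mp hz
  have hw1 := hlog z1 hz1 h10
  have hw2 := hlog z2 hz2 h20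
  have hhexp : ∀ w ∈ sdom, h (Complex.exp w) = Complex.exp (L w) := by
    intro w hw
    have hm1 : Complex.exp w ∈ ball (0:ℂ) 1 := hρsub (hexp_mem w hw)
    rw [hhzg _ hm1, hgexp _ hm1, hL_def]
    simp only
    rw [Complex.exp_sub, Complex.exp_neg, div_eq_mul_inv]
  have heqL : Complex.exp (L (Complex.log z1)) = Complex.exp (L (Complex.log z2)) := by
    rw [← hhexp _ hw1, ← hhexp _ hw2, Complex.exp_log h10, Complex.exp_log h20]
    exact heq
  obtain ⟨n, hn⟩ := Complex.exp_eq_exp_iff_exists_int.mp heqL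
  set w1' : ℂ := Complex.log z1 - (n:ℂ) * (2 * (Real.pi:ℂ) * Complex.I) with hw1'_def
  have hexpw1' : Complex.exp w1' = z1 := by
    rw [hw1'_def, Complex.exp_sub, Complex.exp_int_mul_two_pi_mul_I, div_one,
      Complex.exp_log h10]
  have hre0 : ((n:ℂ) * (2 * (Real.pi:ℂ) * Complex.I)).re = 0 := by
    simp [Complex.mul_re]
  have hw1'mem : w1' ∈ sdom := by
    rw [hsdom_def]
    show w1'.re < Real.log ρ
    rw [hw1'_def, Complex.sub_re, hre0, sub_zero]
    exact hw1
  have e1 : L (Complex.log z1) = Complex.log z1 - φ z1 := by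
    rw [hL_def]
    simp only
    rw [Complex.exp_log h10]
  have e2 : L w1' = Complex.log z1 - (n:ℂ) * (2 * (Real.pi:ℂ) * Complex.I) - φ z1 := by
    rw [hL_def]
    simp only
    rw [hexpw1', hw1'_def]
  have hLw1' : L w1' = L (Complex.log z2) := by
    rw [e2]
    rw [e1] at hn
    linear_combination hn
  have hfinal := hinj hw1'mem hw2 hLw1'
  rw [← hexpw1', hfinal, Complex.exp_log h20]
end

section
/- Let h be analytic on the open unit disk U with |h(z)| < 1 for all z ∈ U, h(0) = 0, h(z) ≠ 0 for all 0 < |z| < 1, and suppose h'(0) = e^{-α} with 0 < α ≤ π/2 (equivalently e^{-π/2} ≤ h'(0) < 1). Then h is univalent (injective) on the disk |z| < e^{-π}. -/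
open Metric

open Complex MeasureTheory intervalIntegral in
/-- A holomorphic logarithm of a nonvanishing holomorphic function on the unit ball,
constructed by integrating the logarithmic derivative along radial segments. -/
lemma exists_log_on_ball (g : ℂ → ℂ)
    (hg : DifferentiableOn ℂ g (ball (0 : ℂ) 1))
    (hgne : ∀ z ∈ ball (0 : ℂ) 1, g z ≠ 0) :
    ∃ L : ℂ → ℂ, (∀ z ∈ ball (0 : ℂ) 1, Complex.exp (L z) = g z) ∧
      L 0 = Complex.log (g 0) ∧
      ∀ z ∈ ball (0 : ℂ) 1, HasDerivAt L (deriv g z / g z) z := by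
  have hball : IsOpen (ball (0 : ℂ) 1) := isOpen_ball
  set B := ball (0 : ℂ) 1 with hB
  have hgc : ContinuousOn g B := hg.continuousOn
  have hg' : ContinuousOn (deriv g) B := ((hg.analyticOnNhd hball).deriv).continuousOn
  set q : ℂ → ℂ := fun z => deriv g z / g z with hqdef
  have hqc : ContinuousOn q B := by
    exact hg'.div hgc hgne
  -- membership of radial points
  have hmem : ∀ z ∈ B, ∀ t : ℝ, |t| ≤ 1 → (t : ℂ) * z ∈ B := by
    intro z hz t ht
    simp only [hB, mem_ball, dist_zero_right] at hz ⊢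
    calc ‖(t : ℂ) * z‖ = |t| * ‖z‖ := by simp [norm_mul]
    _ ≤ 1 * ‖z‖ := by
        apply mul_le_mul_of_nonneg_right ht (norm_nonneg _)
    _ < 1 := by simpa using hz
  -- the candidate logarithm
  set L : ℂ → ℂ := fun z => Complex.log (g 0) + ∫ t in (0:ℝ)..(1:ℝ), q ((t : ℂ) * z) * z
    with hLdef
  have h0B : (0 : ℂ) ∈ B := by simp [hB]
  -- continuity of the integrand in t, for fixed z ∈ B
  have hFcont : ∀ z ∈ B, ∀ t : ℝ, |t| ≤ 1 →
      ContinuousAt (fun s : ℝ => q ((s : ℂ) * z) * z) t := by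
    intro z hz t ht
    have h1 : ContinuousAt (fun s : ℝ => (s : ℂ) * z) t :=
      (Complex.continuous_ofReal.mul continuous_const).continuousAt
    have h2 : ContinuousAt q ((fun s : ℝ => (s : ℂ) * z) t) :=
      hqc.continuousAt (hball.mem_nhds (hmem z hz t ht))
    have h3 := ContinuousAt.comp (f := fun s : ℝ => (s : ℂ) * z) (x := t) h2 h1
    exact h3.mul (continuousAt_const (y := z))
  have hFint : ∀ z ∈ B, ∀ t ∈ Set.Icc (0:ℝ) 1,
      IntervalIntegrable (fun s : ℝ => q ((s : ℂ) * z) * z) MeasureTheory.volume 0 t := by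
    intro z hz t ht
    apply ContinuousOn.intervalIntegrable
    intro s hs
    rw [Set.uIcc_of_le ht.1] at hs
    have hs' : s ∈ Set.Icc (0:ℝ) 1 := ⟨hs.1, hs.2.trans ht.2⟩
    exact ((hFcont z hz s (by rw [abs_le]; exact ⟨by linarith [hs'.1], hs'.2⟩)).continuousWithinAt)
  -- exp (L z) = g z
  have hLexp : ∀ z ∈ B, Complex.exp (L z) = g z := by
    intro z hz
    set f : ℝ → ℂ := fun s => q ((s : ℂ) * z) * z with hfdef
    set U : Set ℝ := (fun s : ℝ => (s : ℂ) * z) ⁻¹' B with hUdef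
    have hUopen : IsOpen U := hball.preimage (Complex.continuous_ofReal.mul continuous_const)
    have hfcU : ∀ x ∈ U, ContinuousAt f x := by
      intro x hx
      have h1 : ContinuousAt (fun s : ℝ => (s : ℂ) * z) x :=
        (Complex.continuous_ofReal.mul continuous_const).continuousAt
      have h2 : ContinuousAt q ((fun s : ℝ => (s : ℂ) * z) x) := hqc.continuousAt (hball.mem_nhds hx)
      have h3 := ContinuousAt.comp (f := fun s : ℝ => (s : ℂ) * z) (x := x) h2 h1
      exact h3.mul (continuousAt_const (y := z))
    set Int : ℝ → ℂ := fun t => ∫ s in (0:ℝ)..t, f s with hIdef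
    have habs : ∀ t : ℝ, t ∈ Set.Icc (0:ℝ) 1 → |t| ≤ 1 := by
      intro t ht; rw [abs_le]; exact ⟨by linarith [ht.1], ht.2⟩
    have hI : ∀ t ∈ Set.Icc (0:ℝ) 1, HasDerivAt Int (f t) t := by
      intro t ht
      exact intervalIntegral.integral_hasDerivAt_right (hFint z hz t ht)
        (ContinuousAt.stronglyMeasurableAtFilter hUopen hfcU t (hmem z hz t (habs t ht)))
        (hfcU t (hmem z hz t (habs t ht)))
    set u : ℝ → ℂ := fun t => Complex.exp (-(Int t)) * g ((t : ℂ) * z) with hudef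
    have hu : ∀ t ∈ Set.Icc (0:ℝ) 1, HasDerivAt u 0 t := by
      intro t ht
      have htB : (t : ℂ) * z ∈ B := hmem z hz t (habs t ht)
      have h2 : HasDerivAt (fun t : ℝ => -(Int t)) (-(f t)) t := (hI t ht).neg
      have h4 := h2.cexp
      have h5 : HasDerivAt (fun s : ℝ => (s : ℂ) * z) z t := by
        simpa using (Complex.ofRealCLM.hasDerivAt (x := t)).mul_const z
      have h7 : HasDerivAt g (deriv g ((t : ℂ) * z)) ((t : ℂ) * z) :=
        (hg.differentiableAt (hball.mem_nhds htB)).hasDerivAt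
      have h8 : HasDerivAt (fun t : ℝ => g ((t : ℂ) * z)) (z • deriv g ((t : ℂ) * z)) t := by
        exact HasDerivAt.scomp (x := t) h7 h5
      have h9 := h4.mul h8
      refine h9.congr_deriv ?_
      have hgne' := hgne _ htB
      simp only [smul_eq_mul, hfdef, hqdef]
      field_simp
      ring
    have hcont : ContinuousOn u (Set.Icc (0:ℝ) 1) :=
      fun t ht => ((hu t ht).continuousAt.continuousWithinAt)
    have hconst := constant_of_has_deriv_right_zero hcont
      (fun t ht => ((hu t ⟨ht.1, le_of_lt ht.2⟩).hasDerivWithinAt))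
    have h10 := hconst 1 (by norm_num)
    have h11 : Complex.exp (-(Int 1)) * g z = g 0 := by
      simpa [hudef, hIdef, intervalIntegral.integral_same] using h10
    have hIntdef : L z = Complex.log (g 0) + Int 1 := rfl
    rw [hIntdef, Complex.exp_add, Complex.exp_log (hgne 0 h0B)]
    rw [← h11, mul_comm (Complex.exp (-(Int 1))) (g z), mul_assoc, ← Complex.exp_add]
    simp
  have hL0 : L 0 = Complex.log (g 0) := by
    simp [hLdef]
  -- continuity of L
  have hLcont : ∀ z₀ ∈ B, ContinuousAt L z₀ := by
    intro z₀ hz₀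
    have hz₀n : ‖z₀‖ < 1 := by simpa [hB, mem_ball, dist_zero_right] using hz₀
    set ρ : ℝ := (1 + ‖z₀‖) / 2 with hρ
    have hρ1 : ρ < 1 := by rw [hρ]; linarith
    have hρ0 : 0 ≤ ρ := by positivity
    have hz₀ρ : ‖z₀‖ < ρ := by rw [hρ]; linarith [norm_nonneg z₀]
    have hsub : closedBall (0:ℂ) ρ ⊆ B := by
      intro w hw
      simp only [mem_closedBall, dist_zero_right] at hw
      simp only [hB, mem_ball, dist_zero_right]
      linarith
    obtain ⟨M, hM⟩ := (isCompact_closedBall (0:ℂ) ρ).exists_bound_of_continuousOn (hqc.mono hsub)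
    have hM0 : 0 ≤ M := (norm_nonneg (q 0)).trans (hM 0 (by simp [mem_closedBall, hρ0]))
    have hev : ∀ᶠ x in nhds z₀, x ∈ ball (0:ℂ) ρ :=
      isOpen_ball.mem_nhds (by simpa [mem_ball, dist_zero_right] using hz₀ρ)
    have hIoc : ∀ t : ℝ, t ∈ Set.uIoc (0:ℝ) 1 → (0 ≤ t ∧ t ≤ 1) := by
      intro t ht
      rw [Set.uIoc_of_le (by norm_num : (0:ℝ) ≤ 1)] at ht
      exact ⟨le_of_lt ht.1, ht.2⟩
    have hkey : ContinuousAt (fun x : ℂ => ∫ t in (0:ℝ)..(1:ℝ), q ((t : ℂ) * x) * x) z₀ := by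
      apply intervalIntegral.continuousAt_of_dominated_interval (bound := fun _ => M * ρ)
      · filter_upwards [hev] with x hx
        apply ContinuousOn.aestronglyMeasurable _ measurableSet_uIoc
        intro t ht
        obtain ⟨ht0, ht1⟩ := hIoc t ht
        have hxB : x ∈ B := ball_subset_ball (le_of_lt hρ1) hx
        exact (hFcont x hxB t (by rw [abs_le]; constructor <;> linarith)).continuousWithinAt
      · filter_upwards [hev] with x hx
        apply MeasureTheory.ae_of_all
        intro t ht
        obtain ⟨ht0, ht1⟩ := hIoc t ht
        have hxρ : ‖x‖ < ρ := by simpa [mem_ball, dist_zero_right] using hx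
        have htx : (t : ℂ) * x ∈ closedBall (0:ℂ) ρ := by
          simp only [mem_closedBall, dist_zero_right, norm_mul, Complex.norm_real]
          calc ‖(t:ℝ)‖ * ‖x‖ ≤ 1 * ρ := by
                apply mul_le_mul _ (le_of_lt hxρ) (norm_nonneg x) zero_le_one
                rw [Real.norm_eq_abs, abs_le]; constructor <;> linarith
          _ = ρ := one_mul ρ
        calc ‖q ((t : ℂ) * x) * x‖ = ‖q ((t : ℂ) * x)‖ * ‖x‖ := norm_mul _ _
        _ ≤ M * ρ := mul_le_mul (hM _ htx) (le_of_lt hxρ) (norm_nonneg x) hM0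
      · exact intervalIntegrable_const
      · apply MeasureTheory.ae_of_all
        intro t ht
        obtain ⟨ht0, ht1⟩ := hIoc t ht
        have htz₀ : (t : ℂ) * z₀ ∈ B := hmem z₀ hz₀ t (by rw [abs_le]; constructor <;> linarith)
        have h1 : ContinuousAt (fun x : ℂ => (t : ℂ) * x) z₀ :=
          (continuous_const.mul continuous_id).continuousAt
        have h2 : ContinuousAt q ((fun x : ℂ => (t : ℂ) * x) z₀) :=
          hqc.continuousAt (hball.mem_nhds htz₀)
        have h3 := ContinuousAt.comp (f := fun x : ℂ => (t : ℂ) * x) (x := z₀) h2 h1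
        exact h3.mul continuousAt_id
    exact (continuousAt_const (y := Complex.log (g 0))).add hkey
  -- differentiability of L
  have hLderiv : ∀ z₀ ∈ B, HasDerivAt L (q z₀) z₀ := by
    intro z₀ hz₀
    have hgz₀ : g z₀ ≠ 0 := hgne z₀ hz₀
    set k : ℂ → ℂ := fun z => Complex.log (g z / g z₀) + L z₀ with hk
    have hkd : HasDerivAt k (q z₀) z₀ := by
      have h1 : HasDerivAt (fun z => g z / g z₀) (deriv g z₀ / g z₀) z₀ :=
        ((hg.differentiableAt (hball.mem_nhds hz₀)).hasDerivAt).div_const _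
      have h2 : HasDerivAt Complex.log ((1:ℂ)⁻¹) ((fun z => g z / g z₀) z₀) := by
        have hd1 : (fun z => g z / g z₀) z₀ = 1 := div_self hgz₀
        rw [hd1]
        exact Complex.hasDerivAt_log Complex.one_mem_slitPlane
      have h3 := HasDerivAt.comp (x := z₀) h2 h1
      have h4 := h3.add_const (L z₀)
      simpa [hqdef, hk] using h4
    have hkc : ContinuousAt k z₀ := hkd.continuousAt
    have hLk0 : L z₀ - k z₀ = 0 := by simp [hk, div_self hgz₀, Complex.log_one]
    have heq : ∀ᶠ z in nhds z₀, L z = k z := by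
      have hc : ContinuousAt (fun z => L z - k z) z₀ := (hLcont z₀ hz₀).sub hkc
      have hc' : Filter.Tendsto (fun z => L z - k z) (nhds z₀) (nhds 0) := by
        rw [← hLk0]; exact hc
      have hev2 : ∀ᶠ z in nhds z₀, ‖L z - k z‖ < 6 := by
        have := Metric.tendsto_nhds.mp hc' 6 (by norm_num)
        simpa [dist_zero_right] using this
      filter_upwards [hball.mem_nhds hz₀, hev2] with z hzB hznorm
      have hgz : g z ≠ 0 := hgne z hzB
      have hexpk : Complex.exp (k z) = g z := by
        rw [hk]
        simp only []
        rw [Complex.exp_add, Complex.exp_log (div_ne_zero hgz hgz₀), hLexp z₀ hz₀]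
        field_simp
      have hee : Complex.exp (L z) = Complex.exp (k z) := by rw [hLexp z hzB, hexpk]
      obtain ⟨n, hn⟩ := Complex.exp_eq_exp_iff_exists_int.mp hee
      have hdiff : L z - k z = (n : ℂ) * (2 * Real.pi * Complex.I) := by
        rw [hn]; ring
      have hnz : n = 0 := by
        by_contra hne0
        have h1 : (1:ℝ) ≤ |(n:ℝ)| := by
          have := Int.one_le_abs (by exact_mod_cast hne0 : n ≠ 0)
          exact_mod_cast this
        have h2 : ‖L z - k z‖ = |(n:ℝ)| * (2 * Real.pi) := by
          rw [hdiff]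
          simp [norm_mul, abs_of_pos Real.pi_pos]
        have h3 : 2 * Real.pi ≤ |(n:ℝ)| * (2 * Real.pi) := by
          nlinarith [Real.pi_pos]
        have h4 : (6:ℝ) < 2 * Real.pi := by nlinarith [Real.pi_gt_three]
        rw [h2] at hznorm
        linarith
      have : L z - k z = 0 := by rw [hdiff, hnz]; simp
      exact sub_eq_zero.mp this
    exact hkd.congr_of_eventuallyEq heq
  exact ⟨L, hLexp, hL0, hLderiv⟩

set_option maxHeartbeats 1000000 in
/-- If `h` is analytic on the unit disk, bounded by `1`, vanishes only at `0`, and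
`h'(0) = e^{-α}` with `0 < α ≤ π/2`, then `h` is univalent on the disk `|z| < e^{-π}`. -/
theorem univalent_on_ball_exp_neg_pi
    (h : ℂ → ℂ)
    (hh : DifferentiableOn ℂ h (ball (0 : ℂ) 1))
    (hbd : ∀ z ∈ ball (0 : ℂ) 1, ‖h z‖ < 1)
    (hh0 : h 0 = 0)
    (hne : ∀ z ∈ ball (0 : ℂ) 1, z ≠ 0 → h z ≠ 0)
    (α : ℝ) (hα0 : 0 < α) (hα : α ≤ Real.pi / 2)
    (hderiv : deriv h 0 = (Real.exp (-α) : ℂ)) :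
    Set.InjOn h (ball (0 : ℂ) (Real.exp (-Real.pi))) := by
  have hball : IsOpen (ball (0 : ℂ) 1) := isOpen_ball
  set B := ball (0 : ℂ) 1 with hB
  set r : ℝ := Real.exp (-Real.pi) with hrdef
  have hrpos : 0 < r := Real.exp_pos _
  have hr05 : r < 0.05 := by
    have h1 : Real.exp (-Real.pi) < Real.exp (-3) := by
      apply Real.exp_lt_exp.mpr
      have := Real.pi_gt_three
      linarith
    have h2 : Real.exp (-3) < 0.05 := by
      have h3 : (2.7182818283 : ℝ) ^ (3:ℕ) ≤ Real.exp 1 ^ (3:ℕ) :=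
        pow_le_pow_left₀ (by norm_num) Real.exp_one_gt_d9.le 3
      have h4 : Real.exp 1 ^ (3:ℕ) = Real.exp 3 := by
        rw [← Real.exp_nat_mul]; norm_num
      have h5 : (20:ℝ) < Real.exp 3 := by
        rw [← h4]; nlinarith
      rw [Real.exp_neg]
      rw [inv_lt_iff_one_lt_mul₀ (Real.exp_pos 3)]
      nlinarith
    linarith
  have hr1 : r < 1 := by linarith
  have hα2 : α ≤ 1.575 := by
    have := Real.pi_lt_d2
    linarith
  -- the function g with h z = z * g z
  set g := dslope h 0 with hgdef
  have h0B : (0 : ℂ) ∈ B := by simp [hB]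
  have hgd : DifferentiableOn ℂ g B :=
    (Complex.differentiableOn_dslope (hball.mem_nhds h0B)).mpr hh
  have hg0 : g 0 = (Real.exp (-α) : ℂ) := by rw [hgdef, dslope_same]; exact hderiv
  have hg0norm : ‖g 0‖ < 1 := by
    have h1 : ‖((Real.exp (-α) : ℝ) : ℂ)‖ = Real.exp (-α) := by
      rw [Complex.norm_real, Real.norm_eq_abs, abs_of_pos (Real.exp_pos _)]
    rw [hg0, h1]
    exact Real.exp_lt_one_iff.mpr (by linarith)
  have hzg : ∀ z : ℂ, h z = z * g z := by
    intro z
    rcases eq_or_ne z 0 with rfl | hz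
    · simp [hh0]
    · rw [hgdef, dslope_of_ne _ hz, slope_def_field, hh0]
      field_simp
      ring
  have hgne : ∀ z ∈ B, g z ≠ 0 := by
    intro z hz
    rcases eq_or_ne z 0 with rfl | hz0
    · rw [hg0]; exact_mod_cast Complex.ofReal_ne_zero.mpr (Real.exp_pos _).ne'
    · intro hzero
      exact hne z hz hz0 (by rw [hzg z, hzero, mul_zero])
  have hmapsh : Set.MapsTo h B (ball (h 0) 1) := by
    intro z hz
    rw [hh0]
    simpa [mem_ball, dist_zero_right] using hbd z hz
  have hgle : ∀ z ∈ B, ‖g z‖ ≤ 1 := by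
    intro z hz
    have := Complex.norm_dslope_le_div_of_mapsTo_ball hh (hmapsh.mono_right ball_subset_closedBall) hz
    simpa using this
  have hglt : ∀ z ∈ B, ‖g z‖ < 1 := by
    intro z hz
    rcases lt_or_ge ‖g z‖ 1 with hlt | hge
    · exact hlt
    · exfalso
      have hmax : IsMaxOn (norm ∘ g) B z := by
        intro w hw
        simp only [Function.comp_apply]
        exact (hgle w hw).trans hge
      have := Complex.norm_eqOn_of_isPreconnected_of_isMaxOn
        (convex_ball (0:ℂ) 1).isPreconnected hball hgd hz hmax h0B
      simp only [Function.comp_apply, Function.const_apply] at this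
      rw [this] at hg0norm
      linarith [hge.trans_lt hg0norm]
  -- the logarithm
  obtain ⟨L, hLexp, hL0, hLq⟩ := exists_log_on_ball g hgd hgne
  have hL0val : L 0 = ((-α : ℝ) : ℂ) := by
    rw [hL0, hg0, ← Complex.ofReal_log (Real.exp_pos _).le, Real.log_exp]
  have hLre : ∀ z ∈ B, (L z).re < 0 := by
    intro z hz
    have h1 : ‖Complex.exp (L z)‖ < 1 := by rw [hLexp z hz]; exact hglt z hz
    have h2 : ‖Complex.exp (L z)‖ = Real.exp ((L z).re) := Complex.norm_exp _
    rw [h2] at h1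
    exact Real.exp_lt_one_iff.mp h1
  -- φ maps into the right half plane, φ 0 = α
  set φ : ℂ → ℂ := fun z => -(L z) with hφdef
  have hφre : ∀ z ∈ B, 0 < (φ z).re := by
    intro z hz
    have := hLre z hz
    simp only [hφdef, Complex.neg_re]
    linarith
  have hφ0 : φ 0 = ((α : ℝ) : ℂ) := by
    simp [hφdef, hL0val]
  have hφd : ∀ z ∈ B, HasDerivAt φ (-(deriv g z / g z)) z := fun z hz => (hLq z hz).neg
  have hden : ∀ z ∈ B, φ z + (α : ℂ) ≠ 0 := by
    intro z hz H
    have h1 : (φ z + (α:ℂ)).re = 0 := by rw [H]; simp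
    rw [Complex.add_re, Complex.ofReal_re] at h1
    have := hφre z hz
    linarith
  -- the Schwarz map ψ
  set ψ : ℂ → ℂ := fun z => (φ z - (α:ℂ)) / (φ z + (α:ℂ)) with hψdef
  have hψlt : ∀ z ∈ B, ‖ψ z‖ < 1 := by
    intro z hz
    rw [hψdef]
    simp only []
    rw [norm_div, div_lt_one (norm_pos_iff.mpr (hden z hz))]
    have h2 : ‖φ z - (α:ℂ)‖ ^ 2 < ‖φ z + (α:ℂ)‖ ^ 2 := by
      rw [Complex.sq_norm, Complex.sq_norm]
      simp only [Complex.normSq_apply, Complex.sub_re, Complex.add_re, Complex.sub_im,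
        Complex.add_im, Complex.ofReal_re, Complex.ofReal_im]
      nlinarith [hφre z hz]
    exact lt_of_pow_lt_pow_left₀ 2 (norm_nonneg _) h2
  have hψ0 : ψ 0 = 0 := by
    rw [hψdef]; simp only []; rw [hφ0]; simp
  have hψd : ∀ z ∈ B, HasDerivAt ψ
      ((-(deriv g z / g z)) * (2*α) / (φ z + (α:ℂ))^2) z := by
    intro z hz
    have h1 : HasDerivAt (fun w => φ w - (α:ℂ)) (-(deriv g z / g z)) z :=
      (hφd z hz).sub_const _
    have h2 : HasDerivAt (fun w => φ w + (α:ℂ)) (-(deriv g z / g z)) z :=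
      (hφd z hz).add_const _
    have h3 := h1.div h2 (hden z hz)
    have h4 : (-(deriv g z / g z) * (φ z + (α:ℂ)) - (φ z - (α:ℂ)) * -(deriv g z / g z))
        = -(deriv g z / g z) * (2*(α:ℂ)) := by ring
    rw [h4] at h3
    exact h3
  have hψdiff : DifferentiableOn ℂ ψ B :=
    fun z hz => ((hψd z hz).differentiableAt).differentiableWithinAt
  -- Schwarz lemma for ψ
  have hψle : ∀ z ∈ B, ‖ψ z‖ ≤ ‖z‖ := by
    intro z hz
    have hmaps : Set.MapsTo ψ B (ball (ψ 0) 1) := by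
      intro w hw
      rw [hψ0]
      simpa [mem_ball, dist_zero_right] using hψlt w hw
    have := Complex.dist_le_div_mul_dist_of_mapsTo_ball hψdiff (hmaps.mono_right ball_subset_closedBall) hz
    simpa [dist_zero_right, hψ0] using this
  -- bound on φ z - α
  have hφsub : ∀ z ∈ B, ‖φ z - (α:ℂ)‖ * (1 - ‖z‖) ≤ 2*α*‖z‖ := by
    intro z hz
    have hfac : φ z - (α:ℂ) = ψ z * (φ z + (α:ℂ)) := by
      rw [hψdef]; simp only []
      rw [div_mul_cancel₀ _ (hden z hz)]
    have h1 : ‖φ z - (α:ℂ)‖ ≤ ‖z‖ * (‖φ z - (α:ℂ)‖ + 2*α) := by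
      have h2 : ‖φ z + (α:ℂ)‖ ≤ ‖φ z - (α:ℂ)‖ + 2*α := by
        have h3 : φ z + (α:ℂ) = (φ z - (α:ℂ)) + ((2*α : ℝ) : ℂ) := by
          push_cast; ring
        rw [h3]
        refine (norm_add_le _ _).trans ?_
        rw [Complex.norm_real, Real.norm_eq_abs, abs_of_pos (by linarith)]
      have h4 := hψle z hz
      have h5 : ‖ψ z * (φ z + (α:ℂ))‖ ≤ ‖z‖ * (‖φ z - (α:ℂ)‖ + 2*α) := by
        rw [norm_mul]
        exact mul_le_mul h4 h2 (norm_nonneg _) (norm_nonneg _)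
      rw [← hfac] at h5
      exact h5
    nlinarith [norm_nonneg (φ z - (α:ℂ)), norm_nonneg z]
  -- key estimate: h has derivative with positive real part on ball 0 r
  have hmain : ∀ w ∈ ball (0:ℂ) r,
      HasDerivAt h (Complex.exp (L w) + w * (Complex.exp (L w) * (deriv g w / g w))) w ∧
      0 < (Complex.exp (L w) + w * (Complex.exp (L w) * (deriv g w / g w))).re := by
    intro w hw
    have hwr : ‖w‖ < r := by simpa [mem_ball, dist_zero_right] using hw
    have hwB : w ∈ B := by
      simp only [hB, mem_ball, dist_zero_right]; linarith
    set q : ℂ := deriv g w / g w with hq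
    have hgw : HasDerivAt g (Complex.exp (L w) * q) w := by
      have h1 : HasDerivAt (fun z => Complex.exp (L z)) (Complex.exp (L w) * q) w :=
        (hLq w hwB).cexp
      apply h1.congr_of_eventuallyEq
      filter_upwards [hball.mem_nhds hwB] with z hzB
      exact (hLexp z hzB).symm
    have hhw : HasDerivAt h (Complex.exp (L w) + w * (Complex.exp (L w) * q)) w := by
      have h2 : HasDerivAt (fun z : ℂ => z * g z) (1 * g w + w * (Complex.exp (L w) * q)) w :=
        (hasDerivAt_id w).mul hgw
      have h3 : h = fun z : ℂ => z * g z := funext hzg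
      rw [h3]
      convert h2 using 1
      rw [hLexp w hwB]
      ring
    refine ⟨hhw, ?_⟩
    -- bound on the imaginary part
    have hφw : ‖φ w - (α:ℂ)‖ * (1 - r) ≤ 2*α*r := by
      have h4 := hφsub w hwB
      nlinarith [norm_nonneg (φ w - (α:ℂ)), norm_nonneg w, hα0]
    have him : |(L w).im| ≤ 0.17 := by
      have h1 : (L w).im = -((φ w - (α:ℂ)).im) := by
        simp [hφdef]
      have h2 : |(φ w - (α:ℂ)).im| ≤ ‖φ w - (α:ℂ)‖ := Complex.abs_im_le_norm _
      have h5 : ‖φ w - (α:ℂ)‖ ≤ 0.17 := by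
        nlinarith [norm_nonneg (φ w - (α:ℂ))]
      rw [h1, abs_neg]
      linarith [h2.trans h5]
    -- bound on the derivative of ψ at w
    have hδ : (0:ℝ) < 1 - r := by linarith
    have hsub2 : ball w (1-r) ⊆ B := by
      intro x hx
      rw [mem_ball] at hx
      simp only [hB, mem_ball]
      calc dist x 0 ≤ dist x w + dist w 0 := dist_triangle _ _ _
      _ < (1-r) + r := by
          rw [dist_zero_right]
          exact add_lt_add hx hwr
      _ = 1 := by ring
    have hmaps2 : Set.MapsTo ψ (ball w (1-r)) (ball (ψ w) 2) := by
      intro x hx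
      have hxB : x ∈ B := hsub2 hx
      rw [mem_ball]
      calc dist (ψ x) (ψ w) ≤ ‖ψ x‖ + ‖ψ w‖ := dist_le_norm_add_norm _ _
      _ < 1 + 1 := add_lt_add (hψlt x hxB) (hψlt w hwB)
      _ = 2 := by ring
    have hdψ : ‖deriv ψ w‖ ≤ 2 / (1-r) :=
      Complex.norm_deriv_le_div_of_mapsTo_ball (hψdiff.mono hsub2) (hmaps2.mono_right ball_subset_closedBall) hδ
    have hψw : deriv ψ w = (-(deriv g w / g w) * (2*(α:ℂ))) / (φ w + (α:ℂ))^2 :=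
      (hψd w hwB).deriv
    have hα0' : ((α:ℝ) : ℂ) ≠ 0 := Complex.ofReal_ne_zero.mpr hα0.ne'
    have hd2 : (φ w + (α:ℂ))^2 ≠ 0 := pow_ne_zero _ (hden w hwB)
    have hstep : deriv ψ w * (φ w + (α:ℂ))^2 = -q * (2*(α:ℂ)) := by
      rw [hψw, div_mul_cancel₀ _ hd2, hq]
    have hnα : ‖(2*(α:ℂ))‖ = 2*α := by
      rw [show (2*(α:ℂ)) = (((2*α : ℝ)):ℂ) from by push_cast; ring, Complex.norm_real,
        Real.norm_eq_abs, abs_of_pos (by linarith)]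
    have hq2 : ‖deriv ψ w‖ * ‖φ w + (α:ℂ)‖^2 = ‖q‖ * (2*α) := by
      have hcg := congrArg norm hstep
      rwa [norm_mul, norm_pow, norm_mul, norm_neg, hnα] at hcg
    have hd1 : ‖deriv ψ w‖ * (1-r) ≤ 2 := by
      rw [div_eq_mul_inv] at hdψ
      calc ‖deriv ψ w‖ * (1-r) ≤ (2 * (1-r)⁻¹) * (1-r) := by
            apply mul_le_mul_of_nonneg_right hdψ (le_of_lt hδ)
      _ = 2 := by field_simp
    have hd3 : ‖φ w + (α:ℂ)‖ * (1-r) ≤ 2*α := by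
      have h2' : ‖φ w + (α:ℂ)‖ ≤ ‖φ w - (α:ℂ)‖ + 2*α := by
        have h3' : φ w + (α:ℂ) = (φ w - (α:ℂ)) + ((2*α : ℝ) : ℂ) := by push_cast; ring
        rw [h3']
        refine (norm_add_le _ _).trans ?_
        rw [Complex.norm_real, Real.norm_eq_abs, abs_of_pos (by linarith)]
      nlinarith [norm_nonneg (φ w - (α:ℂ)), norm_nonneg (φ w + (α:ℂ))]
    have hqnorm : ‖q‖ * (2*α) * (1-r)^3 ≤ 8*α^2 := by
      rw [← hq2]
      calc ‖deriv ψ w‖ * ‖φ w + (α:ℂ)‖^2 * (1-r)^3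
          = (‖deriv ψ w‖*(1-r)) * (‖φ w + (α:ℂ)‖*(1-r))^2 := by ring
      _ ≤ 2 * (2*α)^2 :=
          mul_le_mul hd1 (pow_le_pow_left₀ (by positivity) hd3 2) (by positivity) (by norm_num)
      _ = 8*α^2 := by ring
    -- final numeric bound on ‖w‖ * ‖q‖
    have hcube : (0.857:ℝ) ≤ (1-r)^3 := by
      have h95 : (0.95:ℝ) ≤ 1 - r := by linarith
      calc (0.857:ℝ) ≤ 0.95^3 := by norm_num
      _ ≤ (1-r)^3 := pow_le_pow_left₀ (by norm_num) h95 3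
    have e1 : ‖q‖ * (2*α) * 0.857 ≤ 8*α^2 := by
      have h1 : ‖q‖ * (2*α) * 0.857 ≤ ‖q‖ * (2*α) * (1-r)^3 :=
        mul_le_mul_of_nonneg_left hcube (by positivity)
      linarith [hqnorm]
    have e3 : ‖q‖ ≤ 4.67 * α := by
      nlinarith [norm_nonneg q, hα0, mul_pos hα0 hα0]
    have hQ7 : ‖q‖ ≤ 7.36 := by nlinarith [hα0]
    have hS : ‖w‖ * ‖q‖ ≤ 0.37 := by
      have h1 : ‖w‖ * ‖q‖ ≤ 0.05 * 7.36 :=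
        mul_le_mul (by linarith) hQ7 (norm_nonneg q) (by norm_num)
      linarith
    -- cosine bound
    have hcos : (0.98:ℝ) ≤ Real.cos ((L w).im) := by
      have hc1 := Real.one_sub_sq_div_two_le_cos (x := (L w).im)
      have hc2 : ((L w).im)^2 ≤ 0.17^2 := by
        rw [← sq_abs]
        nlinarith [abs_nonneg ((L w).im)]
      nlinarith
    -- conclude
    have hre1 : (Complex.exp (L w)).re = Real.exp ((L w).re) * Real.cos ((L w).im) :=
      Complex.exp_re _
    have habs : ‖Complex.exp (L w)‖ = Real.exp ((L w).re) := Complex.norm_exp _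
    have hre2 : |(w * (Complex.exp (L w) * q)).re| ≤ ‖w‖ * (Real.exp ((L w).re) * ‖q‖) := by
      calc |(w * (Complex.exp (L w) * q)).re| ≤ ‖w * (Complex.exp (L w) * q)‖ :=
            Complex.abs_re_le_norm _
      _ = ‖w‖ * (‖Complex.exp (L w)‖ * ‖q‖) := by rw [norm_mul, norm_mul]
      _ = ‖w‖ * (Real.exp ((L w).re) * ‖q‖) := by rw [habs]
    rw [Complex.add_re, hre1]
    have hexp_pos := Real.exp_pos ((L w).re)
    have hre3 := (abs_le.mp hre2).1
    nlinarith [mul_nonneg (norm_nonneg w) (norm_nonneg q)]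
  -- injectivity
  intro z1 hz1 z2 hz2 he
  by_contra hne12
  have hz1' : ‖z1‖ < r := by simpa [mem_ball, dist_zero_right] using hz1
  have hz2' : ‖z2‖ < r := by simpa [mem_ball, dist_zero_right] using hz2
  set u : ℂ := z1 - z2 with hu
  have hu0 : u ≠ 0 := sub_ne_zero.mpr hne12
  set γ : ℝ → ℂ := fun t => z2 + (t:ℂ) * u with hγ
  have hγmem : ∀ t ∈ Set.Icc (0:ℝ) 1, γ t ∈ ball (0:ℂ) r := by
    intro t ht
    have h1 : γ t = ((1 - t : ℝ) : ℂ) * z2 + ((t:ℝ) : ℂ) * z1 := by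
      rw [hγ, hu]; push_cast; ring
    rw [mem_ball, dist_zero_right, h1]
    calc ‖((1 - t : ℝ) : ℂ) * z2 + ((t:ℝ) : ℂ) * z1‖
        ≤ ‖((1 - t : ℝ) : ℂ) * z2‖ + ‖((t:ℝ) : ℂ) * z1‖ := norm_add_le _ _
    _ = (1-t) * ‖z2‖ + t * ‖z1‖ := by
        rw [norm_mul, norm_mul, Complex.norm_real, Complex.norm_real,
          Real.norm_eq_abs, Real.norm_eq_abs, abs_of_nonneg (by linarith [ht.2] : (0:ℝ) ≤ 1 - t),
          abs_of_nonneg ht.1]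
    _ < r := by
        rcases le_total ‖z2‖ ‖z1‖ with hc | hc
        · nlinarith [mul_nonneg (by linarith [ht.2] : (0:ℝ) ≤ 1 - t) (sub_nonneg.mpr hc)]
        · nlinarith [mul_nonneg ht.1 (sub_nonneg.mpr hc)]
  set F : ℝ → ℝ := fun t => ((starRingEnd ℂ) u * h (γ t)).re with hF
  have hFd : ∀ t ∈ Set.Icc (0:ℝ) 1, HasDerivAt F
      (Complex.normSq u * (Complex.exp (L (γ t)) + γ t * (Complex.exp (L (γ t)) *
        (deriv g (γ t) / g (γ t)))).re) t := by
    intro t ht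
    obtain ⟨hDw, _⟩ := hmain (γ t) (hγmem t ht)
    have hγd : HasDerivAt γ u t := by
      have h1 : HasDerivAt (fun s : ℝ => ((s:ℝ):ℂ)) 1 t := by
        simpa using (hasDerivAt_id t).ofReal_comp
      have h2 := (h1.mul_const u).const_add z2
      simpa [hγ] using h2
    have hcomp := HasDerivAt.scomp (x := t) hDw hγd
    have hmul := hcomp.const_mul ((starRingEnd ℂ) u)
    have hre := (Complex.reCLM.hasFDerivAt).comp_hasDerivAt t hmul
    have hgoal : Complex.reCLM ((starRingEnd ℂ) u * u • (Complex.exp (L (γ t)) + γ t *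
        (Complex.exp (L (γ t)) * (deriv g (γ t) / g (γ t)))))
        = Complex.normSq u * (Complex.exp (L (γ t)) + γ t * (Complex.exp (L (γ t)) *
        (deriv g (γ t) / g (γ t)))).re := by
      rw [smul_eq_mul, ← mul_assoc, mul_comm ((starRingEnd ℂ) u) u, Complex.mul_conj]
      simp [Complex.mul_re, Complex.ofReal_re, Complex.ofReal_im]
    rw [← hgoal]
    exact hre
  have hFmono : StrictMonoOn F (Set.Icc (0:ℝ) 1) := by
    apply strictMonoOn_of_deriv_pos (convex_Icc 0 1)
    · intro t ht
      exact ((hFd t ht).continuousAt).continuousWithinAt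
    · intro t ht
      rw [interior_Icc] at ht
      have ht' : t ∈ Set.Icc (0:ℝ) 1 := ⟨le_of_lt ht.1, le_of_lt ht.2⟩
      rw [(hFd t ht').deriv]
      obtain ⟨_, hpos⟩ := hmain (γ t) (hγmem t ht')
      exact mul_pos (Complex.normSq_pos.mpr hu0) hpos
  have hlt := hFmono (Set.left_mem_Icc.mpr zero_le_one) (Set.right_mem_Icc.mpr zero_le_one)
    zero_lt_one
  have hγ0 : γ 0 = z2 := by simp [hγ]
  have hγ1 : γ 1 = z1 := by rw [hγ, hu]; push_cast; ring
  rw [hF] at hlt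
  simp only [hγ0, hγ1, he] at hlt
  exact lt_irrefl _ hlt
end

section
/- (Bohr's theorem) Let f(z) = ∑_{n≥0} a_n z^n be analytic on the open unit disk U with |f(z)| < 1 for all z ∈ U. Then for every z with |z| ≤ 1/3, one has ∑_{n≥0} |a_n z^n| ≤ 1. -/
open Metric MeasureTheory Complex Real Set

-- orthogonality
lemma bohr_orth (m : ℤ) :
    ∫ θ in Ioc (0:ℝ) (2*π), Complex.exp (m * θ * I)
      = if m = 0 then (2*π : ℂ) else 0 := by
  rcases eq_or_ne m 0 with hm | hm
  · simp [hm, Real.pi_nonneg, mul_nonneg]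
  · rw [if_neg hm]
    have h1 : ∫ θ in Ioc (0:ℝ) (2*π), Complex.exp (m * θ * I)
        = ∫ θ in (0:ℝ)..(2*π), Complex.exp ((m * I) * θ) := by
      rw [intervalIntegral.integral_of_le (by positivity)]
      congr 1; ext θ; ring_nf
    rw [h1, integral_exp_mul_complex (by simpa using hm)]
    push_cast
    have : Complex.exp ((m*I) * (2*π)) = 1 := by
      rw [show ((m:ℂ)*I) * (2*(π:ℂ)) = m * (2*(π:ℂ)*I) by ring,
        Complex.exp_int_mul_two_pi_mul_I]
    simp [this]

-- summability of coefficients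
lemma bohr_summable (f : ℂ → ℂ) (a : ℕ → ℂ)
    (ha : ∀ z ∈ ball (0 : ℂ) 1, HasSum (fun n : ℕ => a n * z ^ n) (f z))
    (r : ℝ) (hr0 : 0 ≤ r) (hr1 : r < 1) :
    Summable (fun k : ℕ => ‖a k‖ * r ^ k) := by
  obtain ⟨ρ, hrρ, hρ1⟩ : ∃ ρ, r < ρ ∧ ρ < 1 := ⟨(1 + r) / 2, by linarith, by linarith⟩
  have hρ0 : 0 < ρ := lt_of_le_of_lt hr0 hrρ
  have hz : (ρ : ℂ) ∈ ball (0 : ℂ) 1 := by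
    simp [abs_of_pos hρ0, hρ1]
  have hsum := (ha _ hz).summable
  have hten : Filter.Tendsto (fun k : ℕ => ‖a k * (ρ:ℂ) ^ k‖) Filter.atTop (nhds 0) := by
    simpa using hsum.tendsto_atTop_zero.norm
  have hev : ∀ᶠ k in Filter.atTop, ‖a k * (ρ:ℂ) ^ k‖ ≤ 1 :=
    hten.eventually_le_const (by norm_num)
  have hgeo : Summable (fun k : ℕ => (r / ρ) ^ k) :=
    summable_geometric_of_lt_one (by positivity) (by rw [div_lt_one hρ0]; exact hrρ)
  apply summable_of_isBigO_nat hgeo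
  rw [Asymptotics.isBigO_iff]
  refine ⟨1, ?_⟩
  filter_upwards [hev] with k hk
  have h1 : ‖a k * (ρ:ℂ) ^ k‖ = ‖a k‖ * ρ ^ k := by
    simp [norm_mul, norm_pow, abs_of_pos hρ0]
  rw [h1] at hk
  have h2 : ‖a k‖ * r ^ k ≤ (r / ρ) ^ k := by
    have hρk : (0:ℝ) < ρ ^ k := by positivity
    have : ‖a k‖ * r ^ k = (‖a k‖ * ρ ^ k) * (r / ρ) ^ k := by
      rw [div_pow]; field_simp
    rw [this]
    nlinarith [pow_nonneg (by positivity : (0:ℝ) ≤ r / ρ) k]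
  calc ‖‖a k‖ * r ^ k‖ = ‖a k‖ * r ^ k := by
        rw [Real.norm_of_nonneg (by positivity)]
    _ ≤ (r/ρ)^k := h2
    _ ≤ 1 * ‖(r/ρ)^k‖ := by rw [one_mul, Real.norm_of_nonneg (by positivity)]


lemma bohr_fourier (f : ℂ → ℂ) (a : ℕ → ℂ)
    (ha : ∀ z ∈ ball (0 : ℂ) 1, HasSum (fun n : ℕ => a n * z ^ n) (f z))
    (r : ℝ) (hr0 : 0 ≤ r) (hr1 : r < 1) (m : ℤ) :
    ∫ θ in Ioc (0:ℝ) (2*π), f (r * Complex.exp (θ * I)) * Complex.exp (m * θ * I)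
      = ∑' k : ℕ, (if (k:ℤ) + m = 0 then (2*π:ℂ) * (a k * (r:ℂ)^k) else 0) := by
  have hmem : ∀ θ : ℝ, (↑r * Complex.exp (↑θ * I)) ∈ ball (0:ℂ) 1 := by
    intro θ
    simp only [mem_ball, dist_zero_right, norm_mul, Complex.norm_real,
      Real.norm_eq_abs, Complex.norm_exp_ofReal_mul_I, mul_one, _root_.abs_of_nonneg hr0]
    exact hr1
  have hnorm : ∀ (n : ℤ) (θ : ℝ), ‖Complex.exp ((n:ℂ) * θ * I)‖ = 1 := by
    intro n θ
    rw [show ((n:ℂ) * θ * I) = ((n*θ:ℝ):ℂ) * I by push_cast; ring]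
    exact Complex.norm_exp_ofReal_mul_I _
  have hpt : ∀ θ : ℝ, f (↑r * Complex.exp (↑θ * I)) * Complex.exp (↑m * ↑θ * I)
      = ∑' k : ℕ, a k * (r:ℂ)^k * Complex.exp ((((k:ℤ) + m : ℤ) : ℂ) * θ * I) := by
    intro θ
    have h := (ha _ (hmem θ)).mul_right (Complex.exp (↑m * ↑θ * I))
    rw [← h.tsum_eq]
    apply tsum_congr
    intro k
    rw [mul_pow, ← Complex.exp_nat_mul, mul_assoc, mul_assoc, ← Complex.exp_add]
    push_cast
    ring_nf
  have hint : ∀ k : ℕ, IntegrableOn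
      (fun θ : ℝ => a k * (r:ℂ)^k * Complex.exp ((((k:ℤ) + m : ℤ) : ℂ) * θ * I))
      (Ioc (0:ℝ) (2*π)) := by
    intro k
    apply Continuous.integrableOn_Ioc
    fun_prop
  have hsum2 : Summable fun k : ℕ =>
      ∫ θ in Ioc (0:ℝ) (2*π), ‖a k * (r:ℂ)^k * Complex.exp ((((k:ℤ) + m : ℤ) : ℂ) * θ * I)‖ := by
    have : ∀ k : ℕ, (∫ θ in Ioc (0:ℝ) (2*π),
        ‖a k * (r:ℂ)^k * Complex.exp ((((k:ℤ) + m : ℤ) : ℂ) * θ * I)‖)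
        = (2*π) * (‖a k‖ * r^k) := by
      intro k
      have : ∀ θ : ℝ, ‖a k * (r:ℂ)^k * Complex.exp ((((k:ℤ) + m : ℤ) : ℂ) * θ * I)‖
          = ‖a k‖ * r^k := by
        intro θ
        rw [norm_mul, norm_mul, hnorm, mul_one, norm_pow, Complex.norm_real,
          Real.norm_of_nonneg hr0]
      simp_rw [this]
      rw [setIntegral_const, measureReal_def, Real.volume_Ioc, smul_eq_mul,
        ENNReal.toReal_ofReal (by rw [sub_zero]; positivity)]
      ring
    simp_rw [this]
    exact ((bohr_summable f a ha r hr0 hr1).mul_left _)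
  calc ∫ θ in Ioc (0:ℝ) (2*π), f (r * Complex.exp (θ * I)) * Complex.exp (m * θ * I)
      = ∫ θ in Ioc (0:ℝ) (2*π),
        ∑' k : ℕ, a k * (r:ℂ)^k * Complex.exp ((((k:ℤ) + m : ℤ) : ℂ) * θ * I) := by
        apply setIntegral_congr_fun measurableSet_Ioc
        intro θ _; exact hpt θ
    _ = ∑' k : ℕ, ∫ θ in Ioc (0:ℝ) (2*π),
        a k * (r:ℂ)^k * Complex.exp ((((k:ℤ) + m : ℤ) : ℂ) * θ * I) :=
        (integral_tsum_of_summable_integral_norm hint hsum2).symm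
    _ = ∑' k : ℕ, (if (k:ℤ) + m = 0 then (2*π:ℂ) * (a k * (r:ℂ)^k) else 0) := by
        apply tsum_congr
        intro k
        rw [MeasureTheory.integral_const_mul, bohr_orth ((k:ℤ) + m)]
        split_ifs with h
        · ring
        · ring

lemma bohr_coeff (f : ℂ → ℂ) (a : ℕ → ℂ)
    (hf : DifferentiableOn ℂ f (ball (0 : ℂ) 1))
    (ha : ∀ z ∈ ball (0 : ℂ) 1, HasSum (fun n : ℕ => a n * z ^ n) (f z))
    (hbd : ∀ z ∈ ball (0 : ℂ) 1, ‖f z‖ < 1)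
    (n : ℕ) (hn : 1 ≤ n) (r : ℝ) (hr0 : 0 < r) (hr1 : r < 1) :
    ‖a n‖ * r ^ n ≤ 2 * (1 - ‖a 0‖) := by
  obtain ⟨c, hc1, hc2⟩ : ∃ c : ℂ, ‖c‖ = 1 ∧ c * a 0 = (‖a 0‖ : ℂ) := by
    by_cases h : a 0 = 0
    · exact ⟨1, by simp [h]⟩
    · refine ⟨(starRingEnd ℂ) (a 0) / ‖a 0‖, ?_, ?_⟩
      · rw [norm_div, RCLike.norm_conj, Complex.norm_real, norm_norm,
          div_self (norm_ne_zero_iff.mpr h)]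
      · rw [div_mul_eq_mul_div, mul_comm, Complex.mul_conj]
        rw [Complex.normSq_eq_norm_sq]
        push_cast
        rw [sq, mul_div_assoc,
          div_self (Complex.ofReal_ne_zero.mpr (norm_ne_zero_iff.mpr h)), mul_one]
  have hmem : ∀ θ : ℝ, (↑r * Complex.exp (↑θ * I)) ∈ ball (0:ℂ) 1 := by
    intro θ
    simp only [mem_ball, dist_zero_right, norm_mul, Complex.norm_real,
      Real.norm_eq_abs, Complex.norm_exp_ofReal_mul_I, mul_one, _root_.abs_of_nonneg hr0.le]
    exact hr1
  set g : ℝ → ℂ := fun θ => f (↑r * Complex.exp (↑θ * I)) with hg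
  have hgcont : Continuous g := by
    apply hf.continuousOn.comp_continuous (by fun_prop)
    exact hmem
  set u : ℝ → ℝ := fun θ => 1 - (c * g θ).re with hu
  have hucont : Continuous u := by fun_prop
  have hu0 : ∀ θ, 0 ≤ u θ := by
    intro θ
    have h1 : (c * g θ).re ≤ ‖c * g θ‖ := Complex.re_le_norm _
    have h2 : ‖c * g θ‖ < 1 := by
      rw [norm_mul, hc1, one_mul]
      exact hbd _ (hmem θ)
    simp only [hu]
    linarith
  have hre : ∀ w : ℂ, (w.re : ℂ) = (w + (starRingEnd ℂ) w) / 2 := by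
    intro w
    rw [Complex.add_conj]
    push_cast
    ring
  -- integrability helpers
  have hi1 : ∀ m : ℤ, IntegrableOn (fun θ : ℝ => Complex.exp ((m:ℂ) * θ * I))
      (Ioc (0:ℝ) (2*π)) := fun m => Continuous.integrableOn_Ioc (by fun_prop)
  have hi2 : ∀ m : ℤ, IntegrableOn (fun θ : ℝ => g θ * Complex.exp ((m:ℂ) * θ * I))
      (Ioc (0:ℝ) (2*π)) := fun m => Continuous.integrableOn_Ioc (by fun_prop)
  -- main splitting of the integral
  have hJ : ∀ m : ℤ, (∫ θ in Ioc (0:ℝ) (2*π), ((u θ : ℂ)) * Complex.exp ((m:ℂ) * θ * I))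
      = (if m = 0 then (2*π:ℂ) else 0)
        - (c/2) * (∫ θ in Ioc (0:ℝ) (2*π), g θ * Complex.exp ((m:ℂ) * θ * I))
        - (1/2) * (starRingEnd ℂ)
            (c * (∫ θ in Ioc (0:ℝ) (2*π), g θ * Complex.exp (((-m : ℤ):ℂ) * θ * I))) := by
    intro m
    have hsplit : ∀ θ : ℝ, ((u θ : ℂ)) * Complex.exp ((m:ℂ) * θ * I)
        = Complex.exp ((m:ℂ) * θ * I)
          - (c/2) * (g θ * Complex.exp ((m:ℂ) * θ * I))
          - (1/2) * (starRingEnd ℂ) (c * (g θ * Complex.exp (((-m : ℤ):ℂ) * θ * I))) := by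
      intro θ
      have hconj : (starRingEnd ℂ) (Complex.exp (((-m : ℤ):ℂ) * θ * I))
          = Complex.exp ((m:ℂ) * θ * I) := by
        rw [← Complex.exp_conj]
        congr 1
        simp [map_mul, Complex.conj_I]
      rw [map_mul, map_mul, hconj]
      simp only [hu]
      push_cast
      rw [hre (c * g θ)]
      rw [map_mul]
      ring
    rw [setIntegral_congr_fun measurableSet_Ioc (fun θ _ => hsplit θ)]
    have hcont3 : Continuous fun θ : ℝ =>
        (starRingEnd ℂ) (c * (g θ * Complex.exp (((-m : ℤ):ℂ) * θ * I))) :=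
      Complex.continuous_conj.comp (by fun_prop)
    have hA : IntegrableOn (fun θ : ℝ => Complex.exp ((m:ℂ) * θ * I)
        - (c/2) * (g θ * Complex.exp ((m:ℂ) * θ * I))) (Ioc (0:ℝ) (2*π)) :=
      Continuous.integrableOn_Ioc (by fun_prop)
    have hA2 : IntegrableOn (fun θ : ℝ => (c/2) * (g θ * Complex.exp ((m:ℂ) * θ * I)))
        (Ioc (0:ℝ) (2*π)) := Continuous.integrableOn_Ioc (by fun_prop)
    have hB : IntegrableOn (fun θ : ℝ => (1/2 : ℂ) *
        (starRingEnd ℂ) (c * (g θ * Complex.exp (((-m : ℤ):ℂ) * θ * I)))) (Ioc (0:ℝ) (2*π)) :=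
      Continuous.integrableOn_Ioc (by fun_prop)
    rw [MeasureTheory.integral_sub hA hB, MeasureTheory.integral_sub (hi1 m) hA2]
    rw [MeasureTheory.integral_const_mul, MeasureTheory.integral_const_mul]
    rw [show (fun θ : ℝ => (starRingEnd ℂ) (c * (g θ * Complex.exp (((-m : ℤ):ℂ) * θ * I))))
      = fun θ : ℝ => (starRingEnd ℂ) ((fun t : ℝ => c * (g t * Complex.exp (((-m : ℤ):ℂ) * t * I))) θ) from rfl]
    rw [integral_conj, MeasureTheory.integral_const_mul, bohr_orth m]
  -- Fourier coefficient values
  have hFn : (∫ θ in Ioc (0:ℝ) (2*π), g θ * Complex.exp (((n:ℕ):ℂ) * θ * I)) = 0 := by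
    simp only [hg]
    have h := bohr_fourier f a ha r hr0.le hr1 (n:ℤ)
    push_cast at h ⊢
    rw [h]
    convert tsum_zero with k
    rw [if_neg (by omega)]
  have hFnn : (∫ θ in Ioc (0:ℝ) (2*π), g θ * Complex.exp ((-((n:ℕ)):ℂ) * θ * I))
      = 2*π*(a n * (r:ℂ)^n) := by
    simp only [hg]
    have h := bohr_fourier f a ha r hr0.le hr1 (-(n:ℤ))
    push_cast at h ⊢
    rw [h]
    rw [tsum_eq_single n (fun k hk => by rw [if_neg (by omega)])]
    rw [if_pos (by omega)]
  have hF0 : (∫ θ in Ioc (0:ℝ) (2*π), g θ * Complex.exp ((0:ℂ) * θ * I))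
      = 2*π*(a 0) := by
    simp only [hg]
    have h := bohr_fourier f a ha r hr0.le hr1 0
    push_cast at h ⊢
    rw [h]
    rw [tsum_eq_single 0 (fun k hk => by rw [if_neg (by omega)])]
    rw [if_pos (by omega)]
    simp
  -- evaluate J(-n)
  have hJn := hJ (-(n:ℤ))
  rw [if_neg (by omega), neg_neg] at hJn
  push_cast at hJn
  rw [hFn, hFnn] at hJn
  have hJnval : (∫ θ in Ioc (0:ℝ) (2*π), ((u θ : ℂ)) * Complex.exp ((-((n:ℕ)):ℂ) * θ * I))
      = -((π:ℂ) * c * (a n * (r:ℂ)^n)) := by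
    rw [hJn]
    simp only [mul_zero, map_zero]
    ring
  -- evaluate J(0)
  have hu_int : IntegrableOn u (Ioc (0:ℝ) (2*π)) := hucont.integrableOn_Ioc
  have hJ0 := hJ 0
  rw [if_pos rfl, neg_zero] at hJ0
  push_cast at hJ0
  rw [hF0] at hJ0
  have hlhs0 : (∫ θ in Ioc (0:ℝ) (2*π), ((u θ : ℂ)) * Complex.exp ((0:ℂ) * θ * I))
      = ((∫ θ in Ioc (0:ℝ) (2*π), u θ : ℝ) : ℂ) := by
    simp only [zero_mul, Complex.exp_zero, mul_one]
    exact integral_ofReal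
  have hrhs0 : (2*(π:ℂ)) - (c/2) * (2*π*(a 0)) - (1/2) * (starRingEnd ℂ) (c * (2*π*(a 0)))
      = ((2*π*(1 - ‖a 0‖) : ℝ) : ℂ) := by
    have h1 : c * (2*(π:ℂ)*(a 0)) = 2*(π:ℂ) * ((‖a 0‖:ℝ) : ℂ) := by
      rw [show c * (2*(π:ℂ)*(a 0)) = 2*(π:ℂ) * (c * a 0) by ring, hc2]
    rw [h1, show (c/2) * (2*(π:ℂ)*(a 0)) = (π:ℂ) * (c * a 0) by ring, hc2]
    have h2 : (starRingEnd ℂ) (2*(π:ℂ) * ((‖a 0‖:ℝ):ℂ)) = 2*(π:ℂ) * ((‖a 0‖:ℝ):ℂ) := by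
      rw [show 2*(π:ℂ) * ((‖a 0‖:ℝ):ℂ) = (((2*π*‖a 0‖ : ℝ)):ℂ) by push_cast; ring,
        Complex.conj_ofReal]
    rw [h2]
    push_cast
    ring
  have hu_eq : (∫ θ in Ioc (0:ℝ) (2*π), u θ) = 2*π*(1 - ‖a 0‖) := by
    have := hJ0
    rw [hlhs0, hrhs0] at this
    exact_mod_cast this
  -- the bound
  have hnorm_le : ‖(∫ θ in Ioc (0:ℝ) (2*π), ((u θ : ℂ)) * Complex.exp ((-((n:ℕ)):ℂ) * θ * I))‖
      ≤ ∫ θ in Ioc (0:ℝ) (2*π), u θ := by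
    calc ‖(∫ θ in Ioc (0:ℝ) (2*π), ((u θ : ℂ)) * Complex.exp ((-((n:ℕ)):ℂ) * θ * I))‖
        ≤ ∫ θ in Ioc (0:ℝ) (2*π), ‖((u θ : ℂ)) * Complex.exp (-((n:ℕ):ℂ) * θ * I)‖ :=
          norm_integral_le_integral_norm _
      _ = ∫ θ in Ioc (0:ℝ) (2*π), u θ := by
          apply setIntegral_congr_fun measurableSet_Ioc
          intro θ _
          have he : ‖Complex.exp (-((n:ℕ):ℂ) * θ * I)‖ = 1 := by
            rw [show (-((n:ℕ):ℂ)) * θ * I = ((-(n:ℝ)*θ : ℝ):ℂ) * I by push_cast; ring]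
            exact Complex.norm_exp_ofReal_mul_I _
          simp only [norm_mul, he, mul_one, Complex.norm_real]
          exact Real.norm_of_nonneg (hu0 θ)
  rw [hJnval, hu_eq] at hnorm_le
  have hnv : ‖-((π:ℂ) * c * (a n * (r:ℂ)^n))‖ = π * (‖a n‖ * r^n) := by
    rw [norm_neg, norm_mul, norm_mul, norm_mul, hc1, norm_pow, Complex.norm_real,
      Complex.norm_real, Real.norm_of_nonneg Real.pi_nonneg,
      Real.norm_of_nonneg hr0.le]
    ring
  rw [hnv] at hnorm_le
  nlinarith [Real.pi_pos]

set_option maxHeartbeats 1000000 in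
/-- Bohr's theorem: if `f(z) = ∑ a_n z^n` is analytic on the unit disk with `|f| < 1`,
then `∑ |a_n z^n| ≤ 1` for `|z| ≤ 1/3`. -/
theorem bohr_theorem
    (f : ℂ → ℂ) (a : ℕ → ℂ)
    (hf : DifferentiableOn ℂ f (ball (0 : ℂ) 1))
    (ha : ∀ z ∈ ball (0 : ℂ) 1, HasSum (fun n : ℕ => a n * z ^ n) (f z))
    (hbd : ∀ z ∈ ball (0 : ℂ) 1, ‖f z‖ < 1) :
    ∀ z : ℂ, ‖z‖ ≤ 1 / 3 → (∑' n : ℕ, ‖a n * z ^ n‖) ≤ 1 := by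
  intro z hz
  have h0mem : (0:ℂ) ∈ ball (0:ℂ) 1 := by simp
  have ha0 : a 0 = f 0 := by
    have h1 := ha 0 h0mem
    have h2 : HasSum (fun n : ℕ => a n * (0:ℂ) ^ n) (a 0 * (0:ℂ) ^ 0) :=
      hasSum_single 0 (fun b hb => by simp [pow_eq_zero_iff, hb])
    simpa using h2.unique h1
  have ha0lt : ‖a 0‖ < 1 := by rw [ha0]; exact hbd 0 h0mem
  set C : ℝ := 2 * (1 - ‖a 0‖) with hC
  have hC0 : 0 ≤ C := by rw [hC]; linarith
  have hcoef : ∀ n : ℕ, 1 ≤ n → ‖a n‖ ≤ C := by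
    intro n hn
    have key : ∀ r : ℝ, r ∈ Ioo (1/2 : ℝ) 1 → ‖a n‖ * r ^ n ≤ C :=
      fun r hr => bohr_coeff f a hf ha hbd n hn r (by linarith [hr.1]) hr.2
    have hten : Filter.Tendsto (fun r : ℝ => ‖a n‖ * r ^ n)
        (nhdsWithin 1 (Iio 1)) (nhds (‖a n‖ * 1 ^ n)) :=
      ((continuous_const.mul (continuous_pow n)).tendsto 1).mono_left nhdsWithin_le_nhds
    have hmem : Ioo (1/2 : ℝ) 1 ∈ nhdsWithin (1:ℝ) (Iio 1) :=
      Ioo_mem_nhdsLT_of_mem (by constructor <;> norm_num)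
    have := le_of_tendsto hten (Filter.eventually_iff_exists_mem.mpr ⟨_, hmem, key⟩)
    simpa using this
  have hbig : ∀ n : ℕ, ‖a n * z ^ n‖ ≤ (max ‖a 0‖ C) * (1/3)^n := by
    intro n
    rw [norm_mul, norm_pow]
    rcases Nat.eq_zero_or_pos n with h | h
    · subst h; simp [le_max_left]
    · have h1 : ‖a n‖ ≤ C := hcoef n h
      have h2 : ‖z‖^n ≤ (1/3)^n := pow_le_pow_left₀ (norm_nonneg z) hz n
      calc ‖a n‖ * ‖z‖^n ≤ C * (1/3)^n :=
            mul_le_mul h1 h2 (pow_nonneg (norm_nonneg z) n) hC0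
        _ ≤ (max ‖a 0‖ C) * (1/3)^n := by
            apply mul_le_mul_of_nonneg_right (le_max_right _ _) (by positivity)
  have hgeo : Summable (fun n : ℕ => (max ‖a 0‖ C) * (1/3:ℝ)^n) :=
    (summable_geometric_of_lt_one (by norm_num) (by norm_num)).mul_left _
  have hsum : Summable (fun n : ℕ => ‖a n * z ^ n‖) :=
    hgeo.of_nonneg_of_le (fun n => norm_nonneg _) hbig
  rw [Summable.tsum_eq_zero_add hsum]
  have hbnd : ∀ n : ℕ, ‖a (n+1) * z ^ (n+1)‖ ≤ (C/3) * (1/3:ℝ)^n := by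
    intro n
    have h1 : ‖a (n+1)‖ ≤ C := hcoef (n+1) (Nat.succ_le_succ (Nat.zero_le n))
    have h2 : ‖z‖^(n+1) ≤ (1/3:ℝ)^(n+1) := pow_le_pow_left₀ (norm_nonneg z) hz (n+1)
    calc ‖a (n+1) * z^(n+1)‖ = ‖a (n+1)‖ * ‖z‖^(n+1) := by rw [norm_mul, norm_pow]
      _ ≤ C * (1/3)^(n+1) :=
          mul_le_mul h1 h2 (pow_nonneg (norm_nonneg z) _) hC0
      _ = (C/3) * (1/3)^n := by rw [pow_succ]; ring
  have hgeo2 : Summable (fun n : ℕ => (C/3) * (1/3:ℝ)^n) :=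
    (summable_geometric_of_lt_one (by norm_num) (by norm_num)).mul_left _
  have hsumtail : Summable (fun n : ℕ => ‖a (n+1) * z ^ (n+1)‖) :=
    hgeo2.of_nonneg_of_le (fun n => norm_nonneg _) hbnd
  have htail : (∑' n : ℕ, ‖a (n+1) * z ^ (n+1)‖) ≤ ∑' n : ℕ, (C/3) * (1/3:ℝ)^n :=
    Summable.tsum_le_tsum hbnd hsumtail hgeo2
  have hgeosum : (∑' n : ℕ, (C/3) * (1/3:ℝ)^n) = 1 - ‖a 0‖ := by
    rw [tsum_mul_left, tsum_geometric_of_lt_one (by norm_num) (by norm_num), hC]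
    norm_num
    ring
  have h00 : ‖a 0 * z ^ 0‖ = ‖a 0‖ := by simp
  rw [h00]
  rw [hgeosum] at htail
  linarith
end

section
/- Let h(z) = ∑_{n≥0} a_n z^n and g(z) = ∑_{n≥1} b_n z^n be analytic on the open unit disk U with g(0) = 0, and suppose g'(z) = μ(z)·h'(z) on U for some analytic μ : U → U with μ(0) = 0. Then for every r with 0 ≤ r ≤ 1/3, ∑_{n≥1} |b_n| r^n ≤ ∑_{n≥1} |a_n| r^n. -/
open Metric Finset FormalMultilinearSeries
open scoped NNReal ENNReal

private lemma coeff_ofScalars (u : ℕ → ℂ) (n : ℕ) : (ofScalars ℂ u).coeff n = u n := by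
  show (ofScalars ℂ u) n 1 = u n
  have : (1 : Fin n → ℂ) = fun _ => (1:ℂ) := rfl
  rw [this, ofScalars_apply_eq]
  simp

private lemma hasFPSAt_ofScalars {F : ℂ → ℂ} {u : ℕ → ℂ} {t : ℝ} (ht : 0 < t)
    (hu : ∀ y : ℂ, ‖y‖ < t → HasSum (fun n => u n * y ^ n) (F y)) :
    HasFPowerSeriesAt F (ofScalars ℂ u) 0 := by
  rw [hasFPowerSeriesAt_iff]
  filter_upwards [Metric.ball_mem_nhds (0:ℂ) ht] with z hz
  have h1 := hu z (by simpa using hz)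
  have h2 : ∀ n, z ^ n • (ofScalars ℂ u).coeff n = u n * z ^ n := by
    intro n
    rw [coeff_ofScalars, smul_eq_mul]; ring
  simp only [h2, zero_add]
  exact h1

private lemma coeff_unique {F : ℂ → ℂ} {u v : ℕ → ℂ} {t : ℝ} (ht : 0 < t)
    (hu : ∀ y : ℂ, ‖y‖ < t → HasSum (fun n => u n * y ^ n) (F y))
    (hv : ∀ y : ℂ, ‖y‖ < t → HasSum (fun n => v n * y ^ n) (F y)) : u = v := by
  have e := (hasFPSAt_ofScalars ht hu).eq_formalMultilinearSeries (hasFPSAt_ofScalars ht hv)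
  funext n
  have := congrArg (fun p : FormalMultilinearSeries ℂ ℂ ℂ => p.coeff n) e
  simpa [coeff_ofScalars] using this

private lemma hasFPS_onBall {F : ℂ → ℂ} {u : ℕ → ℂ}
    (hu : ∀ y : ℂ, ‖y‖ < 1 → HasSum (fun n => u n * y ^ n) (F y)) :
    HasFPowerSeriesOnBall F (ofScalars ℂ u) 0 1 := by
  refine ⟨?_, one_pos, ?_⟩
  · refine ENNReal.le_of_forall_nnreal_lt fun r hr => ?_
    have hr1 : (r : ℝ) < 1 := by exact_mod_cast hr
    have hsum := (hu ((r : ℝ) : ℂ) (by simpa using hr1)).summable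
    apply FormalMultilinearSeries.le_radius_of_tendsto (l := 0)
    have := hsum.tendsto_atTop_zero.norm
    simp only [norm_mul, norm_pow, Complex.norm_real, Real.norm_eq_abs,
      abs_of_nonneg r.coe_nonneg, norm_zero] at this
    convert this using 2 with n
    rw [ofScalars_norm]
  · intro y hy
    have hy' : ‖y‖ < 1 := by
      rw [Metric.mem_eball, edist_zero_right, ← ENNReal.coe_one, enorm_lt_coe] at hy
      exact_mod_cast hy
    have := hu y hy'
    simp only [zero_add]
    refine this.congr_fun fun n => ?_
    rw [ofScalars_apply_eq, smul_eq_mul]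

private lemma hasSum_deriv_of_fps {F : ℂ → ℂ} {u : ℕ → ℂ}
    (hF : HasFPowerSeriesOnBall F (ofScalars ℂ u) 0 1) {y : ℂ} (hy : ‖y‖ < 1) :
    HasSum (fun n : ℕ => ((n : ℂ) + 1) * u (n + 1) * y ^ n) (deriv F y) := by
  rcases eq_or_ne y 0 with rfl | hy0
  · have hd : deriv F 0 = u 1 := by
      have h1 := hF.hasFPowerSeriesAt.deriv
      rw [h1]
      have : (ofScalars ℂ u) 1 (fun _ => (1:ℂ)) = u 1 := by
        rw [ofScalars_apply_eq]; simp
      exact this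
    have hs := hasSum_single (f := fun n : ℕ => ((n : ℂ) + 1) * u (n + 1) * (0:ℂ) ^ n) 0
      (by intro b hb; simp [zero_pow hb])
    simpa [hd] using hs
  · have hmem : y ∈ Metric.eball (0 : ℂ) 1 := by
      rw [Metric.mem_eball, edist_zero_right, ← ENNReal.coe_one, enorm_lt_coe]
      exact_mod_cast hy
    have hfd := (hF.fderiv).hasSum hmem
    have hmap := hfd.mapL (ContinuousLinearMap.apply ℂ ℂ (1 : ℂ))
    have key : ∀ n : ℕ, (ContinuousLinearMap.apply ℂ ℂ (1 : ℂ))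
        ((ofScalars ℂ u).derivSeries n fun _ => y) = ((n : ℂ) + 1) * u (n + 1) * y ^ n := by
      intro n
      set L := (ofScalars ℂ u).derivSeries n fun _ => y with hL
      have h1 : L y = (n + 1) • (ofScalars ℂ u) (n + 1) fun _ => y :=
        FormalMultilinearSeries.derivSeries_apply_diag _ n y
      have h2 : (ofScalars ℂ u) (n + 1) (fun _ => y) = u (n + 1) * y ^ (n + 1) := by
        rw [ofScalars_apply_eq, smul_eq_mul]
      have h3 : L y = y * L 1 := by
        conv_lhs => rw [show y = y • (1:ℂ) by simp]
        rw [L.map_smul, smul_eq_mul]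
      have h4 : y * L 1 = y * (((n : ℂ) + 1) * u (n + 1) * y ^ n) := by
        rw [← h3, h1, h2, nsmul_eq_mul]
        push_cast
        ring
      have h5 := mul_left_cancel₀ hy0 h4
      simpa using h5
    have hval : (fderiv ℂ F (0 + y)) 1 = deriv F y := by
      rw [zero_add]; exact fderiv_apply_one_eq_deriv
    rw [← hval]
    exact (funext key) ▸ hmap

private lemma schwarz_coeffs (μ : ℂ → ℂ) (hμ : DifferentiableOn ℂ μ (ball (0:ℂ) 1))
    (hμmaps : Set.MapsTo μ (ball (0:ℂ) 1) (ball (0:ℂ) 1)) (hμ0 : μ 0 = 0) :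
    ∃ c : ℕ → ℂ, c 0 = 0 ∧ (∀ m, ‖c m‖ ≤ 1) ∧
      ∀ y : ℂ, ‖y‖ < 1/2 → HasSum (fun m => c m * y ^ m) (μ y) := by
  have hdiff : ∀ R : ℝ≥0, (R : ℝ) < 1 → DifferentiableOn ℂ μ (closedBall 0 (R : ℝ)) :=
    fun R hR => hμ.mono (closedBall_subset_ball hR)
  have hfps : ∀ R : ℝ≥0, 0 < R → (R : ℝ) < 1 →
      HasFPowerSeriesOnBall μ (cauchyPowerSeries μ 0 R) 0 R :=
    fun R hR0 hR1 => (hdiff R hR1).hasFPowerSeriesOnBall hR0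
  have h2 : (0:ℝ≥0) < (1/2 : ℝ≥0) := by norm_num
  have h2' : ((1/2 : ℝ≥0) : ℝ) < 1 := by norm_num
  have hhalf := hfps (1/2) h2 h2'
  set c : ℕ → ℂ := fun m => (cauchyPowerSeries μ 0 ((1/2 : ℝ≥0) : ℝ)).coeff m with hc
  have hrep : ∀ y : ℂ, ‖y‖ < 1/2 → HasSum (fun m => c m * y ^ m) (μ y) := by
    intro y hy
    have hmem : y ∈ Metric.eball (0 : ℂ) ((1/2 : ℝ≥0) : ℝ≥0∞) := by
      rw [Metric.mem_eball, edist_zero_right, enorm_lt_coe, ← NNReal.coe_lt_coe,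
        coe_nnnorm]
      simpa using hy
    have := hhalf.hasSum hmem
    simp only [zero_add] at this
    refine this.congr_fun fun m => ?_
    rw [apply_eq_pow_smul_coeff, smul_eq_mul]
    ring
  have hbound : ∀ m, ‖c m‖ ≤ 1 := by
    intro m
    have key : ∀ ρ : ℝ, 1/2 < ρ → ρ < 1 → ‖c m‖ ≤ (ρ⁻¹) ^ m := by
      intro ρ hρl hρu
      have hρ0 : (0:ℝ) < ρ := by linarith
      set R : ℝ≥0 := ⟨ρ, hρ0.le⟩ with hR
      have hRc : (R : ℝ) = ρ := rfl
      have hfpsR := hfps R (by rwa [← NNReal.coe_pos, hRc]) (by rwa [hRc])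
      have heq : cauchyPowerSeries μ 0 ((1/2 : ℝ≥0) : ℝ) = cauchyPowerSeries μ 0 (R : ℝ) :=
        hhalf.hasFPowerSeriesAt.eq_formalMultilinearSeries hfpsR.hasFPowerSeriesAt
      have h1 : ‖c m‖ = ‖cauchyPowerSeries μ 0 (R : ℝ) m‖ := by
        rw [hc, heq, FormalMultilinearSeries.norm_apply_eq_norm_coef]
      have h3 := norm_cauchyPowerSeries_le μ 0 (R : ℝ) m
      have hint : (∫ θ : ℝ in (0)..2 * Real.pi, ‖μ (circleMap 0 (R : ℝ) θ)‖) ≤ 2 * Real.pi := by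
        have hcont : ContinuousOn (fun θ : ℝ => ‖μ (circleMap 0 (R : ℝ) θ)‖)
            (Set.uIcc 0 (2 * Real.pi)) := by
          apply ContinuousOn.norm
          apply hμ.continuousOn.comp (continuous_circleMap 0 (R:ℝ)).continuousOn
          intro θ _
          simp only [mem_ball, dist_zero_right]
          rw [norm_circleMap_zero, abs_of_pos (by rw [hRc]; exact hρ0)]
          rwa [hRc]
        calc (∫ θ : ℝ in (0)..2 * Real.pi, ‖μ (circleMap 0 (R : ℝ) θ)‖)
            ≤ ∫ _ : ℝ in (0)..2 * Real.pi, (1:ℝ) := by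
              apply intervalIntegral.integral_mono_on Real.two_pi_pos.le
                (hcont.intervalIntegrable) intervalIntegrable_const
              intro θ _
              have hmem2 : circleMap 0 (R:ℝ) θ ∈ ball (0:ℂ) 1 := by
                simp only [mem_ball, dist_zero_right]
                rw [norm_circleMap_zero, abs_of_pos (by rw [hRc]; exact hρ0)]
                rwa [hRc]
              have := hμmaps hmem2
              simp only [mem_ball, dist_zero_right] at this
              exact this.le
          _ = 2 * Real.pi := by simp
      have h4 : ‖cauchyPowerSeries μ 0 (R : ℝ) m‖ ≤ 1 * |(R:ℝ)|⁻¹ ^ m := by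
        refine h3.trans (mul_le_mul_of_nonneg_right ?_ (by positivity))
        calc (2 * Real.pi)⁻¹ * ∫ θ : ℝ in (0)..2 * Real.pi, ‖μ (circleMap 0 (R : ℝ) θ)‖
            ≤ (2 * Real.pi)⁻¹ * (2 * Real.pi) := by
              have h2pi : (0:ℝ) < (2 * Real.pi)⁻¹ := by positivity
              exact mul_le_mul_of_nonneg_left hint h2pi.le
          _ = 1 := by field_simp
      rw [h1]
      refine h4.trans ?_
      rw [one_mul, hRc, abs_of_pos hρ0]
    have htend : Filter.Tendsto (fun ρ : ℝ => (ρ⁻¹) ^ m) (nhdsWithin 1 (Set.Iio 1)) (nhds 1) := by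
      have hcont : ContinuousAt (fun ρ : ℝ => (ρ⁻¹) ^ m) 1 := by
        have : (1:ℝ) ≠ 0 := one_ne_zero
        fun_prop (disch := norm_num)
      have := hcont.tendsto.mono_left (nhdsWithin_le_nhds (s := Set.Iio (1:ℝ)))
      simpa using this
    refine ge_of_tendsto htend ?_
    filter_upwards [Ioo_mem_nhdsLT_of_mem (by norm_num : (1:ℝ) ∈ Set.Ioc (1/2 : ℝ) 1)] with ρ hρ
    exact key ρ hρ.1 hρ.2
  have hc0 : c 0 = 0 := by
    have ha1 := hrep 0 (by norm_num)
    have ha2 := hasSum_single (f := fun m => c m * (0:ℂ) ^ m) 0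
      (by intro b hb; simp [zero_pow hb])
    have := ha1.unique ha2
    simpa [hμ0] using this.symm
  exact ⟨c, hc0, hbound, hrep⟩

/-- If `g' = μ h'` on the unit disk for a Schwarz function `μ`, then for `0 ≤ r ≤ 1/3` the
Bohr sums of the coefficients satisfy `∑ |b_n| r^n ≤ ∑ |a_n| r^n`. -/
theorem bohr_sum_dilatation_le
    (h g μ : ℂ → ℂ) (a b : ℕ → ℂ)
    (hh : DifferentiableOn ℂ h (ball (0 : ℂ) 1))
    (hg : DifferentiableOn ℂ g (ball (0 : ℂ) 1))
    (ha : ∀ z ∈ ball (0 : ℂ) 1, HasSum (fun n : ℕ => a n * z ^ n) (h z))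
    (hb : ∀ z ∈ ball (0 : ℂ) 1, HasSum (fun n : ℕ => b (n + 1) * z ^ (n + 1)) (g z))
    (hg0 : g 0 = 0)
    (hμ : DifferentiableOn ℂ μ (ball (0 : ℂ) 1))
    (hμmaps : Set.MapsTo μ (ball (0 : ℂ) 1) (ball (0 : ℂ) 1))
    (hμ0 : μ 0 = 0)
    (hdil : ∀ z ∈ ball (0 : ℂ) 1, deriv g z = μ z * deriv h z) :
    ∀ r : ℝ, 0 ≤ r → r ≤ 1 / 3 →
      (∑' n : ℕ, ‖b (n + 1)‖ * r ^ (n + 1)) ≤ ∑' n : ℕ, ‖a (n + 1)‖ * r ^ (n + 1) := by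
  intro r hr0 hr13
  obtain ⟨c, hc0, hcb, hcrep⟩ := schwarz_coeffs μ hμ hμmaps hμ0
  have haball : ∀ y : ℂ, ‖y‖ < 1 → HasSum (fun n => a n * y ^ n) (h y) := fun y hy =>
    ha y (by simpa [mem_ball, dist_zero_right] using hy)
  have hP := hasFPS_onBall haball
  set Bb : ℕ → ℂ := fun n => if n = 0 then 0 else b n with hBbdef
  have hbball : ∀ y : ℂ, ‖y‖ < 1 → HasSum (fun n => Bb n * y ^ n) (g y) := by
    intro y hy
    have h1 := hb y (by simpa [mem_ball, dist_zero_right] using hy)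
    have h1' : HasSum (fun n : ℕ => Bb (n + 1) * y ^ (n + 1)) (g y) := by
      refine h1.congr_fun fun n => ?_
      simp [hBbdef]
    have := (hasSum_nat_add_iff (f := fun n => Bb n * y ^ n) 1).mp h1'
    simpa [hBbdef] using this
  have hQ := hasFPS_onBall hbball
  -- coefficient bound for a
  obtain ⟨C, hC⟩ : ∃ C : ℝ, ∀ k : ℕ, ‖a k‖ * (1/2 : ℝ) ^ k ≤ C := by
    have hs := (haball (((1:ℝ)/2 : ℝ) : ℂ) (by simp; norm_num)).summable
    have ht := hs.tendsto_atTop_zero.norm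
    obtain ⟨C, hC⟩ := ht.bddAbove_range
    refine ⟨C, fun k => ?_⟩
    have := hC (Set.mem_range_self (f := fun k : ℕ => ‖a k * (((1:ℝ)/2 : ℝ) : ℂ) ^ k‖) k)
    simpa [norm_mul, norm_pow] using this
  have hC0 : 0 ≤ C := le_trans (by positivity) (hC 0)
  have hak : ∀ k : ℕ, ‖a k‖ ≤ C * 2 ^ k := by
    intro k
    have := hC k
    have h2 : (0:ℝ) < (1/2:ℝ) ^ k := by positivity
    calc ‖a k‖ = ‖a k‖ * (1/2:ℝ)^k * 2^k := by
          rw [mul_assoc]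
          norm_num [← mul_pow]
      _ ≤ C * 2 ^ k := by
          have : (0:ℝ) ≤ (2:ℝ)^k := by positivity
          exact mul_le_mul_of_nonneg_right (hC k) this
  set A' : ℕ → ℂ := fun k => ((k : ℂ) + 1) * a (k + 1) with hA'def
  set conv : ℕ → ℂ := fun n => ∑ kl ∈ antidiagonal n, c kl.1 * A' kl.2 with hconvdef
  -- Cauchy product representation of deriv g near 0
  have hgconv : ∀ y : ℂ, ‖y‖ < 1/4 → HasSum (fun n => conv n * y ^ n) (deriv g y) := by
    intro y hy
    have hy1 : ‖y‖ < 1 := by linarith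
    have Sf : Summable fun m => ‖c m * y ^ m‖ := by
      refine Summable.of_nonneg_of_le (fun m => norm_nonneg _) (fun m => ?_)
        (summable_geometric_of_lt_one (norm_nonneg y) hy1)
      rw [norm_mul, norm_pow]
      calc ‖c m‖ * ‖y‖ ^ m ≤ 1 * ‖y‖ ^ m := mul_le_mul_of_nonneg_right (hcb m) (by positivity)
        _ = ‖y‖ ^ m := one_mul _
    have Sg : Summable fun k => ‖A' k * y ^ k‖ := by
      have hsum : Summable fun k : ℕ => (2*C) * (((k:ℝ) + 1) * (1/2 : ℝ) ^ k) := by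
        apply Summable.mul_left
        have s1 : Summable fun k : ℕ => (k:ℝ) * (1/2:ℝ)^k := by
          have := summable_pow_mul_geometric_of_norm_lt_one (R := ℝ) 1
            (r := (1/2 : ℝ)) (by norm_num)
          simpa using this
        have s2 : Summable fun k : ℕ => (1/2:ℝ)^k := summable_geometric_of_lt_one
          (by norm_num) (by norm_num)
        simpa [add_mul, one_mul] using s1.add s2
      refine Summable.of_nonneg_of_le (fun k => norm_nonneg _) (fun k => ?_) hsum
      have h1 : ‖A' k * y ^ k‖ = ((k:ℝ)+1) * ‖a (k+1)‖ * ‖y‖ ^ k := by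
        rw [norm_mul, norm_pow, norm_mul]
        congr 2
        have : ((k : ℂ) + 1) = ((k + 1 : ℕ) : ℂ) := by push_cast; ring
        rw [this, Complex.norm_natCast]
        push_cast; ring
      rw [h1]
      have h2 : ‖a (k+1)‖ * ‖y‖ ^ k ≤ (C * 2 ^ (k+1)) * (1/4:ℝ) ^ k := by
        apply mul_le_mul (hak (k+1)) (pow_le_pow_left₀ (norm_nonneg y) hy.le k)
          (by positivity) (by positivity)
      calc ((k:ℝ)+1) * ‖a (k+1)‖ * ‖y‖ ^ k = ((k:ℝ)+1) * (‖a (k+1)‖ * ‖y‖ ^ k) := by ring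
        _ ≤ ((k:ℝ)+1) * ((C * 2 ^ (k+1)) * (1/4:ℝ) ^ k) := by
            exact mul_le_mul_of_nonneg_left h2 (by positivity)
        _ = (2*C) * (((k:ℝ) + 1) * (1/2 : ℝ) ^ k) := by
            have h4 : (2:ℝ) ^ (k+1) * (1/4:ℝ)^k = 2 * (1/2:ℝ)^k := by
              rw [pow_succ, mul_comm ((2:ℝ)^k) 2, mul_assoc, ← mul_pow]
              norm_num
            calc ((k:ℝ)+1) * ((C * 2 ^ (k+1)) * (1/4:ℝ) ^ k)
                = ((k:ℝ)+1) * (C * ((2:ℝ)^(k+1) * (1/4:ℝ)^k)) := by ring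
              _ = ((k:ℝ)+1) * (C * (2 * (1/2:ℝ)^k)) := by rw [h4]
              _ = (2*C) * (((k:ℝ) + 1) * (1/2 : ℝ) ^ k) := by ring
    have hμsum := hcrep y (by linarith)
    have hhsum := hasSum_deriv_of_fps hP hy1
    have hprod := tsum_mul_tsum_eq_tsum_sum_antidiagonal_of_summable_norm Sf Sg
    rw [hμsum.tsum_eq, hhsum.tsum_eq] at hprod
    have hsumm : Summable fun n => ∑ kl ∈ antidiagonal n, (c kl.1 * y ^ kl.1) * (A' kl.2 * y ^ kl.2) :=
      (summable_norm_sum_mul_antidiagonal_of_summable_norm Sf Sg).of_norm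
    have hinner : ∀ n : ℕ, (∑ kl ∈ antidiagonal n, (c kl.1 * y ^ kl.1) * (A' kl.2 * y ^ kl.2))
        = conv n * y ^ n := by
      intro n
      rw [hconvdef]
      rw [sum_mul]
      refine Finset.sum_congr rfl fun kl hkl => ?_
      have hn : kl.1 + kl.2 = n := Finset.HasAntidiagonal.mem_antidiagonal.mp hkl
      rw [← hn, pow_add]
      ring
    have hhs : HasSum (fun n => ∑ kl ∈ antidiagonal n, (c kl.1 * y ^ kl.1) * (A' kl.2 * y ^ kl.2))
        (μ y * deriv h y) := by
      have := hsumm.hasSum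
      rwa [← hprod] at this
    have hhs2 : HasSum (fun n => conv n * y ^ n) (μ y * deriv h y) :=
      hhs.congr_fun fun n => (hinner n).symm
    have hymem : y ∈ ball (0:ℂ) 1 := by simpa [mem_ball, dist_zero_right] using hy1
    rwa [← hdil y hymem] at hhs2
  -- deriv g series from Bb
  have hgderiv : ∀ y : ℂ, ‖y‖ < 1/4 →
      HasSum (fun n : ℕ => (((n:ℂ)+1) * b (n+1)) * y ^ n) (deriv g y) := by
    intro y hy
    have := hasSum_deriv_of_fps hQ (by linarith : ‖y‖ < 1)
    refine this.congr_fun fun n => ?_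
    simp [hBbdef]
  -- coefficient identity
  have hcoeff : (fun n : ℕ => ((n:ℂ)+1) * b (n+1)) = conv :=
    coeff_unique (by norm_num : (0:ℝ) < 1/4) hgderiv hgconv
  -- real coefficient bound
  have hbb : ∀ n : ℕ, ((n:ℝ)+1) * ‖b (n+1)‖ ≤ ∑ k ∈ range n, (((k:ℝ)+1) * ‖a (k+1)‖) := by
    intro n
    have h1 : ((n:ℝ)+1) * ‖b (n+1)‖ = ‖((n:ℂ)+1) * b (n+1)‖ := by
      rw [norm_mul]
      congr 1
      have : ((n : ℂ) + 1) = ((n + 1 : ℕ) : ℂ) := by push_cast; ring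
      rw [this, Complex.norm_natCast]
      push_cast; ring
    have h2 : ((n:ℂ)+1) * b (n+1) = conv n := congrFun hcoeff n
    rw [h1, h2]
    calc ‖conv n‖ ≤ ∑ kl ∈ antidiagonal n, ‖c kl.1 * A' kl.2‖ := norm_sum_le _ _
      _ = ∑ k ∈ range (n+1), ‖c k * A' (n - k)‖ := by
          rw [Finset.Nat.sum_antidiagonal_eq_sum_range_succ_mk]
      _ = (∑ i ∈ range n, ‖c (i+1) * A' (n - (i+1))‖) + ‖c 0 * A' (n - 0)‖ :=
          Finset.sum_range_succ' _ n
      _ = ∑ i ∈ range n, ‖c (i+1) * A' (n - (i+1))‖ := by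
          rw [hc0]; simp
      _ ≤ ∑ i ∈ range n, ‖A' (n - (i+1))‖ := by
          refine Finset.sum_le_sum fun i _ => ?_
          rw [norm_mul]
          calc ‖c (i+1)‖ * ‖A' (n - (i+1))‖ ≤ 1 * ‖A' (n - (i+1))‖ :=
                mul_le_mul_of_nonneg_right (hcb (i+1)) (norm_nonneg _)
            _ = ‖A' (n - (i+1))‖ := one_mul _
      _ = ∑ i ∈ range n, ‖A' (n - 1 - i)‖ := by
          refine Finset.sum_congr rfl fun i hi => ?_
          have : n - (i+1) = n - 1 - i := by omega
          rw [this]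
      _ = ∑ k ∈ range n, ‖A' k‖ := Finset.sum_range_reflect (fun k => ‖A' k‖) n
      _ = ∑ k ∈ range n, (((k:ℝ)+1) * ‖a (k+1)‖) := by
          refine Finset.sum_congr rfl fun k _ => ?_
          rw [hA'def]
          simp only [norm_mul]
          congr 1
          have : ((k : ℂ) + 1) = ((k + 1 : ℕ) : ℂ) := by push_cast; ring
          rw [this, Complex.norm_natCast]
          push_cast; ring
  -- summability of the RHS
  have SA : Summable fun k : ℕ => ‖a (k+1)‖ * r ^ (k+1) := by
    have hgeo : Summable fun k : ℕ => (C * (2*r)) * (2*r) ^ k := by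
      apply Summable.mul_left
      exact summable_geometric_of_lt_one (by linarith) (by linarith)
    refine Summable.of_nonneg_of_le (fun k => by positivity) (fun k => ?_) hgeo
    calc ‖a (k+1)‖ * r ^ (k+1) ≤ (C * 2 ^ (k+1)) * r ^ (k+1) :=
          mul_le_mul_of_nonneg_right (hak (k+1)) (by positivity)
      _ = (C * (2*r)) * (2*r) ^ k := by rw [mul_pow]; ring
  -- geometric tail bound
  have hgeom : ∀ k N : ℕ, (∑ n ∈ Finset.Ico (k+1) N, r ^ (n+1)) ≤ r ^ (k+1) := by
    intro k N
    have h1r : (0:ℝ) < 1 - r := by linarith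
    calc (∑ n ∈ Finset.Ico (k+1) N, r ^ (n+1))
        = ∑ j ∈ range (N - (k+1)), r ^ (k+1+j+1) := by
          rw [Finset.sum_Ico_eq_sum_range]
      _ = r ^ (k+2) * ∑ j ∈ range (N - (k+1)), r ^ j := by
          rw [mul_sum]
          refine Finset.sum_congr rfl fun j _ => ?_
          rw [← pow_add]
          congr 1
          omega
      _ ≤ r ^ (k+2) * (1 - r)⁻¹ := by
          refine mul_le_mul_of_nonneg_left ?_ (by positivity)
          refine (Summable.sum_le_tsum (range (N - (k+1))) (fun j _ => by positivity)
            (summable_geometric_of_lt_one hr0 (by linarith))).trans ?_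
          rw [tsum_geometric_of_lt_one hr0 (by linarith)]
      _ ≤ r ^ (k+1) := by
          have hfrac : r * (1-r)⁻¹ ≤ 1 := by
            rw [← div_eq_mul_inv, div_le_one h1r]
            linarith
          calc r ^ (k+2) * (1-r)⁻¹ = r ^ (k+1) * (r * (1-r)⁻¹) := by ring
            _ ≤ r ^ (k+1) * 1 := mul_le_mul_of_nonneg_left hfrac (by positivity)
            _ = r ^ (k+1) := mul_one _
  -- final estimate
  apply Real.tsum_le_of_sum_range_le (fun n => by positivity)
  intro N
  have step1 : (∑ n ∈ range N, ‖b (n+1)‖ * r ^ (n+1))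
      ≤ ∑ n ∈ range N, ∑ k ∈ range n, (((k:ℝ)+1) * ‖a (k+1)‖) * (r ^ (n+1) / ((n:ℝ)+1)) := by
    refine Finset.sum_le_sum fun n _ => ?_
    rw [← Finset.sum_mul]
    have hn1 : (0:ℝ) < (n:ℝ)+1 := by positivity
    have hbn := hbb n
    calc ‖b (n+1)‖ * r ^ (n+1)
        = (((n:ℝ)+1) * ‖b (n+1)‖) * (r ^ (n+1) / ((n:ℝ)+1)) := by
          field_simp
      _ ≤ (∑ k ∈ range n, (((k:ℝ)+1) * ‖a (k+1)‖)) * (r ^ (n+1) / ((n:ℝ)+1)) := by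
          exact mul_le_mul_of_nonneg_right hbn (by positivity)
  have step2 : (∑ n ∈ range N, ∑ k ∈ range n, (((k:ℝ)+1) * ‖a (k+1)‖) * (r ^ (n+1) / ((n:ℝ)+1)))
      = ∑ k ∈ range N, ∑ n ∈ Finset.Ico (k+1) N, (((k:ℝ)+1) * ‖a (k+1)‖) * (r ^ (n+1) / ((n:ℝ)+1)) := by
    simp only [Finset.range_eq_Ico]
    rw [← Finset.sum_Ico_Ico_comm' 0 N (fun k n => (((k:ℝ)+1) * ‖a (k+1)‖) * (r ^ (n+1) / ((n:ℝ)+1)))]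
  have step3 : (∑ k ∈ range N, ∑ n ∈ Finset.Ico (k+1) N, (((k:ℝ)+1) * ‖a (k+1)‖) * (r ^ (n+1) / ((n:ℝ)+1)))
      ≤ ∑ k ∈ range N, ‖a (k+1)‖ * r ^ (k+1) := by
    refine Finset.sum_le_sum fun k _ => ?_
    calc (∑ n ∈ Finset.Ico (k+1) N, (((k:ℝ)+1) * ‖a (k+1)‖) * (r ^ (n+1) / ((n:ℝ)+1)))
        ≤ ∑ n ∈ Finset.Ico (k+1) N, ‖a (k+1)‖ * r ^ (n+1) := by
          refine Finset.sum_le_sum fun n hn => ?_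
          have hkn : k + 1 ≤ n := (Finset.mem_Ico.mp hn).1
          have hn1 : (0:ℝ) < (n:ℝ)+1 := by positivity
          have hfrac : ((k:ℝ)+1) / ((n:ℝ)+1) ≤ 1 := by
            rw [div_le_one hn1]
            have hk : k ≤ n := Nat.le_of_succ_le hkn
            have : (k:ℝ) ≤ (n:ℝ) := by exact_mod_cast hk
            linarith
          calc (((k:ℝ)+1) * ‖a (k+1)‖) * (r ^ (n+1) / ((n:ℝ)+1))
              = (((k:ℝ)+1) / ((n:ℝ)+1)) * (‖a (k+1)‖ * r ^ (n+1)) := by ring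
            _ ≤ 1 * (‖a (k+1)‖ * r ^ (n+1)) :=
                mul_le_mul_of_nonneg_right hfrac (by positivity)
            _ = ‖a (k+1)‖ * r ^ (n+1) := one_mul _
      _ = ‖a (k+1)‖ * ∑ n ∈ Finset.Ico (k+1) N, r ^ (n+1) := by rw [Finset.mul_sum]
      _ ≤ ‖a (k+1)‖ * r ^ (k+1) :=
          mul_le_mul_of_nonneg_left (hgeom k N) (norm_nonneg _)
  calc (∑ n ∈ range N, ‖b (n+1)‖ * r ^ (n+1))
      ≤ ∑ k ∈ range N, ‖a (k+1)‖ * r ^ (k+1) := by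
        refine step1.trans ?_
        rw [step2]
        exact step3
    _ ≤ ∑' k : ℕ, ‖a (k+1)‖ * r ^ (k+1) :=
        Summable.sum_le_tsum (range N) (fun k _ => by positivity) SA
end
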